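/- arXiv:2402.06757 — 7 statements merged into one kernel-verified Lean document; each statement's English description precedes it below -/
import Mathlib

section
/- Let ν̄ be any set of 2n ordered pairs (i,j) with 1 ≤ i,j ≤ n. Then for every i ∈ {1,…,n} the following identities hold in Λ: the sum over all k with (i,k) ∈ ν̄ of ω_{ik} ∧ ω_{ν̄∖{(i,k)}} equals 0, and the sum over all k with (k,i) ∈ ν̄ of ω_{ki} ∧ ω_{ν̄∖{(k,i)}} equals 0; here each ν̄∖{(i,k)} (resp. ν̄∖{(k,i)}) is a type of rank n and ω_{ν̄∖{(i,k)}} ∈ Λ is its associated (2n−1)-form. -/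
open scoped Classical

set_option maxHeartbeats 1000000
set_option synthInstance.maxHeartbeats 400000

noncomputable section

/-- The polynomial ring `ℚ[b_{ij}]` in `n²` variables. -/
abbrev R0 (n : ℕ) : Type := MvPolynomial (Fin n × Fin n) ℚ

/-- The free `R0 n`-module on basis `{e_{ij}}`. -/
abbrev Vn (n : ℕ) : Type := (Fin n × Fin n) → R0 n

/-- The exterior algebra `Λ`. -/
abbrev Lam (n : ℕ) : Type := ExteriorAlgebra (R0 n) (Vn n)

/-- The degree-one generator `ω_{ij} = ι(e_{ij})`. -/
def om (n : ℕ) (p : Fin n × Fin n) : Lam n :=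
  ExteriorAlgebra.ι (R0 n) (Pi.single p (1 : R0 n))

/-- The generic matrix `B = (b_{ij})`. -/
def Bgen (n : ℕ) : Matrix (Fin n) (Fin n) (R0 n) :=
  Matrix.of fun i j => MvPolynomial.X (i, j)

/-- The matrix `Ω_ν`: entry `ω_{ij}` if `(i,j) ∈ ν`, and `0` otherwise. -/
def OmegaNu (n : ℕ) (ν : Finset (Fin n × Fin n)) : Matrix (Fin n) (Fin n) (Lam n) :=
  Matrix.of fun i j => if (i, j) ∈ ν then om n (i, j) else 0

/-- The weight vector `p(ν)_i = #{j : (i,j) ∈ ν}`. -/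
def pw (n : ℕ) (ν : Finset (Fin n × Fin n)) (i : Fin n) : ℕ :=
  (ν.filter fun x => x.1 = i).card

/-- The weight vector `q(ν)_j = #{i : (i,j) ∈ ν}`. -/
def qw (n : ℕ) (ν : Finset (Fin n × Fin n)) (j : Fin n) : ℕ :=
  (ν.filter fun x => x.2 = j).card

/-- An enumeration of the elements of `ν`. -/
def enumNu (n : ℕ) (ν : Finset (Fin n × Fin n)) (k : Fin ν.card) : Fin n × Fin n :=
  (ν.equivFin.symm k : {x // x ∈ ν})

/-- The incidence matrix `M_ν` (rows indexed by the elements of `ν`, columns by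
`{1,…,n} ⊔ {1,…,n}`): the row of `(i,j)` has a `-1` in column `i` and `+1` in column `n+j`. -/
def Mnu (n : ℕ) (ν : Finset (Fin n × Fin n)) :
    Matrix (Fin ν.card) (Fin (ν.card + 1)) ℤ :=
  Matrix.of fun k c =>
    (if (c : ℕ) = ((enumNu n ν k).1 : ℕ) then -1 else 0) +
      (if (c : ℕ) = n + ((enumNu n ν k).2 : ℕ) then 1 else 0)

/-- `η_ν`: the ordered wedge product of the `ω_{ij}`, `(i,j) ∈ ν`. -/
def etaNu (n : ℕ) (ν : Finset (Fin n × Fin n)) : Lam n :=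
  (List.ofFn fun k : Fin ν.card => om n (enumNu n ν k)).prod

/-- The form `ω_ν = (-1)^(binom n 2 + c - 1) · det(M_ν^{∅,c}) · η_ν` (computed with `c = 1`,
on which it does not depend). -/
def omegaNu (n : ℕ) (ν : Finset (Fin n × Fin n)) : Lam n :=
  ((-1 : ℤ) ^ n.choose 2 * ((Mnu n ν).submatrix id (Fin.succAbove 0)).det) • etaNu n ν

/-- The permanent of a square matrix. -/
def permanent {m : ℕ} {R : Type*} [CommRing R] (A : Matrix (Fin m) (Fin m) R) : R :=
  ∑ σ : Equiv.Perm (Fin m), ∏ a, A a (σ a)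

/-- The weakly increasing list in which the value `i` appears exactly `p i` times. -/
def repList {n : ℕ} (p : Fin n → ℕ) : List (Fin n) :=
  (List.finRange n).flatMap fun i => List.replicate (p i) i

/-- `P_{p,q}(B)` for natural weight vectors: the permanent of the square matrix with
`(a,b)` entry `B (r a) (c b)`, where `r`, `c` are the weakly increasing functions with
multiplicities `p`, `q`. -/
def PpermNat {n : ℕ} {R : Type*} [CommRing R] (B : Matrix (Fin n) (Fin n) R)
    (p q : Fin n → ℕ) : R :=
  if h : (repList p).length = (repList q).length then
    permanent (Matrix.of fun a b : Fin (repList p).length =>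
      B ((repList p).get a) ((repList q).get (Fin.cast h b)))
  else 0

/-- `P_{p,q}(B)` for integer weight vectors; it vanishes if some entry is negative. -/
def Pperm {n : ℕ} {R : Type*} [CommRing R] (B : Matrix (Fin n) (Fin n) R)
    (p q : Fin n → ℤ) : R :=
  if (∀ i, 0 ≤ p i) ∧ (∀ j, 0 ≤ q j) then
    PpermNat B (fun i => (p i).toNat) (fun j => (q j).toNat)
  else 0


section Aux
open Matrix


/-- entry function -/
def Ent (n : ℕ) (p : Fin n × Fin n) (c : ℕ) : ℤ :=
  (if c = (p.1 : ℕ) then -1 else 0) + (if c = n + (p.2 : ℕ) then 1 else 0)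

lemma det_eq_zero_of_rowsum_zero {m : ℕ} {R : Type*} [CommRing R]
    (A : Matrix (Fin (m+1)) (Fin (m+1)) R)
    (h : ∀ r, ∑ c, A r c = 0) : A.det = 0 := by
  have h1 := Matrix.det_updateCol_sum A 0 (fun _ => (1 : R))
  simp only [one_smul] at h1
  rw [← h1]
  apply Matrix.det_eq_zero_of_column_eq_zero 0
  intro r
  rw [Matrix.updateCol_apply, if_pos rfl]
  exact h r

lemma det_skip_col {m : ℕ} {R : Type*} [CommRing R] (M : Matrix (Fin m) (Fin (m+1)) R)
    (h : ∀ r, ∑ c, M r c = 0) (c : Fin (m+1)) :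
    (M.submatrix id (Fin.succAbove c)).det
      = (-1) ^ (c : ℕ) * (M.submatrix id (Fin.succAbove 0)).det := by
  set A : Matrix (Fin (m+1)) (Fin (m+1)) R :=
    Matrix.of (fun r c' => Fin.cases (motive := fun _ => R) (if c' = c then 1 else 0)
      (fun j => M j c') r) with hA
  have hA0 : ∀ c', A 0 c' = if c' = c then 1 else 0 := fun c' => rfl
  have hAs : ∀ r c', A (Fin.succ r) c' = M r c' := fun r c' => by
    simp [hA]
  have hsubA : ∀ j : Fin (m+1), A.submatrix Fin.succ (Fin.succAbove j)
      = M.submatrix id (Fin.succAbove j) := by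
    intro j; ext a b
    rw [Matrix.submatrix_apply, Matrix.submatrix_apply, hAs, id]
  -- (a) det A = (-1)^c * det (skip c)
  have ha : A.det = (-1) ^ (c : ℕ) * (M.submatrix id (Fin.succAbove c)).det := by
    rw [Matrix.det_succ_row_zero, Finset.sum_eq_single c]
    · rw [hA0, if_pos rfl, mul_one, hsubA]
    · intro b _ hb
      rw [hA0, if_neg hb]
      ring
    · intro hc; exact absurd (Finset.mem_univ c) hc
  -- (b) det A = det (skip 0)
  have hb : A.det = (M.submatrix id (Fin.succAbove 0)).det := by
    have h1 := Matrix.det_updateCol_sum A 0 (fun _ => (1 : R))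
    simp only [one_smul] at h1
    rw [← h1, Matrix.det_succ_column_zero, Finset.sum_eq_single 0]
    · rw [Matrix.updateCol_apply, if_pos rfl]
      have hcol : ∑ i, A 0 i = 1 := by
        simp only [hA0]
        rw [Finset.sum_ite_eq' Finset.univ c (fun _ => (1:R))]
        simp
      rw [hcol]
      have hsub2 : (A.updateCol 0 fun k => ∑ i, A k i).submatrix Fin.succ Fin.succ
          = M.submatrix id (Fin.succAbove 0) := by
        ext a b
        rw [Matrix.submatrix_apply, Matrix.submatrix_apply, Fin.succAbove_zero,
          Matrix.updateCol_apply, if_neg (Fin.succ_ne_zero b), hAs, id]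
      have hsucc0 : (0 : Fin (m+1)).succAbove = Fin.succ := Fin.succAbove_zero
      rw [hsucc0, hsub2]
      simp
    · intro r _ hr
      obtain ⟨r', rfl⟩ := Fin.eq_succ_of_ne_zero hr
      rw [Matrix.updateCol_apply, if_pos rfl]
      have h2 : ∑ i, A r'.succ i = 0 := by
        calc ∑ i, A r'.succ i = ∑ i, M r' i := by simp only [hAs]
        _ = 0 := h r'
      rw [h2]
      ring
    · intro hc; exact absurd (Finset.mem_univ 0) hc
  have hsq : ((-1 : R) ^ (c : ℕ)) * ((-1) ^ (c : ℕ)) = 1 := by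
    rw [← pow_add]
    exact Even.neg_one_pow ⟨(c : ℕ), rfl⟩
  calc (M.submatrix id (Fin.succAbove c)).det
      = (((-1 : R) ^ (c : ℕ)) * ((-1) ^ (c : ℕ))) * (M.submatrix id (Fin.succAbove c)).det := by
        rw [hsq, one_mul]
    _ = (-1) ^ (c : ℕ) * A.det := by rw [ha]; ring
    _ = (-1) ^ (c : ℕ) * (M.submatrix id (Fin.succAbove 0)).det := by rw [hb]

lemma det_submatrix_perm_succ {m : ℕ} (B : Matrix (Fin (m+1)) (Fin m) ℤ)
    (σ : Equiv.Perm (Fin (m+1))) :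
    (B.submatrix (fun a : Fin m => σ a.succ) id).det
      = (Equiv.Perm.sign σ : ℤ) * (-1) ^ ((σ 0 : Fin (m+1)) : ℕ)
          * (B.submatrix (Fin.succAbove (σ 0)) id).det := by
  set ρ : Equiv.Perm (Fin (m+1)) := (Fin.cycleRange (σ 0)) * σ with hρ
  have hρ0 : ρ 0 = 0 := by
    simp [hρ, Equiv.Perm.mul_apply]
  set τ := (Equiv.Perm.decomposeFin ρ).2 with hτ
  have hdec : Equiv.Perm.decomposeFin.symm ((Equiv.Perm.decomposeFin ρ).1, τ) = ρ := by
    rw [hτ, Prod.mk.eta, Equiv.symm_apply_apply]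
  have hp : (Equiv.Perm.decomposeFin ρ).1 = 0 := by
    have h1 := Equiv.Perm.decomposeFin_symm_apply_zero (Equiv.Perm.decomposeFin ρ).1 τ
    rw [hdec] at h1
    rw [← h1, hρ0]
  have hsucc : ∀ x : Fin m, ρ x.succ = (τ x).succ := by
    intro x
    have h1 := Equiv.Perm.decomposeFin_symm_apply_succ τ (Equiv.Perm.decomposeFin ρ).1 x
    rw [hdec] at h1
    rw [h1, hp]
    simp
  have hσsucc : ∀ x : Fin m, σ x.succ = (σ 0).succAbove (τ x) := by
    intro x
    have h1 : (σ 0).cycleRange (σ x.succ) = (τ x).succ := by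
      have h2 := hsucc x
      simpa [hρ, Equiv.Perm.mul_apply] using h2
    have h2 := Fin.cycleRange_succAbove (σ 0) (τ x)
    exact ((σ 0).cycleRange).injective (h1.trans h2.symm)
  have hsign : (Equiv.Perm.sign τ : ℤ) = (-1) ^ ((σ 0 : Fin (m+1)) : ℕ) * (Equiv.Perm.sign σ : ℤ) := by
    have h1 : Equiv.Perm.sign ρ = Equiv.Perm.sign τ := by
      conv_lhs => rw [← hdec]
      rw [Equiv.Perm.decomposeFin.symm_sign, hp, if_pos rfl, one_mul]
    have h2 : Equiv.Perm.sign ρ = Equiv.Perm.sign (Fin.cycleRange (σ 0)) * Equiv.Perm.sign σ := by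
      rw [hρ, Equiv.Perm.sign_mul]
    rw [← h1, h2, Fin.sign_cycleRange]
    push_cast
    ring
  have hmat : B.submatrix (fun a : Fin m => σ a.succ) id
      = (B.submatrix (Fin.succAbove (σ 0)) id).submatrix τ id := by
    ext a b
    simp [Matrix.submatrix_apply, hσsucc]
  rw [hmat, Matrix.det_permute τ, hsign]
  push_cast
  ring

lemma laplace_rowsum_zero {m : ℕ} (A : Matrix (Fin (m+1)) (Fin (m+1)) ℤ)
    (h : ∀ r, ∑ c, A r c = 0) (j : Fin (m+1)) :
    ∑ r : Fin (m+1), (-1) ^ (r : ℕ) * A r j * (A.submatrix r.succAbove j.succAbove).det = 0 := by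
  have h0 : A.det = 0 := det_eq_zero_of_rowsum_zero A h
  have h1 := Matrix.det_succ_column A j
  rw [h0] at h1
  have h2 : (0 : ℤ) = (-1) ^ (j : ℕ)
      * ∑ r : Fin (m+1), (-1) ^ (r : ℕ) * A r j * (A.submatrix r.succAbove j.succAbove).det := by
    rw [Finset.mul_sum]
    rw [h1]
    apply Finset.sum_congr rfl
    intro r _
    rw [pow_add]
    ring
  have h3 := h2.symm
  rcases mul_eq_zero.mp h3 with h4 | h4
  · exact absurd h4 (pow_ne_zero _ (by norm_num))
  · exact h4


lemma enumNu_mem (n : ℕ) (ν : Finset (Fin n × Fin n)) (k : Fin ν.card) :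
    enumNu n ν k ∈ ν := (ν.equivFin.symm k).2

lemma enumNu_inj {n : ℕ} {ν : Finset (Fin n × Fin n)} :
    Function.Injective (enumNu n ν) := fun a b hab =>
  ν.equivFin.symm.injective (Subtype.ext hab)

lemma enumNu_equivFin (n : ℕ) (ν : Finset (Fin n × Fin n)) (x : {x // x ∈ ν}) :
    enumNu n ν (ν.equivFin x) = x.val := by
  simp [enumNu]

lemma iotaMulti_cast {a b : ℕ} (n : ℕ) (e : a = b) (w : Fin b → Vn n) :
    ExteriorAlgebra.ιMulti (R0 n) a (w ∘ Fin.cast e) = ExteriorAlgebra.ιMulti (R0 n) b w := by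
  subst e; rfl

lemma etaNu_eq {n d : ℕ} (ν : Finset (Fin n × Fin n)) (e : ν.card = d) :
    etaNu n ν = ExteriorAlgebra.ιMulti (R0 n) d
      (fun a => Pi.single (enumNu n ν (Fin.cast e.symm a)) (1 : R0 n)) := by
  rw [etaNu]
  have h1 : (List.ofFn fun k : Fin ν.card => om n (enumNu n ν k)).prod
      = ExteriorAlgebra.ιMulti (R0 n) ν.card
          (fun k => Pi.single (enumNu n ν k) (1 : R0 n)) :=
    (ExteriorAlgebra.ιMulti_apply _).symm
  rw [h1, ← iotaMulti_cast n e.symm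
    (fun k : Fin ν.card => Pi.single (enumNu n ν k) (1 : R0 n))]
  rfl

lemma mnu_eq_ent {n : ℕ} (ν : Finset (Fin n × Fin n)) (k : Fin ν.card) (c : Fin (ν.card + 1)) :
    Mnu n ν k c = Ent n (enumNu n ν k) (c : ℕ) := rfl

lemma mnu_det_eq {n d : ℕ} (ν : Finset (Fin n × Fin n)) (e : ν.card = d) :
    ((Mnu n ν).submatrix id (Fin.succAbove 0)).det
      = (Matrix.of fun a b : Fin d =>
          Ent n (enumNu n ν (Fin.cast e.symm a)) ((b : ℕ) + 1)).det := by
  rw [← Matrix.det_submatrix_equiv_self (finCongr e.symm)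
    ((Mnu n ν).submatrix id (Fin.succAbove 0))]
  congr 1


lemma master {n m' : ℕ} (hm2 : m' + 1 = 2 * n) (νb : Finset (Fin n × Fin n))
    (hm : νb.card = m' + 1) (P : Fin n → Fin n × Fin n) (hP : Function.Injective P)
    (j' : Fin (m' + 1)) (ε : ℤ) (hε : ε ≠ 0)
    (hj : ∀ p : Fin n × Fin n, Ent n p (j' : ℕ) = if (∃ k, P k = p) then ε else 0) :
    (∑ k ∈ Finset.univ.filter (fun k : Fin n => P k ∈ νb),
        om n (P k) * omegaNu n (νb.erase (P k))) = 0 := by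
  classical
  -- enumeration of νb over Fin (m'+1)
  set fb : Fin (m' + 1) → Fin n × Fin n :=
    fun r => enumNu n νb (Fin.cast hm.symm r) with hfb
  have hfb_mem : ∀ r, fb r ∈ νb := fun r => enumNu_mem n νb _
  have hfb_inj : Function.Injective fb := fun a b hab => by
    have h1 := enumNu_inj hab
    have h2 := congrArg Fin.val h1
    exact Fin.ext h2
  have hfb_inv : ∀ (x : {x // x ∈ νb}), fb (Fin.cast hm (νb.equivFin x)) = x.val := by
    intro x
    show enumNu n νb (Fin.cast hm.symm (Fin.cast hm (νb.equivFin x))) = x.val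
    have h1 : Fin.cast hm.symm (Fin.cast hm (νb.equivFin x)) = νb.equivFin x := rfl
    rw [h1, enumNu_equivFin]
  -- row-sum facts
  have hrowsum : ∀ p : Fin n × Fin n, ∑ c : Fin (m' + 1), Ent n p (c : ℕ) = 0 := by
    intro p
    have hgen : ∀ (t : ℕ), t < m' + 1 → ∀ z : ℤ,
        (∑ c : Fin (m' + 1), if (c : ℕ) = t then z else 0) = z := by
      intro t ht z
      have h1 : ∀ c : Fin (m' + 1), (if (c : ℕ) = t then z else 0)
          = (if c = (⟨t, ht⟩ : Fin (m' + 1)) then z else 0) := by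
        intro c
        congr 1
        simp [Fin.ext_iff]
      rw [Finset.sum_congr rfl (fun c _ => h1 c),
        Finset.sum_ite_eq' Finset.univ (⟨t, ht⟩ : Fin (m' + 1)) (fun _ => z)]
      simp
    have hb1 : ((p.1 : ℕ)) < m' + 1 := by have := p.1.isLt; omega
    have hb2 : (n + (p.2 : ℕ)) < m' + 1 := by have := p.2.isLt; omega
    simp only [Ent]
    rw [Finset.sum_add_distrib, hgen _ hb1 (-1), hgen _ hb2 1]
    ring
  -- the big matrix
  set N : Matrix (Fin (m' + 1)) (Fin (m' + 1)) ℤ :=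
    Matrix.of (fun r c => Ent n (fb r) (c : ℕ)) with hN
  have hNrow : ∀ r, ∑ c, N r c = 0 := fun r => hrowsum (fb r)
  set Mi : Fin (m' + 1) → ℤ :=
    fun r => (N.submatrix r.succAbove j'.succAbove).det with hMi
  set η : Lam n := etaNu n νb with hη
  have hηval : η = ExteriorAlgebra.ιMulti (R0 n) (m' + 1)
      (fun r => Pi.single (fb r) (1 : R0 n)) := etaNu_eq νb hm
  -- the canonical row of P k
  set rfun : Fin n → Fin (m' + 1) := fun k =>
    if hk : P k ∈ νb then Fin.cast hm (νb.equivFin ⟨P k, hk⟩) else 0 with hrfun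
  -- KEY: value of each term
  have key : ∀ k : Fin n, P k ∈ νb →
      om n (P k) * omegaNu n (νb.erase (P k))
        = ((((-1 : ℤ) ^ n.choose 2 * (-1) ^ (j' : ℕ)))
            * ((-1) ^ ((rfun k : Fin (m' + 1)) : ℕ) * Mi (rfun k))) • η := by
    intro k hk
    set ν' := νb.erase (P k) with hν'
    have hcard : ν'.card = m' := by
      rw [hν', Finset.card_erase_of_mem hk, hm]
      omega
    set g : Fin m' → Fin n × Fin n := fun a => enumNu n ν' (Fin.cast hcard.symm a) with hg
    have hg_mem : ∀ a, g a ∈ ν' := fun a => enumNu_mem n ν' _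
    have hg_inj : Function.Injective g := fun a b hab => by
      have h1 := enumNu_inj hab
      have h2 := congrArg Fin.val h1
      exact Fin.ext h2
    set h : Fin (m' + 1) → Fin n × Fin n := Fin.cons (P k) g with hh
    have hmem : ∀ r, h r ∈ νb := by
      intro r
      rcases Fin.eq_zero_or_eq_succ r with rfl | ⟨r', rfl⟩
      · rw [hh, Fin.cons_zero]; exact hk
      · rw [hh, Fin.cons_succ]; exact Finset.mem_of_mem_erase (hg_mem r')
    have hinj : Function.Injective h := by
      intro a b hab
      rcases Fin.eq_zero_or_eq_succ a with rfl | ⟨a', rfl⟩ <;>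
        rcases Fin.eq_zero_or_eq_succ b with rfl | ⟨b', rfl⟩
      · rfl
      · rw [hh, Fin.cons_zero, Fin.cons_succ] at hab
        have h1 : P k ∈ ν' := by rw [hab]; exact hg_mem b'
        exact absurd h1 (Finset.notMem_erase (P k) νb)
      · rw [hh, Fin.cons_succ, Fin.cons_zero] at hab
        have h1 : P k ∈ ν' := by rw [← hab]; exact hg_mem a'
        exact absurd h1 (Finset.notMem_erase (P k) νb)
      · rw [hh, Fin.cons_succ, Fin.cons_succ] at hab
        rw [hg_inj hab]
    set s : Fin (m' + 1) → Fin (m' + 1) :=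
      fun r => Fin.cast hm (νb.equivFin ⟨h r, hmem r⟩) with hs
    have hsinj : Function.Injective s := by
      intro a b hab
      have h2 := congrArg Fin.val hab
      have h3 : νb.equivFin ⟨h a, hmem a⟩ = νb.equivFin ⟨h b, hmem b⟩ := Fin.ext h2
      have h1 : (⟨h a, hmem a⟩ : {x // x ∈ νb}) = ⟨h b, hmem b⟩ :=
        νb.equivFin.injective h3
      exact hinj (congrArg Subtype.val h1)
    set σ : Equiv.Perm (Fin (m' + 1)) := Equiv.ofBijective s
      (Finite.injective_iff_bijective.mp hsinj) with hσ
    have hfbσ : ∀ r, fb (σ r) = h r := by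
      intro r
      show fb (s r) = h r
      rw [hs]
      exact hfb_inv ⟨h r, hmem r⟩
    have hσ0 : σ 0 = rfun k := by
      have h1 : rfun k = Fin.cast hm (νb.equivFin ⟨P k, hk⟩) := dif_pos hk
      have h2 : (⟨h 0, hmem 0⟩ : {x // x ∈ νb}) = ⟨P k, hk⟩ :=
        Subtype.ext rfl
      show Fin.cast hm (νb.equivFin ⟨h 0, hmem 0⟩) = rfun k
      rw [h2, h1]
    -- wedge part
    have hwedge : om n (P k) * etaNu n ν' = ((Equiv.Perm.sign σ : ℤˣ) : ℤ) • η := by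
      rw [etaNu_eq ν' hcard]
      have h1 : om n (P k) * ExteriorAlgebra.ιMulti (R0 n) m'
          (fun a => Pi.single (enumNu n ν' (Fin.cast hcard.symm a)) (1 : R0 n))
          = ExteriorAlgebra.ιMulti (R0 n) (m' + 1)
              (fun r => Pi.single (h r) (1 : R0 n)) := by
        have heq := ExteriorAlgebra.ιMulti_succ_apply
          (R := R0 n) (M := Vn n) (fun r : Fin (m' + 1) => Pi.single (h r) (1 : R0 n))
        rw [heq]
        rfl
      rw [h1]
      have h2 : (fun r => Pi.single (h r) (1 : R0 n))
          = (fun r => Pi.single (fb r) (1 : R0 n)) ∘ σ := by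
        funext r
        simp only [Function.comp_apply, hfbσ]
      rw [h2, AlternatingMap.map_perm, hηval, Units.smul_def]
    -- determinant part
    have hD : ((Mnu n ν').submatrix id (Fin.succAbove 0)).det
        = ((N.submatrix id (Fin.succAbove (0 : Fin (m' + 1)))).submatrix
            (fun a : Fin m' => σ a.succ) id).det := by
      rw [mnu_det_eq ν' hcard]
      congr 1
      ext a b
      show Ent n (enumNu n ν' (Fin.cast hcard.symm a)) ((b : ℕ) + 1)
        = N (σ a.succ) ((0 : Fin (m' + 1)).succAbove b)
      rw [hN]
      show Ent n (g a) ((b : ℕ) + 1)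
        = Ent n (fb (σ a.succ)) (((0 : Fin (m' + 1)).succAbove b : Fin (m' + 1)) : ℕ)
      rw [hfbσ]
      show Ent n (g a) ((b : ℕ) + 1)
        = Ent n (g a) (((0 : Fin (m' + 1)).succAbove b : Fin (m' + 1)) : ℕ)
      congr 1
    have h3 := det_submatrix_perm_succ (N.submatrix id (Fin.succAbove (0 : Fin (m' + 1)))) σ
    have h4 := det_skip_col (N.submatrix ((σ 0).succAbove) id)
      (fun r => hNrow ((σ 0).succAbove r)) j'
    have h5 : (N.submatrix ((σ 0).succAbove) id).submatrix id (Fin.succAbove j')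
        = N.submatrix ((σ 0).succAbove) (Fin.succAbove j') := rfl
    have h6 : (N.submatrix ((σ 0).succAbove) id).submatrix id (Fin.succAbove 0)
        = (N.submatrix id (Fin.succAbove (0 : Fin (m' + 1)))).submatrix ((σ 0).succAbove) id := rfl
    have hsq : ((-1 : ℤ) ^ (j' : ℕ)) * ((-1) ^ (j' : ℕ)) = 1 := by
      rw [← pow_add]
      exact Even.neg_one_pow ⟨(j' : ℕ), rfl⟩
    have h8 : Mi (σ 0) = (-1) ^ (j' : ℕ)
        * ((N.submatrix ((σ 0).succAbove) id).submatrix id (Fin.succAbove 0)).det := by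
      show (N.submatrix (σ 0).succAbove j'.succAbove).det = _
      rw [← h5]
      exact h4
    have h9 : ((N.submatrix ((σ 0).succAbove) id).submatrix id (Fin.succAbove 0)).det
        = (-1) ^ (j' : ℕ) * Mi (σ 0) := by
      rw [h8, ← mul_assoc, hsq, one_mul]
    have hDval : ((Mnu n ν').submatrix id (Fin.succAbove 0)).det
        = ((Equiv.Perm.sign σ : ℤˣ) : ℤ) * (-1) ^ ((σ 0 : Fin (m' + 1)) : ℕ)
            * ((-1) ^ (j' : ℕ) * Mi (σ 0)) := by
      rw [hD, h3, ← h6, h9]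
    -- put it together
    have hsgn2 : ((Equiv.Perm.sign σ : ℤˣ) : ℤ) * ((Equiv.Perm.sign σ : ℤˣ) : ℤ) = 1 := by
      rw [← Units.val_mul, Int.units_mul_self, Units.val_one]
    rw [omegaNu, hDval, mul_smul_comm, hwedge, smul_smul, ← hσ0]
    congr 1
    linear_combination ((-1 : ℤ) ^ n.choose 2 * (-1) ^ ((σ 0 : Fin (m' + 1)) : ℕ)
      * ((-1) ^ (j' : ℕ) * Mi (σ 0))) * hsgn2
  -- fb value at rfun k
  have hrfun_fb : ∀ k : Fin n, P k ∈ νb → fb (rfun k) = P k := by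
    intro k hk
    have h1 : rfun k = Fin.cast hm (νb.equivFin ⟨P k, hk⟩) := dif_pos hk
    rw [h1]
    exact hfb_inv ⟨P k, hk⟩
  -- rewrite the sum
  have hsum : (∑ k ∈ Finset.univ.filter (fun k : Fin n => P k ∈ νb),
      om n (P k) * omegaNu n (νb.erase (P k)))
      = (∑ k ∈ Finset.univ.filter (fun k : Fin n => P k ∈ νb),
          (((-1 : ℤ) ^ n.choose 2 * (-1) ^ (j' : ℕ))
            * ((-1) ^ ((rfun k : Fin (m' + 1)) : ℕ) * Mi (rfun k)))) • η := by
    rw [Finset.sum_smul]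
    apply Finset.sum_congr rfl
    intro k hk
    exact key k (Finset.mem_filter.mp hk).2
  rw [hsum]
  -- the inner integer sum vanishes
  have hS : (∑ k ∈ Finset.univ.filter (fun k : Fin n => P k ∈ νb),
      ((-1 : ℤ) ^ ((rfun k : Fin (m' + 1)) : ℕ) * Mi (rfun k))) = 0 := by
    have hbij : (∑ k ∈ Finset.univ.filter (fun k : Fin n => P k ∈ νb),
        ((-1 : ℤ) ^ ((rfun k : Fin (m' + 1)) : ℕ) * Mi (rfun k)))
        = ∑ r ∈ Finset.univ.filter (fun r : Fin (m' + 1) => ∃ k, P k = fb r),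
            ((-1 : ℤ) ^ (r : ℕ) * Mi r) := by
      refine Finset.sum_bij' (fun k _ => rfun k)
        (fun r hr => Classical.choose (Finset.mem_filter.mp hr).2) ?_ ?_ ?_ ?_ ?_
      · intro k hk
        have hk' := (Finset.mem_filter.mp hk).2
        refine Finset.mem_filter.mpr ⟨Finset.mem_univ _, ⟨k, (hrfun_fb k hk').symm⟩⟩
      · intro r hr
        have hspec := Classical.choose_spec (Finset.mem_filter.mp hr).2
        refine Finset.mem_filter.mpr ⟨Finset.mem_univ _, ?_⟩
        rw [hspec]
        exact hfb_mem r
      · intro k hk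
        have hk' := (Finset.mem_filter.mp hk).2
        apply hP
        have hmem2 : rfun k ∈ Finset.univ.filter (fun r : Fin (m' + 1) => ∃ k, P k = fb r) :=
          Finset.mem_filter.mpr ⟨Finset.mem_univ _, ⟨k, (hrfun_fb k hk').symm⟩⟩
        have hspec := Classical.choose_spec (Finset.mem_filter.mp hmem2).2
        rw [hspec, hrfun_fb k hk']
      · intro r hr
        have hspec := Classical.choose_spec (Finset.mem_filter.mp hr).2
        have hmem2 : P (Classical.choose (Finset.mem_filter.mp hr).2) ∈ νb := by
          rw [hspec]; exact hfb_mem r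
        apply hfb_inj
        rw [hrfun_fb _ hmem2, hspec]
      · intro k hk
        rfl
    rw [hbij]
    have hl := laplace_rowsum_zero N hNrow j'
    have hterm : ∀ r : Fin (m' + 1),
        (-1 : ℤ) ^ (r : ℕ) * N r j' * (N.submatrix r.succAbove j'.succAbove).det
        = (if (∃ k, P k = fb r) then ε * ((-1 : ℤ) ^ (r : ℕ) * Mi r) else 0) := by
      intro r
      have h1 : N r j' = if (∃ k, P k = fb r) then ε else 0 := hj (fb r)
      rw [h1]
      split_ifs with hcond
      · show (-1 : ℤ) ^ (r : ℕ) * ε * Mi r = ε * ((-1 : ℤ) ^ (r : ℕ) * Mi r)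
        ring
      · show (-1 : ℤ) ^ (r : ℕ) * 0 * Mi r = 0
        ring
    have hchain : (0 : ℤ) = ε * ∑ r ∈ Finset.univ.filter
        (fun r : Fin (m' + 1) => ∃ k, P k = fb r), ((-1 : ℤ) ^ (r : ℕ) * Mi r) := by
      calc (0 : ℤ) = ∑ r : Fin (m' + 1),
            (-1 : ℤ) ^ (r : ℕ) * N r j' * (N.submatrix r.succAbove j'.succAbove).det := hl.symm
        _ = ∑ r : Fin (m' + 1), (if (∃ k, P k = fb r) then ε * ((-1 : ℤ) ^ (r : ℕ) * Mi r) else 0) :=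
            Finset.sum_congr rfl (fun r _ => hterm r)
        _ = ∑ r ∈ Finset.univ.filter (fun r : Fin (m' + 1) => ∃ k, P k = fb r),
              ε * ((-1 : ℤ) ^ (r : ℕ) * Mi r) := (Finset.sum_filter _ _).symm
        _ = ε * ∑ r ∈ Finset.univ.filter (fun r : Fin (m' + 1) => ∃ k, P k = fb r),
              ((-1 : ℤ) ^ (r : ℕ) * Mi r) := (Finset.mul_sum _ _ _).symm
    rcases mul_eq_zero.mp hchain.symm with hz | hz
    · exact absurd hz hε
    · exact hz
  have hfin : (∑ k ∈ Finset.univ.filter (fun k : Fin n => P k ∈ νb),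
      (((-1 : ℤ) ^ n.choose 2 * (-1) ^ (j' : ℕ))
        * ((-1) ^ ((rfun k : Fin (m' + 1)) : ℕ) * Mi (rfun k)))) = 0 := by
    rw [← Finset.mul_sum, hS, mul_zero]
  rw [hfin, zero_smul]


/-- For a set `ν̄` of `2n` pairs and any `i`, the signed sums
`Σ_k ω_{ik} ∧ ω_{ν̄∖(i,k)}` and `Σ_k ω_{ki} ∧ ω_{ν̄∖(k,i)}` vanish. -/
theorem stmt_5 (n : ℕ) (hn : 1 ≤ n) (νb : Finset (Fin n × Fin n)) (hνb : νb.card = 2 * n)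
    (i : Fin n) :
    (∑ k ∈ Finset.univ.filter (fun k : Fin n => (i, k) ∈ νb),
        om n (i, k) * omegaNu n (νb.erase (i, k))) = 0
    ∧ (∑ k ∈ Finset.univ.filter (fun k : Fin n => (k, i) ∈ νb),
        om n (k, i) * omegaNu n (νb.erase (k, i))) = 0 := by
  have hm2 : (2 * n - 1) + 1 = 2 * n := by omega
  have hm : νb.card = (2 * n - 1) + 1 := by omega
  constructor
  · set j' : Fin ((2 * n - 1) + 1) := ⟨(i : ℕ), by have := i.isLt; omega⟩ with hj'
    have hj : ∀ p : Fin n × Fin n,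
        Ent n p (j' : ℕ) = if (∃ k, (i, k) = p) then (-1 : ℤ) else 0 := by
      intro p
      show (if (i : ℕ) = ((p.1 : Fin n) : ℕ) then (-1 : ℤ) else 0)
          + (if (i : ℕ) = n + ((p.2 : Fin n) : ℕ) then 1 else 0)
        = if (∃ k, (i, k) = p) then (-1 : ℤ) else 0
      rw [if_neg (by have := i.isLt; omega : ¬ (i : ℕ) = n + ((p.2 : Fin n) : ℕ)), add_zero]
      by_cases hp : p.1 = i
      · rw [if_pos (by rw [hp]), if_pos ⟨p.2, by rw [← hp]⟩]
      · rw [if_neg (fun hc => hp (Fin.ext hc.symm)),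
          if_neg (fun hex => hp (by obtain ⟨k, hk⟩ := hex; rw [← hk]))]
    exact master hm2 νb hm (fun k => (i, k)) (fun a b hab => congrArg Prod.snd hab)
      j' (-1) (by norm_num) hj
  · set j' : Fin ((2 * n - 1) + 1) := ⟨n + (i : ℕ), by have := i.isLt; omega⟩ with hj'
    have hj : ∀ p : Fin n × Fin n,
        Ent n p (j' : ℕ) = if (∃ k, (k, i) = p) then (1 : ℤ) else 0 := by
      intro p
      show (if n + (i : ℕ) = ((p.1 : Fin n) : ℕ) then (-1 : ℤ) else 0)
          + (if n + (i : ℕ) = n + ((p.2 : Fin n) : ℕ) then 1 else 0)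
        = if (∃ k, (k, i) = p) then (1 : ℤ) else 0
      rw [if_neg (by have := p.1.isLt; omega : ¬ n + (i : ℕ) = ((p.1 : Fin n) : ℕ)), zero_add]
      by_cases hp : p.2 = i
      · rw [if_pos (by rw [hp]), if_pos ⟨p.1, by rw [← hp]⟩]
      · rw [if_neg (fun hc => hp (Fin.ext (by omega : ((p.2 : Fin n) : ℕ) = (i : ℕ)))),
          if_neg (fun hex => hp (by obtain ⟨k, hk⟩ := hex; rw [← hk]))]
    exact master hm2 νb hm (fun k => (k, i)) (fun a b hab => congrArg Prod.fst hab)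
      j' 1 (by norm_num) hj
end Aux
end
end

section
/- Let R be a commutative ring, n ≥ 1, B ∈ Mₙ(R), and i,j ∈ {1,…,n}. Let T_{ij} = Iₙ + E_{ij}, where E_{ij} is the matrix with a single entry 1 in position (i,j) and 0 elsewhere. Then for all p, q ∈ ℕⁿ with Σₐ pₐ = Σ_b q_b: P_{p,q}(B·T_{ij}) = Σ_{k=0}^{q_j} binom(q_j, k)·P_{p, q + k(e_i − e_j)}(B), where e_i ∈ ℤⁿ is the i-th standard basis vector. -/
open scoped Classical

noncomputable section

/-!
Realise `P_{p,q}(B)` as the permanent of `B.submatrix r c` for any maps `r, c : Fin m → Fin n`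
whose fibres have sizes `p` and `q`; this does not depend on the choice, since permuting rows or
columns does not change a permanent. Column `b` of `(B * T_{ij}).submatrix r c` is column `b` of
`B.submatrix r c`, plus the column `B (r ·) i` when `c b = j`. Expanding the permanent linearly in
these `q_j` columns gives a sum over subsets `S` of them, whose term is the permanent with the
columns in `S` moved from `j` to `i`, that is `P_{p, q + |S| (e_i - e_j)}(B)`. Grouping the
subsets by size gives the binomial coefficients.
-/

open Finset

section Permanent

variable {ι R : Type*} [Fintype ι] [DecidableEq ι] [CommSemiring R]

theorem prod_ite_mem_add_eq_sum_powerset (f g : ι → R) (T : Finset ι) :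
    ∏ b, (if b ∈ T then f b + g b else f b) =
      ∑ S ∈ T.powerset, ∏ b, if b ∈ S then g b else f b := by
  set h : ι → R := fun b => if b ∈ T then g b else 0
  have hprod : ∀ S : Finset ι, ∏ b, (if b ∈ S then h b else f b) =
      (∏ b ∈ S, h b) * ∏ b ∈ univ \ S, f b := fun S => by
    simpa [piecewise] using prod_piecewise univ S h f
  calc ∏ b, (if b ∈ T then f b + g b else f b)
      = ∏ b, (h b + f b) := prod_congr rfl fun b _ => by
        simp only [h]; split_ifs <;> simp [add_comm]
    _ = ∑ S ∈ univ.powerset, ∏ b, (if b ∈ S then h b else f b) := by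
        simp only [prod_add, hprod]
    _ = ∑ S ∈ T.powerset, ∏ b, (if b ∈ S then h b else f b) := by
        refine (sum_subset (powerset_mono.2 (subset_univ T)) fun S _ hST => ?_).symm
        obtain ⟨b, hbS, hbT⟩ := not_subset.1 (mt mem_powerset.2 hST)
        exact prod_eq_zero (mem_univ b) (by simp [h, hbS, hbT])
    _ = ∑ S ∈ T.powerset, ∏ b, if b ∈ S then g b else f b :=
        sum_congr rfl fun S hS => prod_congr rfl fun b _ => by
          split_ifs with hb
          · simp [h, mem_powerset.1 hS hb]
          · rfl

theorem Matrix.permanent_of_ite_mem_add_eq_sum_powerset (M N : Matrix ι ι R) (T : Finset ι) :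
    (Matrix.of fun a b => if b ∈ T then M a b + N a b else M a b).permanent =
      ∑ S ∈ T.powerset, (Matrix.of fun a b => if b ∈ S then N a b else M a b).permanent := by
  simp only [Matrix.permanent, Matrix.of_apply, prod_ite_mem_add_eq_sum_powerset]
  exact sum_comm

end Permanent

theorem exists_perm_comp_eq_of_card_fiber {α β : Type*} [Fintype α] [DecidableEq β]
    {f g : α → β} (h : ∀ x, #{a | f a = x} = #{a | g a = x}) :
    ∃ σ : Equiv.Perm α, g ∘ σ = f :=
  ⟨Equiv.ofFiberEquiv fun x => Fintype.equivOfCardEq (by simpa [Fintype.card_subtype] using h x),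
    funext <| Equiv.ofFiberEquiv_map _⟩

theorem Matrix.permanent_submatrix_eq_of_card_fiber {ι κ R : Type*} [Fintype ι] [DecidableEq ι]
    [DecidableEq κ] [CommSemiring R] (B : Matrix κ κ R) {r r' c c' : ι → κ}
    (hr : ∀ x, #{a | r a = x} = #{a | r' a = x}) (hc : ∀ x, #{b | c b = x} = #{b | c' b = x}) :
    (B.submatrix r c).permanent = (B.submatrix r' c').permanent := by
  obtain ⟨σ, rfl⟩ := exists_perm_comp_eq_of_card_fiber hr
  obtain ⟨τ, rfl⟩ := exists_perm_comp_eq_of_card_fiber hc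
  change (((B.submatrix r' c').submatrix σ id).submatrix id τ).permanent = _
  rw [Matrix.permanent_permute_rows, Matrix.permanent_permute_cols]

theorem card_fiber_ite_mem {α β : Type*} [Fintype α] [DecidableEq α] [DecidableEq β]
    {c : α → β} {q : β → ℕ} (hc : ∀ x, #{b | c b = x} = q x) {S : Finset α} {i j : β}
    (hS : ∀ b ∈ S, c b = j) (x : β) :
    #{b | (if b ∈ S then i else c b) = x} =
      (q - Pi.single j #S + Pi.single i #S : β → ℕ) x := by
  have hsplit : ∀ g : α → β,
      #{b | g b = x} = #{b ∈ S | g b = x} + #{b ∈ Sᶜ | g b = x} :=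
    fun g => by simp only [card_filter, sum_add_sum_compl]
  have hSi : #{b ∈ S | (if b ∈ S then i else c b) = x} = if x = i then #S else 0 := by
    rw [filter_congr fun b hb => by rw [if_pos hb, eq_comm]]; split_ifs <;> simp [*]
  have hSj : #{b ∈ S | c b = x} = if x = j then #S else 0 := by
    rw [filter_congr fun b hb => by rw [hS b hb, eq_comm]]; split_ifs <;> simp [*]
  have hSc : {b ∈ Sᶜ | (if b ∈ S then i else c b) = x} = {b ∈ Sᶜ | c b = x} :=
    filter_congr fun b hb => by rw [if_neg (mem_compl.1 hb)]
  simp only [Pi.add_apply, Pi.sub_apply, Pi.single_apply]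
  rw [hsplit, hSi, hSc, ← hc x, hsplit c, hSj]
  split_ifs <;> omega

theorem card_fiber_get_cast {α : Type*} [DecidableEq α] {m : ℕ} (l : List α) (h : m = l.length)
    (x : α) : #{a | l.get (Fin.cast h a) = x} = l.count x :=
  Fin.card_filter_univ_eq_vector_get_eq_count x ⟨l, h.symm⟩

theorem mul_one_add_single_apply {ι R : Type*} [Fintype ι] [DecidableEq ι] [NonAssocSemiring R]
    (B : Matrix ι ι R) (i j x y : ι) :
    (B * (1 + Matrix.single i j 1) : Matrix ι ι R) x y =
      if y = j then B x y + B x i else B x y := by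
  rw [Matrix.mul_add, Matrix.mul_one, Matrix.add_apply]
  split_ifs with hy
  · rw [hy, Matrix.mul_single_apply_same, mul_one]
  · rw [Matrix.mul_single_apply_of_ne (hbj := hy), add_zero]

theorem permanent_eq_matrix_permanent {m : ℕ} {R : Type*} [CommRing R]
    (A : Matrix (Fin m) (Fin m) R) : permanent A = A.permanent := by
  rw [← Matrix.permanent_transpose]; rfl

section repList

variable {n m : ℕ}

theorem repList_length (p : Fin n → ℕ) : (repList p).length = ∑ i, p i := by
  simp [repList, List.length_flatMap, Fin.sum_univ_def]

theorem repList_count (p : Fin n → ℕ) (x : Fin n) : (repList p).count x = p x := by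
  simp [repList, List.count_flatMap, Function.comp_def, List.count_replicate, ← Fin.sum_univ_def]

theorem repList_length_eq_of_card_fiber {p : Fin n → ℕ} {f : Fin m → Fin n}
    (hf : ∀ x, #{a | f a = x} = p x) : (repList p).length = m := by
  simp_rw [repList_length, ← hf]
  simpa using (card_eq_sum_card_fiberwise (s := univ) (t := univ) fun a _ => mem_univ (f a)).symm

theorem card_fiber_repList_get_cast (p : Fin n → ℕ) (h : m = (repList p).length) (x : Fin n) :
    #{a | (repList p).get (Fin.cast h a) = x} = p x := by
  rw [card_fiber_get_cast, repList_count]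

theorem exists_card_fiber_eq (p : Fin n → ℕ) (hm : ∑ i, p i = m) :
    ∃ r : Fin m → Fin n, ∀ x, #{a | r a = x} = p x :=
  ⟨_, card_fiber_repList_get_cast p (by rw [repList_length, hm])⟩

theorem PpermNat_eq_permanent_submatrix {R : Type*} [CommRing R] (B : Matrix (Fin n) (Fin n) R)
    {p q : Fin n → ℕ} {r c : Fin m → Fin n} (hr : ∀ x, #{a | r a = x} = p x)
    (hc : ∀ x, #{b | c b = x} = q x) :
    PpermNat B p q = (B.submatrix r c).permanent := by
  have hpq : (repList p).length = (repList q).length :=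
    (repList_length_eq_of_card_fiber hr).trans (repList_length_eq_of_card_fiber hc).symm
  obtain rfl := repList_length_eq_of_card_fiber hr
  rw [PpermNat, dif_pos hpq, permanent_eq_matrix_permanent]
  refine Matrix.permanent_submatrix_eq_of_card_fiber B (fun x => ?_) (fun x => ?_)
  · rw [hr, ← card_fiber_repList_get_cast p rfl]; rfl
  · rw [hc, card_fiber_repList_get_cast]

theorem Pperm_natCast {R : Type*} [CommRing R] (B : Matrix (Fin n) (Fin n) R)
    (p q : Fin n → ℕ) :
    Pperm B (fun a => (p a : ℤ)) (fun b => (q b : ℤ)) = PpermNat B p q := by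
  simp [Pperm]

end repList

theorem add_mul_ite_sub_ite_eq_natCast {α : Type*} [DecidableEq α] {q : α → ℕ} {i j : α}
    {k : ℕ} (hk : k ≤ q j) :
    (fun b => (q b : ℤ) + (k : ℤ) * ((if b = i then 1 else 0) - (if b = j then 1 else 0))) =
      fun b => ((q - Pi.single j k + Pi.single i k : α → ℕ) b : ℤ) := by
  funext b
  simp only [Pi.add_apply, Pi.sub_apply, Pi.single_apply]
  split_ifs <;> subst_vars <;> omega

theorem stmt_10_general {R : Type*} [CommRing R] (n : ℕ)
    (B : Matrix (Fin n) (Fin n) R) (i j : Fin n) (p q : Fin n → ℕ)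
    (hpq : ∑ a, p a = ∑ b, q b) :
    Pperm (B * (1 + Matrix.single i j (1 : R)))
      (fun a => (p a : ℤ)) (fun b => (q b : ℤ))
    = ∑ k ∈ Finset.range (q j + 1),
        ((q j).choose k : R) *
          Pperm B (fun a => (p a : ℤ))
            (fun b => (q b : ℤ) + (k : ℤ) * ((if b = i then 1 else 0) - (if b = j then 1 else 0))) := by
  obtain ⟨r, hr⟩ := exists_card_fiber_eq p rfl
  obtain ⟨c, hc⟩ := exists_card_fiber_eq q hpq.symm
  set T : Finset (Fin (∑ a, p a)) := {b | c b = j}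
  have hterm : ∀ S ∈ T.powerset,
      (Matrix.of fun a b => if b ∈ S then B (r a) i else B (r a) (c b)).permanent =
        PpermNat B p (q - Pi.single j #S + Pi.single i #S) := fun S hS => by
    rw [PpermNat_eq_permanent_submatrix B hr
      (card_fiber_ite_mem hc fun b hb => (mem_filter.1 (mem_powerset.1 hS hb)).2)]
    congr 1
    ext a b
    simp only [Matrix.of_apply, Matrix.submatrix_apply]
    split_ifs <;> rfl
  calc Pperm (B * (1 + Matrix.single i j (1 : R))) (fun a => (p a : ℤ)) (fun b => (q b : ℤ))
      = ((B * (1 + Matrix.single i j (1 : R))).submatrix r c).permanent := by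
        rw [Pperm_natCast, PpermNat_eq_permanent_submatrix _ hr hc]
    _ = (Matrix.of fun a b =>
          if b ∈ T then B (r a) (c b) + B (r a) i else B (r a) (c b)).permanent := by
        congr 1
        ext a b
        simp [T, mul_one_add_single_apply]
    _ = ∑ S ∈ T.powerset, PpermNat B p (q - Pi.single j #S + Pi.single i #S) := by
        exact (Matrix.permanent_of_ite_mem_add_eq_sum_powerset (B.submatrix r c)
          (.of fun a _ => B (r a) i) T).trans (sum_congr rfl hterm)
    _ = _ := by
        refine (sum_powerset_apply_card
          (f := fun k => PpermNat B p (q - Pi.single j k + Pi.single i k))).trans ?_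
        rw [show #T = q j from hc j]
        refine sum_congr rfl fun k hk => ?_
        rw [nsmul_eq_mul, add_mul_ite_sub_ite_eq_natCast (Nat.lt_succ_iff.1 (mem_range.1 hk)),
          Pperm_natCast]

/-- The effect of the elementary column transformation `T_{ij}` on the
permanent polynomials:
`P_{p,q}(B·T_{ij}) = Σ_{k=0}^{q_j} binom(q_j, k)·P_{p, q + k(e_i - e_j)}(B)`. -/
theorem stmt_10 {R : Type*} [CommRing R] (n : ℕ) (hn : 1 ≤ n)
    (B : Matrix (Fin n) (Fin n) R) (i j : Fin n) (p q : Fin n → ℕ)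
    (hpq : ∑ a, p a = ∑ b, q b) :
    Pperm (B * (1 + Matrix.single i j (1 : R)))
      (fun a => (p a : ℤ)) (fun b => (q b : ℤ))
    = ∑ k ∈ Finset.range (q j + 1),
        ((q j).choose k : R) *
          Pperm B (fun a => (p a : ℤ))
            (fun b => (q b : ℤ) + (k : ℤ) * ((if b = i then 1 else 0) - (if b = j then 1 else 0))) :=
  stmt_10_general n B i j p q hpq
end
end

section
/- Let R be a commutative ring, n ≥ 1, and let A ∈ Mₙ(R) be invertible. Let 1 ≤ k ≤ n and let I = (i₁,…,i_k) and J = (j₁,…,j_k) be tuples of pairwise distinct indices in {1,…,n}. Then det(A)·det((A^{−1})_{I,J}) = σ(I)·σ(J)·det(A^{J,I}), where (A^{−1})_{I,J} is the k×k matrix with (a,b) entry (A^{−1})_{i_a, j_b}, and A^{J,I} is the (n−k)×(n−k) submatrix of A on the rows not in J and the columns not in I, taken in increasing order (with the convention that the determinant of the empty matrix is 1 when k = n). -/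
open scoped Classical

noncomputable section

/-- The sign `σ(I) = (-1)^{i₁+⋯+i_k}·sgn(π_I)` of a tuple of pairwise distinct 1-based
indices (here recorded as elements of `Fin n`, whose 1-based value is `(· : ℕ) + 1`),
where `π_I` is the permutation sorting the tuple into increasing order; it is `0` if the
tuple has a repeated entry. -/
def sigmaSign {n k : ℕ} (I : Fin k → Fin n) : ℤ :=
  if Function.Injective I then
    (-1) ^ (∑ a, ((I a : ℕ) + 1)) * (Equiv.Perm.sign (Tuple.sort I) : ℤ)
  else 0

def sumEquiv (n k : ℕ) (h : k ≤ n) : Fin k ⊕ Fin (n - k) ≃ Fin n :=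
  finSumFinEquiv.trans (finCongr (Nat.add_sub_cancel' h))

lemma sumEquiv_inl (n k : ℕ) (h : k ≤ n) (a : Fin k) :
    ((sumEquiv n k h (Sum.inl a) : Fin n) : ℕ) = a := by
  simp [sumEquiv]

lemma sumEquiv_inr (n k : ℕ) (h : k ≤ n) (b : Fin (n - k)) :
    ((sumEquiv n k h (Sum.inr b) : Fin n) : ℕ) = k + b := by
  simp [sumEquiv]

lemma mem_range_update {α β : Type*} [DecidableEq α] {f : α → β} (hf : Function.Injective f)
    (i : α) (v : β) (hv : v ∉ Set.range f) (x : β) :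
    x ∈ Set.range (Function.update f i v) ↔ x = v ∨ (x ∈ Set.range f ∧ x ≠ f i) := by
  constructor
  · rintro ⟨y, rfl⟩
    by_cases hy : y = i
    · subst hy; simp
    · rw [Function.update_of_ne hy]
      exact Or.inr ⟨⟨y, rfl⟩, fun h => hy (hf h)⟩
  · rintro (rfl | ⟨⟨y, rfl⟩, hne⟩)
    · exact ⟨i, by simp⟩
    · exact ⟨y, Function.update_of_ne (fun h => hne (by rw [h])) _ _⟩

lemma strictMono_le_apply {n k : ℕ} {I : Fin k → Fin n} (hI : StrictMono I) (a : Fin k) :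
    (a : ℕ) ≤ (I a : ℕ) := by
  suffices h : ∀ m : ℕ, ∀ a : Fin k, (a : ℕ) = m → m ≤ (I a : ℕ) from h _ a rfl
  intro m
  induction m with
  | zero => omega
  | succ j ih =>
    intro a ha
    have hj : j < k := by omega
    have h1 := ih ⟨j, hj⟩ rfl
    have h2 : I ⟨j, hj⟩ < I a := hI (by simp [Fin.lt_def]; omega)
    have := Fin.lt_def.mp h2
    omega

lemma sign_of_mono {n k : ℕ} (hkn : k ≤ n) (N : ℕ) :
    ∀ (I : Fin k → Fin n) (Ic : Fin (n - k) → Fin n), (∑ a, (I a : ℕ)) = N →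
    StrictMono I → StrictMono Ic →
    (∀ x, x ∈ Set.range Ic ↔ x ∉ Set.range I) →
    ∀ (e : Fin k ⊕ Fin (n - k) ≃ Fin n), (∀ a, e (Sum.inl a) = I a) →
    (∀ b, e (Sum.inr b) = Ic b) →
    (Equiv.Perm.sign ((sumEquiv n k hkn).symm.trans e) : ℤ)
      = (-1 : ℤ) ^ (∑ a, ((I a : ℕ) + (a : ℕ))) := by
  induction N using Nat.strong_induction_on with
  | _ N ih =>
  intro I Ic hsum hI hIc hr e he1 he2
  by_cases hfix : ∀ a : Fin k, (I a : ℕ) = (a : ℕ)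
  · -- base case: I is the initial segment, Ic the rest, e = sumEquiv
    have memI : ∀ x : Fin n, x ∈ Set.range I ↔ (x : ℕ) < k := by
      intro x
      constructor
      · rintro ⟨a, rfl⟩; rw [hfix a]; exact a.isLt
      · intro hx; exact ⟨⟨(x : ℕ), hx⟩, Fin.ext (hfix _)⟩
    have hIcval : ∀ b : Fin (n - k), (Ic b : ℕ) = k + b := by
      have hg : StrictMono (fun b : Fin (n - k) => sumEquiv n k hkn (Sum.inr b)) := by
        intro x y hxy
        rw [Fin.lt_def, sumEquiv_inr, sumEquiv_inr]
        have := Fin.lt_def.mp hxy; omega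
      have hrange : Set.range Ic = Set.range (fun b : Fin (n - k) => sumEquiv n k hkn (Sum.inr b)) := by
        ext x
        rw [hr x, memI x]
        constructor
        · intro hx
          refine ⟨⟨(x : ℕ) - k, by omega⟩, Fin.ext ?_⟩
          rw [sumEquiv_inr]; simp; omega
        · rintro ⟨b, rfl⟩
          rw [sumEquiv_inr]; omega
      haveI : WellFoundedLT (Fin (n - k)) := inferInstance
      have := (StrictMono.range_inj hIc hg).mp hrange
      intro b; rw [this]; exact sumEquiv_inr n k hkn b
    have he : e = sumEquiv n k hkn := by
      apply Equiv.ext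
      rintro (a | b)
      · rw [he1]; exact Fin.ext (by rw [hfix, sumEquiv_inl])
      · rw [he2]; exact Fin.ext (by rw [hIcval, sumEquiv_inr])
    subst he
    rw [Equiv.symm_trans_self]
    have hexp : ∑ a : Fin k, ((I a : ℕ) + (a : ℕ)) = 2 * ∑ a : Fin k, (a : ℕ) := by
      rw [Finset.sum_add_distrib, two_mul]
      congr 1
      exact Finset.sum_congr rfl fun a _ => hfix a
    rw [hexp, pow_mul]
    norm_num
  · -- exchange step
    push_neg at hfix
    have hne : (Finset.univ.filter (fun a : Fin k => (I a : ℕ) ≠ (a : ℕ))).Nonempty := by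
      obtain ⟨a, ha⟩ := hfix; exact ⟨a, by simp [ha]⟩
    set s := Finset.univ.filter (fun a : Fin k => (I a : ℕ) ≠ (a : ℕ)) with hs
    set a₀ := s.min' hne with ha₀def
    have ha₀ : (I a₀ : ℕ) ≠ (a₀ : ℕ) := (Finset.mem_filter.mp (s.min'_mem hne)).2
    have hmin : ∀ a' : Fin k, a' < a₀ → (I a' : ℕ) = (a' : ℕ) := by
      intro a' h
      by_contra hc
      exact absurd (s.min'_le a' (Finset.mem_filter.mpr ⟨Finset.mem_univ _, hc⟩)) (not_le.mpr h)
    have hlt : (a₀ : ℕ) < (I a₀ : ℕ) := (strictMono_le_apply hI a₀).lt_of_ne (Ne.symm ha₀)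
    set d : Fin n := I a₀ with hd
    have hd1 : 1 ≤ (d : ℕ) := by omega
    set c : Fin n := ⟨(d : ℕ) - 1, by have := d.isLt; omega⟩ with hc
    have hcval : (c : ℕ) = (d : ℕ) - 1 := rfl
    have hcd : c ≠ d := Fin.ne_of_val_ne (by omega)
    have hcI : c ∉ Set.range I := by
      rintro ⟨x, hx⟩
      have hxv : (I x : ℕ) = (d : ℕ) - 1 := congrArg Fin.val hx
      rcases lt_trichotomy x a₀ with h | h | h
      · have h1 := hmin x h
        have h2 := Fin.lt_def.mp h
        omega
      · subst h; omega
      · have h2 := Fin.lt_def.mp (hI h)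
        omega
    obtain ⟨b₀, hb₀⟩ : c ∈ Set.range Ic := (hr c).mpr hcI
    have hdIc : d ∉ Set.range Ic := fun h => (hr d).mp h ⟨a₀, rfl⟩
    set I' := Function.update I a₀ c with hI'def
    set Ic' := Function.update Ic b₀ d with hIc'def
    have hI' : StrictMono I' := by
      intro x y hxy
      rcases eq_or_ne x a₀ with rfl | hx <;> rcases eq_or_ne y a₀ with rfl | hy
      · exact absurd hxy (lt_irrefl _)
      · rw [hI'def, Function.update_self, Function.update_of_ne hy]
        have := Fin.lt_def.mp (hI hxy)
        exact Fin.lt_def.mpr (by omega)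
      · rw [hI'def, Function.update_of_ne hx, Function.update_self]
        have h1 := hmin x hxy
        have h2 := Fin.lt_def.mp hxy
        exact Fin.lt_def.mpr (by rw [hcval]; omega)
      · rw [hI'def, Function.update_of_ne hx, Function.update_of_ne hy]
        exact hI hxy
    have hIc' : StrictMono Ic' := by
      intro x y hxy
      by_cases hx : x = b₀ <;> by_cases hy : y = b₀
      · exact absurd hxy (by rw [hx, hy]; exact lt_irrefl _)
      · have hxy' := hxy; rw [hx] at hxy'
        rw [hIc'def, hx, Function.update_self, Function.update_of_ne hy]
        have h1 := Fin.lt_def.mp (hIc hxy')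
        rw [hb₀] at h1
        have h2 : (Ic y : ℕ) ≠ (d : ℕ) := fun h => hdIc ⟨y, Fin.ext h⟩
        exact Fin.lt_def.mpr (by omega)
      · have hxy' := hxy; rw [hy] at hxy'
        rw [hIc'def, Function.update_of_ne hx, hy, Function.update_self]
        have h1 := Fin.lt_def.mp (hIc hxy')
        rw [hb₀] at h1
        exact Fin.lt_def.mpr (by omega)
      · rw [hIc'def, Function.update_of_ne hx, Function.update_of_ne hy]
        exact hIc hxy
    have hdMem : d ∈ Set.range I := ⟨a₀, rfl⟩
    have hr' : ∀ x, x ∈ Set.range Ic' ↔ x ∉ Set.range I' := by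
      intro x
      rw [hIc'def, hI'def,
        mem_range_update hIc.injective b₀ d hdIc, mem_range_update hI.injective a₀ c hcI,
        hb₀, ← hd, hr x]
      by_cases h1 : x = c <;> by_cases h2 : x = d <;>
        first
          | (exfalso; exact hcd (h1 ▸ h2 ▸ rfl))
          | (subst h1; tauto)
          | (subst h2; tauto)
          | tauto
    have hsum12 : (∑ a, (I' a : ℕ)) + 1 = ∑ a, (I a : ℕ) := by
      have hupd : (fun a => (I' a : ℕ)) = Function.update (fun a => (I a : ℕ)) a₀ (c : ℕ) := by
        rw [hI'def]
        funext a
        rcases eq_or_ne a a₀ with rfl | h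
        · simp
        · rw [Function.update_of_ne h, Function.update_of_ne h]
      have e1 : ∑ a, (I' a : ℕ) = (c : ℕ) + ∑ a ∈ Finset.univ \ {a₀}, (I a : ℕ) := by
        calc ∑ a, (I' a : ℕ) = ∑ a, Function.update (fun a => (I a : ℕ)) a₀ (c : ℕ) a := by
              rw [hupd]
          _ = _ := Finset.sum_update_of_mem (Finset.mem_univ a₀) _ _
      have e2 : ∑ a, (I a : ℕ) = (d : ℕ) + ∑ a ∈ Finset.univ \ {a₀}, (I a : ℕ) := by
        rw [Finset.sum_eq_add_sum_sdiff_singleton_of_mem (Finset.mem_univ a₀)]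
      omega
    have he1' : ∀ a, (e.trans (Equiv.swap c d)) (Sum.inl a) = I' a := by
      intro a
      rcases eq_or_ne a a₀ with rfl | ha
      · rw [Equiv.trans_apply, he1, ← hd, Equiv.swap_apply_right, hI'def, Function.update_self]
      · rw [Equiv.trans_apply, he1, hI'def, Function.update_of_ne ha]
        exact Equiv.swap_apply_of_ne_of_ne (fun h => hcI ⟨a, h⟩)
          (fun h => ha (hI.injective (h.trans hd)))
    have he2' : ∀ b, (e.trans (Equiv.swap c d)) (Sum.inr b) = Ic' b := by
      intro b
      rcases eq_or_ne b b₀ with rfl | hb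
      · rw [Equiv.trans_apply, he2, hb₀, Equiv.swap_apply_left, hIc'def, Function.update_self]
      · rw [Equiv.trans_apply, he2, hIc'def, Function.update_of_ne hb]
        exact Equiv.swap_apply_of_ne_of_ne
          (fun h => hb (hIc.injective (h.trans hb₀.symm)))
          (fun h => hdIc ⟨b, h⟩)
    have hNpos : 1 ≤ N := by omega
    have key := ih (∑ a, (I' a : ℕ)) (by omega) I' Ic' rfl hI' hIc' hr'
      (e.trans (Equiv.swap c d)) he1' he2'
    have hassoc : (sumEquiv n k hkn).symm.trans (e.trans (Equiv.swap c d))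
        = ((sumEquiv n k hkn).symm.trans e).trans (Equiv.swap c d) :=
      (Equiv.trans_assoc _ _ _).symm
    rw [hassoc] at key
    have hsign : Equiv.Perm.sign (((sumEquiv n k hkn).symm.trans e).trans (Equiv.swap c d))
        = -Equiv.Perm.sign ((sumEquiv n k hkn).symm.trans e) := by
      rw [Equiv.Perm.sign_trans, Equiv.Perm.sign_swap hcd, neg_one_mul]
    rw [hsign] at key
    have hexp : ∑ a, ((I a : ℕ) + (a : ℕ)) = (∑ a, ((I' a : ℕ) + (a : ℕ))) + 1 := by
      rw [Finset.sum_add_distrib, Finset.sum_add_distrib]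
      omega
    rw [hexp, pow_succ]
    push_cast at key ⊢
    linarith [key]

lemma det_mul_det_toBlocks {m p R : Type*} [Fintype m] [Fintype p] [DecidableEq m]
    [DecidableEq p] [CommRing R] (B : Matrix (m ⊕ p) (m ⊕ p) R) (hB : IsUnit B.det) :
    B.det * (B⁻¹.toBlocks₁₁).det = (B.toBlocks₂₂).det := by
  set C := B⁻¹ with hC
  have h1 : B * C = 1 := Matrix.mul_nonsing_inv B hB
  have hB' : B = Matrix.fromBlocks B.toBlocks₁₁ B.toBlocks₁₂ B.toBlocks₂₁ B.toBlocks₂₂ :=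
    (Matrix.fromBlocks_toBlocks B).symm
  have hC' : C = Matrix.fromBlocks C.toBlocks₁₁ C.toBlocks₁₂ C.toBlocks₂₁ C.toBlocks₂₂ :=
    (Matrix.fromBlocks_toBlocks C).symm
  have t11 : (Matrix.toBlocks₁₁ (1 : Matrix (m ⊕ p) (m ⊕ p) R)) = 1 := by
    ext i j
    simp [Matrix.toBlocks₁₁, Matrix.one_apply, Sum.inl.injEq]
  have t21 : (Matrix.toBlocks₂₁ (1 : Matrix (m ⊕ p) (m ⊕ p) R)) = 0 := by
    ext i j
    simp [Matrix.toBlocks₂₁, Matrix.one_apply]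
  have hmul : Matrix.fromBlocks
      (B.toBlocks₁₁ * C.toBlocks₁₁ + B.toBlocks₁₂ * C.toBlocks₂₁)
      (B.toBlocks₁₁ * C.toBlocks₁₂ + B.toBlocks₁₂ * C.toBlocks₂₂)
      (B.toBlocks₂₁ * C.toBlocks₁₁ + B.toBlocks₂₂ * C.toBlocks₂₁)
      (B.toBlocks₂₁ * C.toBlocks₁₂ + B.toBlocks₂₂ * C.toBlocks₂₂)
      = (1 : Matrix (m ⊕ p) (m ⊕ p) R) := by
    rw [← Matrix.fromBlocks_multiply, ← hB', ← hC', h1]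
  have h11 : B.toBlocks₁₁ * C.toBlocks₁₁ + B.toBlocks₁₂ * C.toBlocks₂₁ = 1 := by
    have := congrArg Matrix.toBlocks₁₁ hmul
    rwa [Matrix.toBlocks_fromBlocks₁₁, t11] at this
  have h21 : B.toBlocks₂₁ * C.toBlocks₁₁ + B.toBlocks₂₂ * C.toBlocks₂₁ = 0 := by
    have := congrArg Matrix.toBlocks₂₁ hmul
    rwa [Matrix.toBlocks_fromBlocks₂₁, t21] at this
  have key : B * Matrix.fromBlocks C.toBlocks₁₁ 0 C.toBlocks₂₁ 1
      = Matrix.fromBlocks 1 B.toBlocks₁₂ 0 B.toBlocks₂₂ := by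
    conv_lhs => rw [hB']
    rw [Matrix.fromBlocks_multiply, h11, h21]
    simp
  have hdet := congrArg Matrix.det key
  rw [Matrix.det_mul, Matrix.det_fromBlocks_zero₁₂, Matrix.det_fromBlocks_zero₂₁] at hdet
  simpa using hdet

lemma jacobi_mono {R : Type*} [CommRing R] (n k : ℕ) (hkn : k ≤ n)
    (A : Matrix (Fin n) (Fin n) R) (hA : IsUnit A.det)
    (I J : Fin k → Fin n) (hI : StrictMono I) (hJ : StrictMono J)
    (Ic Jc : Fin (n - k) → Fin n)
    (hIc : StrictMono Ic) (hIcr : ∀ x, x ∈ Set.range Ic ↔ x ∉ Set.range I)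
    (hJc : StrictMono Jc) (hJcr : ∀ x, x ∈ Set.range Jc ↔ x ∉ Set.range J) :
    A.det * ((A⁻¹).submatrix I J).det
      = (-1 : R) ^ ((∑ a, ((I a : ℕ) + (a : ℕ))) + (∑ a, ((J a : ℕ) + (a : ℕ))))
        * (A.submatrix Jc Ic).det := by
  have card_eq : Fintype.card (Fin k ⊕ Fin (n - k)) = Fintype.card (Fin n) := by
    simp [Nat.add_sub_cancel' hkn]
  have hsurjI : Function.Surjective (Sum.elim I Ic) := by
    intro x
    by_cases hx : x ∈ Set.range I
    · obtain ⟨a, ha⟩ := hx; exact ⟨Sum.inl a, ha⟩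
    · obtain ⟨b, hb⟩ := (hIcr x).mpr hx; exact ⟨Sum.inr b, hb⟩
  have hsurjJ : Function.Surjective (Sum.elim J Jc) := by
    intro x
    by_cases hx : x ∈ Set.range J
    · obtain ⟨a, ha⟩ := hx; exact ⟨Sum.inl a, ha⟩
    · obtain ⟨b, hb⟩ := (hJcr x).mpr hx; exact ⟨Sum.inr b, hb⟩
  have hbijI := (Fintype.bijective_iff_surjective_and_card _).mpr ⟨hsurjI, card_eq⟩
  have hbijJ := (Fintype.bijective_iff_surjective_and_card _).mpr ⟨hsurjJ, card_eq⟩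
  set eI := Equiv.ofBijective _ hbijI with heIdef
  set eJ := Equiv.ofBijective _ hbijJ with heJdef
  have heI1 : ∀ a, eI (Sum.inl a) = I a := fun a => rfl
  have heI2 : ∀ b, eI (Sum.inr b) = Ic b := fun b => rfl
  have heJ1 : ∀ a, eJ (Sum.inl a) = J a := fun a => rfl
  have heJ2 : ∀ b, eJ (Sum.inr b) = Jc b := fun b => rfl
  set B := A.submatrix ⇑eJ ⇑eI with hBdef
  set E := (∑ a, ((I a : ℕ) + (a : ℕ))) + (∑ a, ((J a : ℕ) + (a : ℕ))) with hE
  -- determinant of B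
  have hB1 : B = (A.submatrix ⇑eJ ⇑eJ).submatrix id ⇑(eI.trans eJ.symm) := by
    ext x y
    simp [hBdef, Matrix.submatrix_apply]
  have hdetB0 : B.det = ((Equiv.Perm.sign (eI.trans eJ.symm) : ℤ) : R) * A.det := by
    rw [hB1, Matrix.det_permute', Matrix.det_submatrix_equiv_self]
  set pI : Equiv.Perm (Fin n) := (sumEquiv n k hkn).symm.trans eI with hpI
  set pJ : Equiv.Perm (Fin n) := (sumEquiv n k hkn).symm.trans eJ with hpJ
  have hconj : (((sumEquiv n k hkn).symm.trans (eI.trans eJ.symm)).trans (sumEquiv n k hkn))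
      = pI.trans pJ.symm := by
    apply Equiv.ext; intro x
    simp [hpI, hpJ, Equiv.trans_apply]
  have hsI := sign_of_mono hkn (∑ a, (I a : ℕ)) I Ic rfl hI hIc hIcr eI heI1 heI2
  have hsJ := sign_of_mono hkn (∑ a, (J a : ℕ)) J Jc rfl hJ hJc hJcr eJ heJ1 heJ2
  have hsignIJ : ((Equiv.Perm.sign (eI.trans eJ.symm) : ℤ) : R) = (-1 : R) ^ E := by
    have h := Equiv.Perm.sign_symm_trans_trans (eI.trans eJ.symm) (sumEquiv n k hkn)
    rw [hconj] at h
    rw [← h, Equiv.Perm.sign_trans, Equiv.Perm.sign_symm]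
    rw [Units.val_mul]
    push_cast
    rw [hsI, hsJ, hE]
    push_cast
    rw [pow_add]
    ring
  have hdetB : B.det = (-1 : R) ^ E * A.det := by rw [hdetB0, hsignIJ]
  have hdetBunit : IsUnit B.det := by
    rw [hdetB]
    exact ((IsUnit.neg isUnit_one).pow E).mul hA
  -- inverse of B
  have hBinv : B⁻¹ = (A⁻¹).submatrix ⇑eI ⇑eJ := by
    apply Matrix.inv_eq_right_inv
    rw [hBdef, Matrix.submatrix_mul_equiv, Matrix.mul_nonsing_inv A hA,
      Matrix.submatrix_one_equiv]
  have hblock11 : B⁻¹.toBlocks₁₁ = (A⁻¹).submatrix I J := by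
    ext a b
    simp [hBinv, Matrix.toBlocks₁₁, Matrix.submatrix_apply, heI1, heJ1]
  have hblock22 : B.toBlocks₂₂ = A.submatrix Jc Ic := by
    ext a b
    simp [hBdef, Matrix.toBlocks₂₂, Matrix.submatrix_apply, heI2, heJ2]
  have main := det_mul_det_toBlocks B hdetBunit
  rw [hblock11, hblock22, hdetB] at main
  -- main : (-1)^E * A.det * det₁ = det₂
  have hsq : ((-1 : R) ^ E) * ((-1 : R) ^ E) = 1 := by
    rw [← pow_add]; exact Even.neg_one_pow ⟨E, rfl⟩
  calc A.det * ((A⁻¹).submatrix I J).det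
      = ((-1 : R) ^ E * (-1 : R) ^ E) * (A.det * ((A⁻¹).submatrix I J).det) := by
        rw [hsq, one_mul]
    _ = (-1 : R) ^ E * ((-1 : R) ^ E * A.det * ((A⁻¹).submatrix I J).det) := by ring
    _ = (-1 : R) ^ E * (A.submatrix Jc Ic).det := by rw [main]

lemma neg_one_pow_eq_of_even_add {R : Type*} [Monoid R] [HasDistribNeg R] {x y : ℕ}
    (h : Even (x + y)) : (-1 : R) ^ x = (-1 : R) ^ y := by
  have h1 : (-1 : R) ^ x * (-1 : R) ^ y = 1 := by rw [← pow_add]; exact Even.neg_one_pow h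
  have h2 : (-1 : R) ^ y * (-1 : R) ^ y = 1 := by rw [← pow_add]; exact Even.neg_one_pow ⟨y, rfl⟩
  calc (-1 : R) ^ x = (-1 : R) ^ x * ((-1 : R) ^ y * (-1 : R) ^ y) := by rw [h2, mul_one]
    _ = ((-1 : R) ^ x * (-1 : R) ^ y) * (-1 : R) ^ y := by rw [mul_assoc]
    _ = (-1 : R) ^ y := by rw [h1, one_mul]


/-- **Jacobi's identity.** For an invertible `A` and tuples `I`, `J` of `k`
pairwise distinct indices: `det(A)·det((A⁻¹)_{I,J}) = σ(I)·σ(J)·det(A^{J,I})`, where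
`A^{J,I}` is the submatrix of `A` on the rows not in `J` and the columns not in `I`, taken
in increasing order (given here by the strictly monotone enumerations `Jc`, `Ic` of the
complements of the ranges of `J`, `I`). -/
theorem stmt_12 {R : Type*} [CommRing R] (n k : ℕ) (hn : 1 ≤ n) (hk : 1 ≤ k) (hkn : k ≤ n)
    (A : Matrix (Fin n) (Fin n) R) (hA : IsUnit A.det)
    (I J : Fin k → Fin n) (hI : Function.Injective I) (hJ : Function.Injective J)
    (Ic Jc : Fin (n - k) → Fin n)
    (hIc : StrictMono Ic) (hIcr : ∀ x, x ∈ Set.range Ic ↔ x ∉ Set.range I)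
    (hJc : StrictMono Jc) (hJcr : ∀ x, x ∈ Set.range Jc ↔ x ∉ Set.range J) :
    A.det * ((A⁻¹).submatrix I J).det
      = ((sigmaSign I * sigmaSign J : ℤ) : R) * (A.submatrix Jc Ic).det := by
  set σI := Tuple.sort I with hσI
  set σJ := Tuple.sort J with hσJ
  set Im := I ∘ ⇑σI with hIm
  set Jm := J ∘ ⇑σJ with hJm
  have hImInj : Function.Injective Im := hI.comp (Equiv.injective _)
  have hJmInj : Function.Injective Jm := hJ.comp (Equiv.injective _)
  have hImMono : StrictMono Im := (Tuple.monotone_sort I).strictMono_of_injective hImInj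
  have hJmMono : StrictMono Jm := (Tuple.monotone_sort J).strictMono_of_injective hJmInj
  have hrangeI : Set.range Im = Set.range I := Function.Surjective.range_comp (Equiv.surjective _) I
  have hrangeJ : Set.range Jm = Set.range J := Function.Surjective.range_comp (Equiv.surjective _) J
  have hIcr' : ∀ x, x ∈ Set.range Ic ↔ x ∉ Set.range Im := by
    intro x; rw [hrangeI]; exact hIcr x
  have hJcr' : ∀ x, x ∈ Set.range Jc ↔ x ∉ Set.range Jm := by
    intro x; rw [hrangeJ]; exact hJcr x
  have key := jacobi_mono n k hkn A hA Im Jm hImMono hJmMono Ic Jc hIc hIcr' hJc hJcr'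
  -- express det of the unsorted submatrix via the sorted one
  have hsub : (A⁻¹).submatrix I J = ((A⁻¹).submatrix Im Jm).submatrix ⇑σI⁻¹ ⇑σJ⁻¹ := by
    ext a b
    simp [hIm, hJm, Matrix.submatrix_apply]
  have hdet1 : ((A⁻¹).submatrix I J).det
      = (((Equiv.Perm.sign σI : ℤ) * (Equiv.Perm.sign σJ : ℤ) : ℤ) : R)
        * ((A⁻¹).submatrix Im Jm).det := by
    rw [hsub]
    have h1 : ((A⁻¹).submatrix Im Jm).submatrix ⇑σI⁻¹ ⇑σJ⁻¹
        = (((A⁻¹).submatrix Im Jm).submatrix id ⇑σJ⁻¹).submatrix ⇑σI⁻¹ id := rfl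
    rw [h1, Matrix.det_permute, Matrix.det_permute', Equiv.Perm.sign_inv, Equiv.Perm.sign_inv]
    push_cast
    ring
  -- sigmaSign relations
  have hsortIm : Tuple.sort Im = Equiv.refl _ :=
    Tuple.sort_eq_refl_iff_monotone.mpr (Tuple.monotone_sort I)
  have hsortJm : Tuple.sort Jm = Equiv.refl _ :=
    Tuple.sort_eq_refl_iff_monotone.mpr (Tuple.monotone_sort J)
  have hsumI : (∑ a, ((Im a : ℕ))) = ∑ a, ((I a : ℕ)) := by
    rw [hIm]; exact Equiv.sum_comp σI (fun a => ((I a : ℕ)))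
  have hsumJ : (∑ a, ((Jm a : ℕ))) = ∑ a, ((J a : ℕ)) := by
    rw [hJm]; exact Equiv.sum_comp σJ (fun a => ((J a : ℕ)))
  have hsigI : sigmaSign I = (-1 : ℤ) ^ (∑ a, ((I a : ℕ) + 1)) * (Equiv.Perm.sign σI : ℤ) := by
    rw [sigmaSign, if_pos hI]
  have hsigJ : sigmaSign J = (-1 : ℤ) ^ (∑ a, ((J a : ℕ) + 1)) * (Equiv.Perm.sign σJ : ℤ) := by
    rw [sigmaSign, if_pos hJ]
  -- the exponent bookkeeping
  have hexp : (-1 : R) ^ ((∑ a, ((Im a : ℕ) + (a : ℕ))) + (∑ a, ((Jm a : ℕ) + (a : ℕ))))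
      = (-1 : R) ^ ((∑ a, ((I a : ℕ) + 1)) + (∑ a, ((J a : ℕ) + 1))) := by
    apply neg_one_pow_eq_of_even_add
    have e1 : (∑ a, ((Im a : ℕ) + (a : ℕ))) = (∑ a, ((Im a : ℕ))) + ∑ a : Fin k, (a : ℕ) :=
      Finset.sum_add_distrib
    have e2 : (∑ a, ((Jm a : ℕ) + (a : ℕ))) = (∑ a, ((Jm a : ℕ))) + ∑ a : Fin k, (a : ℕ) :=
      Finset.sum_add_distrib
    have e3 : (∑ a, ((I a : ℕ) + 1)) = (∑ a, ((I a : ℕ))) + k := by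
      rw [Finset.sum_add_distrib]; simp
    have e4 : (∑ a, ((J a : ℕ) + 1)) = (∑ a, ((J a : ℕ))) + k := by
      rw [Finset.sum_add_distrib]; simp
    rw [e1, e2, e3, e4, hsumI, hsumJ]
    refine ⟨(∑ a, ((I a : ℕ))) + (∑ a, ((J a : ℕ))) + (∑ a : Fin k, (a : ℕ)) + k, by ring⟩
  -- assemble
  have hss : ((sigmaSign I * sigmaSign J : ℤ) : R)
      = (((Equiv.Perm.sign σI : ℤ) * (Equiv.Perm.sign σJ : ℤ) : ℤ) : R)
        * (-1 : R) ^ ((∑ a, ((Im a : ℕ) + (a : ℕ))) + (∑ a, ((Jm a : ℕ) + (a : ℕ)))) := by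
    rw [hexp, hsigI, hsigJ]
    push_cast
    rw [pow_add]
    ring
  rw [hdet1, hss]
  linear_combination (((Equiv.Perm.sign σI : ℤ) * (Equiv.Perm.sign σJ : ℤ) : ℤ) : R) * key
end
end

section
/- Let n ≥ 3, p ≥ 1, and let I = {i₁ < ⋯ < i_p} and J = {j₁ < ⋯ < j_p} be disjoint non-empty subsets of {1,…,n−1} with i₁ < j₁, and assume that no two elements of I are consecutive integers and no two elements of J are consecutive integers. Let Λ′ be the (n−2p)×(n−2p) submatrix of Λ_{W_n} obtained by deleting the 2p rows with indices in {i, i+1 : i ∈ I} and the 2p columns with indices in {j, j+1 : j ∈ J}. If i₁ < j₁ < i₂ < j₂ < ⋯ < i_p < j_p, then det(Λ′) = −∏_{r ∈ {1,…,n}∖(I∪J)} x_{n+r}; otherwise det(Λ′) = 0. -/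
open scoped Classical

noncomputable section

/-- The variable `x_{a+1}` (i.e. the 1-based variable `x_{a+1}` is `xv n a`). -/
def xv (n : ℕ) (a : ℕ) : MvPolynomial (Fin (2 * n)) ℤ :=
  if h : a < 2 * n then MvPolynomial.X ⟨a, h⟩ else 0

/-- The graph Laplacian `Λ_{W_n}` of the wheel with `n` spokes, an `n × n` symmetric matrix
over `ℤ[x₁,…,x_{2n}]` (rows and columns `0`-indexed; variables `0`-indexed via `xv`). -/
def LW (n : ℕ) : Matrix (Fin n) (Fin n) (MvPolynomial (Fin (2 * n)) ℤ) :=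
  Matrix.of fun i j =>
    if i = j then
      (if (i : ℕ) = 0 then xv n 0 + xv n n + xv n (2 * n - 1)
       else xv n (i : ℕ) + xv n (n + (i : ℕ) - 1) + xv n (n + (i : ℕ)))
    else if (j : ℕ) = (i : ℕ) + 1 then -xv n (n + (i : ℕ))
    else if (i : ℕ) = (j : ℕ) + 1 then -xv n (n + (j : ℕ))
    else if ((i : ℕ) = 0 ∧ (j : ℕ) = n - 1) ∨ ((j : ℕ) = 0 ∧ (i : ℕ) = n - 1) then
      -xv n (2 * n - 1)
    else 0

/-!
Expand the determinant over permutations of the kept indices. An entry of `Λ_{W_n}` vanishes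
unless its row and column are equal or neighbours on the rim cycle, so only permutations
matching every kept row to a kept column at cyclic distance at most one contribute. For such a
matching, the number of kept columns minus the number of kept rows below a position `y`,
namely `#{i ∈ I | i < y} + #{i ∈ I | i ≤ y} - #{j ∈ J | j < y} - #{j ∈ J | j ≤ y}`, is carried
by the matched pairs crossing the cut between `y - 1` and `y`, and these can only be
`{y - 1, y}` and the wrap-around pair `{n - 1, 0}`. At `y ∈ I ∪ J` the pair `{y - 1, y}` is
deleted, and parity shows that row `n - 1` is matched to column `0`, that below every `i ∈ I`
there are as many elements of `J` as of `I`, and below every `j ∈ J` one fewer. That is exactly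
`i₁ < j₁ < i₂ < ⋯ < i_p < j_p`, so otherwise no permutation contributes.

In the interleaved case the same parity argument forbids two crossing pairs, so apart from the
wrap-around the matching preserves order: it is the rotation `k ↦ k + 1` of `Fin (n - 2p)`.
Conversely the rotation matches each kept row with a neighbouring column, through pairwise
distinct rim edges `x_{n+r}`, `r ∈ {1, …, n} \ (I ∪ J)`. Its sign is `(-1)^(n - 2p - 1)` and
its product is `(-1)^(n - 2p) ∏ x_{n+r}`.
-/

open Finset Nat

theorem StrictMono.lt_card_filter_lt_iff {m : ℕ} {e : Fin m → ℕ} (he : StrictMono e)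
    (t : Fin m) (z : ℕ) : (t : ℕ) < #{s | e s < z} ↔ e t < z := by
  constructor
  · intro h
    by_contra! hz
    have : #{s | e s < z} ≤ #(Iio t) :=
      card_le_card fun s hs => by
        simp only [mem_filter, mem_univ, true_and, mem_Iio] at hs ⊢
        exact he.lt_iff_lt.1 (hs.trans_le hz)
    rw [Fin.card_Iio] at this
    omega
  · intro h
    have : #(Iic t) ≤ #{s | e s < z} :=
      card_le_card fun s hs => by
        simp only [mem_filter, mem_univ, true_and, mem_Iic] at hs ⊢
        exact (he.monotone hs).trans_lt h
    rw [Fin.card_Iic] at this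
    omega

theorem StrictMono.card_filter_lt_apply {m : ℕ} {e : Fin m → ℕ} (he : StrictMono e)
    (t : Fin m) : #{s | e s < e t} = t := by
  rw [← Fin.card_Iio t]
  congr 1
  ext s
  simp [he.lt_iff_lt]

theorem StrictMono.card_filter_lt_apply_add_one {m : ℕ} {e : Fin m → ℕ} (he : StrictMono e)
    (t : Fin m) : #{s | e s < e t + 1} = t + 1 := by
  rw [← Fin.card_Iic t]
  congr 1
  ext s
  simp [he.le_iff_le]

theorem card_filter_apply_eq_and_le_one {m : ℕ} {f : Fin m → ℕ} (hf : Function.Injective f)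
    (a : ℕ) (P : Fin m → Prop) [DecidablePred P] : #{k | f k = a ∧ P k} ≤ 1 :=
  card_le_one.2 fun _ hk _ hk' =>
    hf ((mem_filter.1 hk).2.1.trans (mem_filter.1 hk').2.1.symm)

theorem card_filter_lt_eq_count {m : ℕ} {e : Fin m → ℕ} (he : Function.Injective e)
    {P : ℕ → Prop} [DecidablePred P] (hP : ∀ x, x ∈ Set.range e ↔ P x) (z : ℕ) :
    #{s | e s < z} = count P z := by
  rw [count_eq_card_filter_range, ← card_image_of_injective _ he]
  congr 1
  ext x
  simp only [mem_image, mem_filter, mem_univ, true_and, mem_range, ← hP x, Set.mem_range]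
  constructor
  · rintro ⟨s, hs, rfl⟩
    exact ⟨hs, s, rfl⟩
  · rintro ⟨hx, s, rfl⟩
    exact ⟨s, hx, rfl⟩

theorem count_kept_add_count_add_count {K : Finset ℕ} (h0 : 0 ∉ K) (hK : ∀ x ∈ K, x + 1 ∉ K)
    {n y : ℕ} (hy : y ≤ n) :
    count (fun r => r < n ∧ r + 1 ∉ K ∧ r ∉ K) y + count (· ∈ K) y + count (· ∈ K) (y + 1)
      = y := by
  induction y with
  | zero => simp [count_succ, h0]
  | succ y ih =>
    have := ih (by omega)
    have hkept := count_succ (p := fun r => r < n ∧ r + 1 ∉ K ∧ r ∉ K) y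
    have hy := count_succ (p := (· ∈ K)) y
    have hy' := count_succ (p := (· ∈ K)) (y + 1)
    by_cases hy1 : y ∈ K
    · simp only [hy1, hK y hy1, not_true_eq_false, and_false, if_false, if_true] at hkept hy hy'
      omega
    · by_cases hy2 : y + 1 ∈ K <;>
        simp only [hy1, hy2, show y < n by omega, not_false_eq_true, not_true_eq_false,
          and_false, and_true, if_true, if_false] at hkept hy hy' <;> omega

theorem card_filter_val_lt_add_count_add_count {n m : ℕ} {K : Finset ℕ} (h0 : 0 ∉ K)
    (hK : ∀ x ∈ K, x + 1 ∉ K) {e : Fin m → Fin n} (he : Function.Injective e)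
    (hrange : ∀ r : Fin n, r ∈ Set.range e ↔ ((r : ℕ) + 1 ∉ K ∧ (r : ℕ) ∉ K)) {y : ℕ}
    (hy : y ≤ n) :
    #{k | (e k : ℕ) < y} + count (· ∈ K) y + count (· ∈ K) (y + 1) = y := by
  rw [card_filter_lt_eq_count (e := fun k => (e k : ℕ)) (Fin.val_injective.comp he)
    (P := fun r => r < n ∧ r + 1 ∉ K ∧ r ∉ K)]
  · exact count_kept_add_count_add_count h0 hK hy
  · intro x
    constructor
    · rintro ⟨k, rfl⟩
      exact ⟨(e k).isLt, (hrange (e k)).1 ⟨k, rfl⟩⟩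
    · rintro ⟨hx, hkept⟩
      obtain ⟨k, hk⟩ := (hrange ⟨x, hx⟩).2 hkept
      exact ⟨k, by simp [hk]⟩

theorem count_succ_bounds_of_disjoint {I J : Finset ℕ} (hIJ : Disjoint I J) (z : ℕ) :
    (count (· ∈ I) z ≤ count (· ∈ I) (z + 1) ∧ count (· ∈ I) (z + 1) ≤ count (· ∈ I) z + 1) ∧
    (count (· ∈ J) z ≤ count (· ∈ J) (z + 1) ∧ count (· ∈ J) (z + 1) ≤ count (· ∈ J) z + 1) ∧
    ¬ (count (· ∈ I) (z + 1) = count (· ∈ I) z + 1 ∧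
      count (· ∈ J) (z + 1) = count (· ∈ J) z + 1) := by
  have hI := count_succ (p := (· ∈ I)) z
  have hJ := count_succ (p := (· ∈ J)) z
  by_cases hzI : z ∈ I
  · have hzJ : z ∉ J := disjoint_left.1 hIJ hzI
    simp only [hzI, hzJ, if_true, if_false] at hI hJ
    omega
  · by_cases hzJ : z ∈ J <;> simp only [hzI, hzJ, if_true, if_false] at hI hJ <;> omega

theorem card_filter_lt_add_card_filter_cross {m : ℕ} (f g : Fin m → ℕ)
    (σ : Equiv.Perm (Fin m)) (y : ℕ) :
    #{k | f k < y} + #{k | y ≤ f k ∧ g (σ k) < y}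
      = #{k | g k < y} + #{k | f k < y ∧ y ≤ g (σ k)} := by
  have hσ : #{k | g (σ k) < y} = #{k | g k < y} :=
    card_bij (fun k _ => σ k) (by simp) (fun _ _ _ _ h => σ.injective h)
      (fun k hk => ⟨σ.symm k, by simpa using hk, by simp⟩)
  have h1 := card_filter_add_card_filter_not (s := ({k | f k < y} : Finset (Fin m)))
    (fun k => g (σ k) < y)
  have h2 := card_filter_add_card_filter_not (s := ({k | g (σ k) < y} : Finset (Fin m)))
    (fun k => f k < y)
  simp only [filter_filter, not_lt] at h1 h2
  have e1 : #{k | f k < y ∧ g (σ k) < y} = #{k | g (σ k) < y ∧ f k < y} := by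
    simp only [and_comm]
  have e2 : #{k | g (σ k) < y ∧ y ≤ f k} = #{k | y ≤ f k ∧ g (σ k) < y} := by
    simp only [and_comm]
  omega

theorem Matrix.det_eq_sign_smul_prod_of_forall_ne {R : Type*} [CommRing R] {m : ℕ}
    (M : Matrix (Fin m) (Fin m) R) (σ₀ : Equiv.Perm (Fin m))
    (h : ∀ σ ≠ σ₀, ∃ i, M i (σ i) = 0) :
    M.det = Equiv.Perm.sign σ₀ • ∏ i, M i (σ₀ i) := by
  rw [← det_transpose, det_apply]
  simp only [transpose_apply]
  refine sum_eq_single σ₀ (fun σ _ hσ => ?_) (by simp)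
  obtain ⟨i, hi⟩ := h σ hσ
  rw [prod_eq_zero (mem_univ i) hi, smul_zero]

theorem Matrix.det_eq_zero_of_forall_exists {R : Type*} [CommRing R] {m : ℕ}
    (M : Matrix (Fin m) (Fin m) R) (h : ∀ σ : Equiv.Perm (Fin m), ∃ i, M i (σ i) = 0) :
    M.det = 0 := by
  rw [← det_transpose, det_apply]
  simp only [transpose_apply]
  refine sum_eq_zero fun σ _ => ?_
  obtain ⟨i, hi⟩ := h σ
  rw [prod_eq_zero (mem_univ i) hi, smul_zero]

theorem eq_finRotate_of_strictMono {q : ℕ} (σ : Equiv.Perm (Fin (q + 1)))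
    (hlast : σ (Fin.last q) = 0) (hmono : StrictMono fun i : Fin q => σ i.castSucc) :
    σ = finRotate (q + 1) := by
  have hne : ∀ i : Fin q, σ i.castSucc ≠ 0 := fun i h =>
    (Fin.castSucc_lt_last i).ne (σ.injective (h.trans hlast.symm))
  have hτ : StrictMono fun i => (σ i.castSucc).pred (hne i) := fun i j h =>
    Fin.pred_lt_pred_iff.2 (hmono h)
  ext k
  induction k using Fin.lastCases with
  | last => simp [hlast]
  | cast i =>
    have := congrArg Fin.val (hτ.apply_eq (x := i))
    have h0 : (σ i.castSucc : ℕ) ≠ 0 := Fin.val_ne_zero_iff.2 (hne i)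
    rw [coe_finRotate_of_ne_last (Fin.castSucc_lt_last i).ne]
    simp only [Fin.val_pred, Fin.val_castSucc] at this ⊢
    omega

theorem sign_finRotate_smul_neg_one_pow_mul {R : Type*} [CommRing R] (q : ℕ) (x : R) :
    Equiv.Perm.sign (finRotate (q + 1)) • ((-1) ^ (q + 1) * x) = -x := by
  rw [sign_finRotate, Nat.add_sub_cancel, Units.smul_def, Units.val_pow_eq_pow_val, Units.val_neg,
    Units.val_one, zsmul_eq_mul]
  push_cast
  rw [← mul_assoc, ← pow_add, Odd.neg_one_pow ⟨q, by ring⟩, neg_one_mul]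

def Interleaved {p : ℕ} (iE jE : Fin p → ℕ) : Prop :=
  (∀ a, iE a < jE a) ∧ ∀ a b : Fin p, (a : ℕ) + 1 = b → jE a < iE b

def Alternating (I J : Finset ℕ) : Prop :=
  (∀ i ∈ I, count (· ∈ I) i = count (· ∈ J) i) ∧ ∀ j ∈ J, count (· ∈ I) j = count (· ∈ J) j + 1

def Interlaced (I J : Finset ℕ) : Prop :=
  ∀ z, count (· ∈ J) z ≤ count (· ∈ I) z ∧ count (· ∈ I) z ≤ count (· ∈ J) z + 1

section Interleaved

variable {p : ℕ} {I J : Finset ℕ} {iE jE : Fin p → ℕ}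

theorem sub_one_notMem {n : ℕ} (hiEr : ∀ x, x ∈ Set.range iE ↔ x ∈ I)
    (hjEr : ∀ x, x ∈ Set.range jE ↔ x ∈ J) (h : ∀ a, iE a < jE a) (hJ : J ⊆ Icc 1 (n - 1)) :
    n - 1 ∉ I := fun hx => by
  obtain ⟨a, ha⟩ := (hiEr _).2 hx
  have := mem_Icc.1 (hJ ((hjEr _).1 ⟨a, rfl⟩))
  have := h a
  omega

theorem one_notMem {n : ℕ} (hiEr : ∀ x, x ∈ Set.range iE ↔ x ∈ I)
    (hjEr : ∀ x, x ∈ Set.range jE ↔ x ∈ J) (h : ∀ a, iE a < jE a) (hI : I ⊆ Icc 1 (n - 1)) :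
    1 ∉ J := fun hx => by
  obtain ⟨a, ha⟩ := (hjEr _).2 hx
  have := mem_Icc.1 (hI ((hiEr _).1 ⟨a, rfl⟩))
  have := h a
  omega

variable (hiE : StrictMono iE) (hiEr : ∀ x, x ∈ Set.range iE ↔ x ∈ I) (hjE : StrictMono jE)
  (hjEr : ∀ x, x ∈ Set.range jE ↔ x ∈ J)
include hiE hiEr hjE hjEr

theorem interlaced_of_interleaved (h : Interleaved iE jE) : Interlaced I J := by
  intro z
  rw [← card_filter_lt_eq_count hiE.injective hiEr, ← card_filter_lt_eq_count hjE.injective hjEr]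
  refine ⟨card_le_card fun t ht => ?_, ?_⟩
  · simp only [mem_filter, mem_univ, true_and] at ht ⊢
    exact (h.1 t).trans ht
  · by_contra! hN
    set N := #{t | iE t < z}
    have hNp : N ≤ p := card_le_univ _ |>.trans_eq (Fintype.card_fin p)
    have h₁ := (hiE.lt_card_filter_lt_iff ⟨N - 1, by omega⟩ z).1 (by simp only; omega)
    have h₀ := h.2 ⟨N - 2, by omega⟩ ⟨N - 1, by omega⟩ (by simp only; omega)
    have := (hjE.lt_card_filter_lt_iff _ z).2 (h₀.trans h₁)
    simp only at this
    omega

theorem interleaved_of_alternating (hIJ : Disjoint I J) (h : Alternating I J) :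
    Interleaved iE jE := by
  have hcount : ∀ a, count (· ∈ I) (jE a) = a + 1 := fun a => by
    rw [h.2 _ ((hjEr _).1 ⟨a, rfl⟩), ← card_filter_lt_eq_count hjE.injective hjEr,
      hjE.card_filter_lt_apply]
  have hlt : ∀ a b, iE b < jE a ↔ (b : ℕ) < a + 1 := fun a b => by
    rw [← hiE.lt_card_filter_lt_iff, card_filter_lt_eq_count hiE.injective hiEr, hcount]
  refine ⟨fun a => (hlt a a).2 (Nat.lt_succ_self _), fun a b hab => ?_⟩
  have hne : jE a ≠ iE b := fun e =>
    disjoint_left.1 hIJ ((hiEr _).1 ⟨b, rfl⟩) (e ▸ (hjEr _).1 ⟨a, rfl⟩)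
  have := (hlt a b).not.2 (by omega)
  omega

theorem count_eq_zero_of_lt (hp : 0 < p) (h : iE ⟨0, hp⟩ < jE ⟨0, hp⟩) :
    count (· ∈ I) (iE ⟨0, hp⟩) = 0 ∧ count (· ∈ J) (iE ⟨0, hp⟩) = 0 := by
  rw [← card_filter_lt_eq_count hiE.injective hiEr, hiE.card_filter_lt_apply,
    ← card_filter_lt_eq_count hjE.injective hjEr]
  refine ⟨rfl, Finset.card_eq_zero.2 (filter_eq_empty_iff.2 fun t _ ht => ?_)⟩
  have := hjE.monotone (show ⟨0, hp⟩ ≤ t from Nat.zero_le _)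
  omega

end Interleaved

def CycAdj (n r c : ℕ) : Prop :=
  c = r ∨ c = r + 1 ∨ r = c + 1 ∨ (r = n - 1 ∧ c = 0) ∨ (r = 0 ∧ c = n - 1)

theorem LW_eq_zero_of_not_cycAdj {n : ℕ} {i j : Fin n} (h : ¬ CycAdj n i j) :
    LW n i j = 0 := by
  unfold CycAdj at h
  have hij : i ≠ j := fun e => h (Or.inl (by rw [e]))
  simp only [LW, Matrix.of_apply, hij, if_false]
  rw [if_neg (by omega), if_neg (by omega), if_neg (by omega)]

theorem LW_apply_of_eq_add_one {n : ℕ} {i j : Fin n} (h : (j : ℕ) = i + 1) :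
    LW n i j = -xv n (n + j - 1) := by
  have hij : i ≠ j := fun e => by rw [e] at h; omega
  simp only [LW, Matrix.of_apply, hij, if_false, h, if_true]
  rw [show n + ((i : ℕ) + 1) - 1 = n + i by omega]

theorem LW_apply_of_add_one_eq {n : ℕ} {i j : Fin n} (h : (i : ℕ) = j + 1) :
    LW n i j = -xv n (n + i - 1) := by
  have hij : i ≠ j := fun e => by rw [e] at h; omega
  simp only [LW, Matrix.of_apply, hij, if_false, h, if_true]
  rw [if_neg (by omega), show n + ((j : ℕ) + 1) - 1 = n + j by omega]

theorem LW_apply_last_zero {n : ℕ} (hn : 3 ≤ n) {i j : Fin n} (hi : (i : ℕ) = n - 1)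
    (hj : (j : ℕ) = 0) : LW n i j = -xv n (n + n - 1) := by
  have hij : i ≠ j := fun e => by rw [e] at hi; omega
  simp only [LW, Matrix.of_apply, hij, if_false]
  rw [if_neg (by omega), if_neg (by omega), if_pos (Or.inr ⟨hj, hi⟩)]
  congr 2; omega

/-- Matching rows at positions `f` to columns at positions `g ∘ σ` along the cycle, the pairs
crossing the cut between `y - 1` and `y` are `(y, y - 1)`, `(n - 1, 0)` downwards and
`(y - 1, y)`, `(0, n - 1)` upwards. -/
theorem card_cut_cycAdj {n m : ℕ} (hn : 3 ≤ n) (f g : Fin m → ℕ) (σ : Equiv.Perm (Fin m))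
    (hadj : ∀ k, CycAdj n (f k) (g (σ k))) {y : ℕ} (hy : 1 ≤ y) (hyn : y ≤ n - 1) :
    #{k | f k < y} + #{k | f k = y ∧ g (σ k) + 1 = y} + #{k | f k = n - 1 ∧ g (σ k) = 0}
      = #{k | g k < y} + #{k | f k + 1 = y ∧ g (σ k) = y}
        + #{k | f k = 0 ∧ g (σ k) = n - 1} := by
  have hdown : #{k | y ≤ f k ∧ g (σ k) < y}
      = #{k | f k = y ∧ g (σ k) + 1 = y} + #{k | f k = n - 1 ∧ g (σ k) = 0} := by
    rw [← card_union_of_disjoint (disjoint_filter.2 fun k _ h h' => by omega), ← filter_or]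
    congr 1
    ext k
    have := hadj k
    unfold CycAdj at this
    simp only [mem_filter, mem_univ, true_and]
    omega
  have hup : #{k | f k < y ∧ y ≤ g (σ k)}
      = #{k | f k + 1 = y ∧ g (σ k) = y} + #{k | f k = 0 ∧ g (σ k) = n - 1} := by
    rw [← card_union_of_disjoint (disjoint_filter.2 fun k _ h h' => by omega), ← filter_or]
    congr 1
    ext k
    have := hadj k
    unfold CycAdj at this
    simp only [mem_filter, mem_univ, true_and]
    omega
  have := card_filter_lt_add_card_filter_cross f g σ y
  omega

structure PairDeletion (n m : ℕ) where
  I : Finset ℕ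
  J : Finset ℕ
  row : Fin m → Fin n
  col : Fin m → Fin n
  three_le : 3 ≤ n
  I_subset : I ⊆ Icc 1 (n - 1)
  J_subset : J ⊆ Icc 1 (n - 1)
  disjoint : Disjoint I J
  I_succ : ∀ x ∈ I, x + 1 ∉ I
  J_succ : ∀ y ∈ J, y + 1 ∉ J
  row_strictMono : StrictMono row
  mem_range_row : ∀ r : Fin n, r ∈ Set.range row ↔ ((r : ℕ) + 1 ∉ I ∧ (r : ℕ) ∉ I)
  col_strictMono : StrictMono col
  mem_range_col : ∀ r : Fin n, r ∈ Set.range col ↔ ((r : ℕ) + 1 ∉ J ∧ (r : ℕ) ∉ J)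

namespace PairDeletion

variable {n m : ℕ} (D : PairDeletion n m)

def Supported (σ : Equiv.Perm (Fin m)) : Prop :=
  ∀ k, CycAdj n (D.row k) (D.col (σ k))

theorem row_val_strictMono : StrictMono fun k => (D.row k : ℕ) :=
  fun _ _ h => D.row_strictMono h

theorem col_val_strictMono : StrictMono fun k => (D.col k : ℕ) :=
  fun _ _ h => D.col_strictMono h

theorem row_kept (k : Fin m) : (D.row k : ℕ) + 1 ∉ D.I ∧ (D.row k : ℕ) ∉ D.I :=
  (D.mem_range_row _).1 ⟨k, rfl⟩

theorem col_kept (k : Fin m) : (D.col k : ℕ) + 1 ∉ D.J ∧ (D.col k : ℕ) ∉ D.J :=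
  (D.mem_range_col _).1 ⟨k, rfl⟩

theorem mem_bounds {x : ℕ} (hx : x ∈ D.I ∪ D.J) : 1 ≤ x ∧ x ≤ n - 1 := by
  rcases mem_union.1 hx with h | h
  · exact mem_Icc.1 (D.I_subset h)
  · exact mem_Icc.1 (D.J_subset h)

theorem card_rows_below {y : ℕ} (hy : y ≤ n) :
    #{k | (D.row k : ℕ) < y} + count (· ∈ D.I) y + count (· ∈ D.I) (y + 1) = y :=
  card_filter_val_lt_add_count_add_count
    (fun h => by simpa using (mem_Icc.1 (D.I_subset h)).1) D.I_succ
    D.row_strictMono.injective D.mem_range_row hy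

theorem card_cols_below {y : ℕ} (hy : y ≤ n) :
    #{k | (D.col k : ℕ) < y} + count (· ∈ D.J) y + count (· ∈ D.J) (y + 1) = y :=
  card_filter_val_lt_add_count_add_count
    (fun h => by simpa using (mem_Icc.1 (D.J_subset h)).1) D.J_succ
    D.col_strictMono.injective D.mem_range_col hy

section Supported

variable {σ : Equiv.Perm (Fin m)} (hσ : D.Supported σ)
include hσ

theorem count_balance {y : ℕ} (hy : 1 ≤ y) (hyn : y ≤ n - 1)
    (hcross : #{k | (D.row k : ℕ) = y ∧ (D.col (σ k) : ℕ) + 1 = y}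
      = #{k | (D.row k : ℕ) + 1 = y ∧ (D.col (σ k) : ℕ) = y}) :
    count (· ∈ D.J) y + count (· ∈ D.J) (y + 1)
        + #{k | (D.row k : ℕ) = n - 1 ∧ (D.col (σ k) : ℕ) = 0}
      = count (· ∈ D.I) y + count (· ∈ D.I) (y + 1)
        + #{k | (D.row k : ℕ) = 0 ∧ (D.col (σ k) : ℕ) = n - 1} := by
  have := card_cut_cycAdj D.three_le (fun k => (D.row k : ℕ)) (fun k => (D.col k : ℕ)) σ hσ
    hy hyn
  have := D.card_rows_below (y := y) (by omega)
  have := D.card_cols_below (y := y) (by omega)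
  omega

theorem count_balance_of_mem {y : ℕ} (hy : y ∈ D.I ∪ D.J) :
    count (· ∈ D.J) y + count (· ∈ D.J) (y + 1)
        + #{k | (D.row k : ℕ) = n - 1 ∧ (D.col (σ k) : ℕ) = 0}
      = count (· ∈ D.I) y + count (· ∈ D.I) (y + 1)
        + #{k | (D.row k : ℕ) = 0 ∧ (D.col (σ k) : ℕ) = n - 1} := by
  obtain ⟨hy1, hyn⟩ := D.mem_bounds hy
  have hdown : #{k | (D.row k : ℕ) = y ∧ (D.col (σ k) : ℕ) + 1 = y} = 0 := by
    rw [Finset.card_eq_zero, filter_eq_empty_iff]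
    rintro k - ⟨h, h'⟩
    rcases mem_union.1 hy with hy | hy
    · exact (D.row_kept k).2 (h ▸ hy)
    · exact (D.col_kept (σ k)).1 (h' ▸ hy)
  have hup : #{k | (D.row k : ℕ) + 1 = y ∧ (D.col (σ k) : ℕ) = y} = 0 := by
    rw [Finset.card_eq_zero, filter_eq_empty_iff]
    rintro k - ⟨h, h'⟩
    rcases mem_union.1 hy with hy | hy
    · exact (D.row_kept k).1 (h ▸ hy)
    · exact (D.col_kept (σ k)).2 (h' ▸ hy)
  exact D.count_balance hσ hy1 hyn (hdown.trans hup.symm)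

/-- The balance at `y ∈ I` reads `2 count J y + W = 2 count I y + 1 + W'` for the two wrap-around
counts `W, W' ≤ 1`; at `y = i₁` it gives `W = 1, W' = 0`. -/
theorem wrap_and_alternating {i₀ : ℕ} (hi₀ : i₀ ∈ D.I) (hI₀ : count (· ∈ D.I) i₀ = 0)
    (hJ₀ : count (· ∈ D.J) i₀ = 0) :
    #{k | (D.row k : ℕ) = n - 1 ∧ (D.col (σ k) : ℕ) = 0} = 1 ∧
      #{k | (D.row k : ℕ) = 0 ∧ (D.col (σ k) : ℕ) = n - 1} = 0 ∧ Alternating D.I D.J := by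
  have hW₁ := card_filter_apply_eq_and_le_one D.row_val_strictMono.injective (n - 1)
    fun k => (D.col (σ k) : ℕ) = 0
  have hW₂ := card_filter_apply_eq_and_le_one D.row_val_strictMono.injective 0
    fun k => (D.col (σ k) : ℕ) = n - 1
  have succ_I : ∀ i ∈ D.I, count (· ∈ D.I) (i + 1) = count (· ∈ D.I) i + 1 ∧
      count (· ∈ D.J) (i + 1) = count (· ∈ D.J) i := fun i hi =>
    ⟨count_succ_eq_succ_count_iff.2 hi, count_succ_eq_count_iff.2 (disjoint_left.1 D.disjoint hi)⟩
  have succ_J : ∀ j ∈ D.J, count (· ∈ D.I) (j + 1) = count (· ∈ D.I) j ∧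
      count (· ∈ D.J) (j + 1) = count (· ∈ D.J) j + 1 := fun j hj =>
    ⟨count_succ_eq_count_iff.2 (disjoint_right.1 D.disjoint hj), count_succ_eq_succ_count_iff.2 hj⟩
  have h₀ := D.count_balance_of_mem hσ (mem_union_left _ hi₀)
  have := succ_I i₀ hi₀
  refine ⟨by omega, by omega, fun i hi => ?_, fun j hj => ?_⟩
  · have := D.count_balance_of_mem hσ (mem_union_left _ hi)
    have := succ_I i hi
    omega
  · have := D.count_balance_of_mem hσ (mem_union_right _ hj)
    have := succ_J j hj
    omega

variable (hW₁ : #{k | (D.row k : ℕ) = n - 1 ∧ (D.col (σ k) : ℕ) = 0} = 1)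
  (hW₂ : #{k | (D.row k : ℕ) = 0 ∧ (D.col (σ k) : ℕ) = n - 1} = 0)
include hW₁ hW₂

/-- Two crossing pairs at the cut `y` would make `count I y + count J y` odd at a position `y`
lying in neither `I` nor `J`. -/
theorem not_crossing (k k' : Fin m) :
    ¬ ((D.row k : ℕ) + 1 = D.row k' ∧ (D.col (σ k) : ℕ) = D.row k' ∧
      (D.col (σ k') : ℕ) + 1 = D.row k') := by
  rintro ⟨hk, hck, hck'⟩
  have hinj := D.row_val_strictMono.injective
  have hdown := card_filter_apply_eq_and_le_one hinj (D.row k')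
    fun k => (D.col (σ k) : ℕ) + 1 = D.row k'
  have hup := card_filter_apply_eq_and_le_one (f := fun k => (D.row k : ℕ) + 1)
    ((add_left_injective 1).comp hinj) (D.row k') fun k => (D.col (σ k) : ℕ) = D.row k'
  have hdown' : 0 < #{k | (D.row k : ℕ) = D.row k' ∧ (D.col (σ k) : ℕ) + 1 = D.row k'} :=
    card_pos.2 ⟨k', by simp [hck']⟩
  have hup' : 0 < #{k | (D.row k : ℕ) + 1 = D.row k' ∧ (D.col (σ k) : ℕ) = D.row k'} :=
    card_pos.2 ⟨k, by simp [hk, hck]⟩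
  have := D.count_balance hσ (y := D.row k') (by omega)
    (by have := (D.row k').isLt; omega) (by omega)
  have hI := count_succ_eq_count_iff (p := (· ∈ D.I)).2 (D.row_kept k').2
  have hJ := count_succ_eq_count_iff (p := (· ∈ D.J)).2 (hck ▸ (D.col_kept (σ k)).2)
  omega

end Supported

theorem eq_finRotate_of_supported {q : ℕ} (D : PairDeletion n (q + 1))
    {σ : Equiv.Perm (Fin (q + 1))} (hσ : D.Supported σ)
    (hW₁ : #{k | (D.row k : ℕ) = n - 1 ∧ (D.col (σ k) : ℕ) = 0} = 1)
    (hW₂ : #{k | (D.row k : ℕ) = 0 ∧ (D.col (σ k) : ℕ) = n - 1} = 0) :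
    σ = finRotate (q + 1) := by
  obtain ⟨k₀, hk₀⟩ := card_pos.1 (hW₁ ▸ Nat.one_pos)
  simp only [mem_filter, mem_univ, true_and] at hk₀
  have hno : ∀ k, ¬ ((D.row k : ℕ) = 0 ∧ (D.col (σ k) : ℕ) = n - 1) := fun k =>
    filter_eq_empty_iff.1 (Finset.card_eq_zero.1 hW₂) (mem_univ k)
  have hlast : k₀ = Fin.last q := by
    have : (D.row k₀ : ℕ) ≤ D.row (Fin.last q) := D.row_val_strictMono.monotone (Fin.le_last k₀)
    have := (D.row (Fin.last q)).isLt
    exact D.row_strictMono.injective (Fin.ext (by omega))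
  subst hlast
  refine eq_finRotate_of_strictMono σ ?_ fun i j hij => ?_
  · have : (D.col 0 : ℕ) ≤ D.col (σ (Fin.last q)) := D.col_val_strictMono.monotone (Fin.zero_le _)
    exact D.col_strictMono.injective (Fin.ext (by omega))
  · have hrow : (D.row i.castSucc : ℕ) < D.row j.castSucc :=
      D.row_val_strictMono (Fin.castSucc_lt_castSucc_iff.2 hij)
    have hrow' : (D.row j.castSucc : ℕ) < D.row (Fin.last q) :=
      D.row_val_strictMono (Fin.castSucc_lt_last j)
    have hcol : (D.col (σ i.castSucc) : ℕ) ≠ D.col (σ j.castSucc) := fun h =>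
      hij.ne (Fin.castSucc_injective _ (σ.injective (D.col_val_strictMono.injective h)))
    have hcross := D.not_crossing hσ hW₁ hW₂ i.castSucc j.castSucc
    have hi := hσ i.castSucc
    have hj := hσ j.castSucc
    have := hno i.castSucc
    have := hno j.castSucc
    unfold CycAdj at hi hj
    exact D.col_val_strictMono.lt_iff_lt.1 (by simp only; omega)

-- Below `y = row k` the kept columns outnumber the kept rows by `count I - count J` summed
-- over two consecutive positions, each term being `0` or `1`; comparing these counts at
-- `y - 1, …, y + 2` leaves only `y + 1` or `y - 1` for the next kept column.
theorem col_succ (hD : Interlaced D.I D.J) {k k' : Fin m} (hk : (k' : ℕ) = k + 1) :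
    (D.col k' : ℕ) = D.row k + 1 ∨ (D.col k' : ℕ) + 1 = D.row k := by
  obtain ⟨y, hy⟩ : ∃ y, (D.row k : ℕ) = y := ⟨_, rfl⟩
  have hyn : y + 2 ≤ n := by
    have : (D.row k : ℕ) < D.row k' := D.row_val_strictMono (by rw [Fin.lt_def]; omega)
    have := (D.row k').isLt
    omega
  have hρ₀ : #{s | (D.row s : ℕ) < y} = k := hy ▸ D.row_val_strictMono.card_filter_lt_apply k
  have hρ₁ : #{s | (D.row s : ℕ) < y + 1} = k + 1 :=
    hy ▸ D.row_val_strictMono.card_filter_lt_apply_add_one k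
  have hcol := fun z => D.col_val_strictMono.lt_card_filter_lt_iff k' z
  simp only [hk] at hcol
  have hI₀ := count_succ_eq_count_iff (p := (· ∈ D.I)).2 (hy ▸ (D.row_kept k).2)
  have hI₁ := count_succ_eq_count_iff (p := (· ∈ D.I)).2 (hy ▸ (D.row_kept k).1)
  have hr₀ := D.card_rows_below (y := y) (by omega)
  have hr₁ := D.card_rows_below (y := y + 1) (by omega)
  have hc₀ := D.card_cols_below (y := y) (by omega)
  have hc₁ := D.card_cols_below (y := y + 1) (by omega)
  have hc₂ := D.card_cols_below (y := y + 2) (by omega)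
  have hD₀ := hD y; have hD₁ := hD (y + 1); have hD₂ := hD (y + 2); have hD₃ := hD (y + 3)
  have hs₀ := count_succ_bounds_of_disjoint D.disjoint y
  have hs₁ := count_succ_bounds_of_disjoint D.disjoint (y + 1)
  have hs₂ := count_succ_bounds_of_disjoint D.disjoint (y + 2)
  simp only [show y + 1 + 1 = y + 2 from rfl, show y + 2 + 1 = y + 3 from rfl] at *
  by_cases hcase : count (· ∈ D.J) (y + 1) = count (· ∈ D.I) y ∧
      count (· ∈ D.J) (y + 2) = count (· ∈ D.I) y
  · have := hcol (y + 1); have := hcol (y + 2)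
    omega
  · obtain ⟨z, hz⟩ : ∃ z, z + 1 = y := by
      have := count_le (p := (· ∈ D.I)) (n := y)
      exact ⟨y - 1, by omega⟩
    have := hcol y; have := hcol z; have := hD z
    have hcz := D.card_cols_below (y := z) (by omega)
    have hsz := count_succ_bounds_of_disjoint D.disjoint z
    rw [hz] at hcz hsz
    omega

section Rotation

variable {q : ℕ} (D : PairDeletion n (q + 1))

theorem row_last (h : n - 1 ∉ D.I) : (D.row (Fin.last q) : ℕ) = n - 1 := by
  have hn := D.three_le
  have hnI : n - 1 + 1 ∉ D.I := fun h' => by have := mem_Icc.1 (D.I_subset h'); omega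
  obtain ⟨k, hk⟩ := (D.mem_range_row ⟨n - 1, by omega⟩).2 ⟨hnI, h⟩
  have hle : (D.row k : ℕ) ≤ D.row (Fin.last q) := D.row_val_strictMono.monotone (Fin.le_last k)
  have := (D.row (Fin.last q)).isLt
  rw [hk, Fin.val_mk] at hle
  omega

theorem col_zero (h : 1 ∉ D.J) : (D.col 0 : ℕ) = 0 := by
  have h0J : 0 ∉ D.J := fun h' => by have := mem_Icc.1 (D.J_subset h'); omega
  obtain ⟨k, hk⟩ := (D.mem_range_col ⟨0, by have := D.three_le; omega⟩).2 ⟨h, h0J⟩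
  have hle : (D.col 0 : ℕ) ≤ D.col k := D.col_val_strictMono.monotone (Fin.zero_le k)
  rw [hk] at hle
  simp only at hle
  omega

/-- The `1`-based index of the rim edge joining the `k`-th kept row to the column that
`finRotate` assigns to it. -/
def rotationEdge (k : Fin (q + 1)) : ℕ :=
  if k = Fin.last q then n else max (D.row k : ℕ) (D.col (finRotate (q + 1) k))

theorem col_finRotate (hD : Interlaced D.I D.J) {k : Fin (q + 1)} (hk : k ≠ Fin.last q) :
    (D.col (finRotate (q + 1) k) : ℕ) = D.row k + 1 ∨
      (D.col (finRotate (q + 1) k) : ℕ) + 1 = D.row k :=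
  D.col_succ hD (coe_finRotate_of_ne_last hk)

theorem LW_row_col_finRotate (hD : Interlaced D.I D.J) (hI : n - 1 ∉ D.I) (hJ : 1 ∉ D.J)
    (k : Fin (q + 1)) :
    LW n (D.row k) (D.col (finRotate (q + 1) k)) = -xv n (n + D.rotationEdge k - 1) := by
  unfold rotationEdge
  split_ifs with hk
  · subst hk
    exact LW_apply_last_zero D.three_le (D.row_last hI)
      (by rw [finRotate_last]; exact D.col_zero hJ)
  · rcases D.col_finRotate hD hk with h | h
    · rw [LW_apply_of_eq_add_one h, max_eq_right (by omega)]
    · rw [LW_apply_of_add_one_eq h.symm, max_eq_left (by omega)]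

theorem rotationEdge_mem (hD : Interlaced D.I D.J) (k : Fin (q + 1)) :
    D.rotationEdge k ∈ Icc 1 n \ (D.I ∪ D.J) := by
  have hn := D.three_le
  have hbounds := fun x (hx : x ∈ D.I ∪ D.J) => D.mem_bounds hx
  unfold rotationEdge
  split_ifs with hk
  · exact mem_sdiff.2 ⟨mem_Icc.2 ⟨by omega, le_rfl⟩, fun h => by have := hbounds n h; omega⟩
  · have hrow := D.row_kept k
    have hcol := D.col_kept (finRotate (q + 1) k)
    have := (D.row k).isLt; have := (D.col (finRotate (q + 1) k)).isLt
    rcases D.col_finRotate hD hk with h | h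
    · rw [max_eq_right (by omega), mem_sdiff, mem_union, mem_Icc, h]
      refine ⟨⟨by omega, by omega⟩, ?_⟩
      rintro (h' | h')
      · exact hrow.1 h'
      · exact hcol.2 (h ▸ h')
    · rw [max_eq_left (by omega), mem_sdiff, mem_union, mem_Icc, ← h]
      refine ⟨⟨by omega, by omega⟩, ?_⟩
      rintro (h' | h')
      · exact hrow.2 (h ▸ h')
      · exact hcol.1 h'

theorem rotationEdge_strictMono (hD : Interlaced D.I D.J) : StrictMono D.rotationEdge := by
  intro a b hab
  have hb := D.rotationEdge_mem hD b
  have ha := D.rotationEdge_mem hD a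
  have ha' : a ≠ Fin.last q := (hab.trans_le (Fin.le_last b)).ne
  unfold rotationEdge at *
  rw [if_neg ha'] at *
  split_ifs at * with hb'
  · have := (D.row a).isLt; have := (D.col (finRotate (q + 1) a)).isLt
    omega
  · have hrow := D.row_val_strictMono hab
    have hcol : (D.col (finRotate (q + 1) a) : ℕ) < D.col (finRotate (q + 1) b) := by
      refine D.col_val_strictMono (Fin.lt_def.2 ?_)
      rw [coe_finRotate_of_ne_last ha', coe_finRotate_of_ne_last hb']
      exact Nat.succ_lt_succ hab
    have := D.col_finRotate hD ha'; have := D.col_finRotate hD hb'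
    simp only at hrow hcol
    omega

theorem prod_LW_row_col_finRotate (hD : Interlaced D.I D.J) (hI : n - 1 ∉ D.I)
    (hJ : 1 ∉ D.J) (hcard : q + 1 = #(Icc 1 n \ (D.I ∪ D.J))) :
    ∏ k, LW n (D.row k) (D.col (finRotate (q + 1) k))
      = (-1) ^ (q + 1) * ∏ r ∈ Icc 1 n \ (D.I ∪ D.J), xv n (n + r - 1) := by
  have hinj := (D.rotationEdge_strictMono hD).injective
  have himage : univ.image D.rotationEdge = Icc 1 n \ (D.I ∪ D.J) :=
    eq_of_subset_of_card_le (image_subset_iff.2 fun k _ => D.rotationEdge_mem hD k)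
      (by rw [card_image_of_injective _ hinj, Finset.card_univ, Fintype.card_fin]; exact hcard.ge)
  rw [prod_congr rfl fun k _ => D.LW_row_col_finRotate hD hI hJ k, prod_neg, Finset.card_univ,
    Fintype.card_fin, ← himage, prod_image fun a _ b _ h => hinj h]

end Rotation

theorem supported_of_forall_ne_zero {σ : Equiv.Perm (Fin m)}
    (h : ∀ i, (LW n).submatrix D.row D.col i (σ i) ≠ 0) : D.Supported σ :=
  fun k => by_contra fun hk => h k (LW_eq_zero_of_not_cycAdj hk)

section Determinant

variable {p : ℕ} {iE jE : Fin p → ℕ} (hiE : StrictMono iE)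
  (hiEr : ∀ x, x ∈ Set.range iE ↔ x ∈ D.I) (hjE : StrictMono jE)
  (hjEr : ∀ x, x ∈ Set.range jE ↔ x ∈ D.J) (hp : 0 < p)
include hiE hiEr hjE hjEr hp

theorem det_eq_neg_prod_of_interleaved (hm : m = #(Icc 1 n \ (D.I ∪ D.J)))
    (h : Interleaved iE jE) :
    ((LW n).submatrix D.row D.col).det = -∏ r ∈ Icc 1 n \ (D.I ∪ D.J), xv n (n + r - 1) := by
  obtain ⟨q, rfl⟩ : ∃ q, m = q + 1 := by
    have : 0 < #(Icc 1 n \ (D.I ∪ D.J)) := card_pos.2 ⟨n, mem_sdiff.2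
      ⟨mem_Icc.2 ⟨by have := D.three_le; omega, le_rfl⟩,
        fun hn => by have := D.mem_bounds hn; have := D.three_le; omega⟩⟩
    exact ⟨m - 1, by omega⟩
  obtain ⟨hI₀, hJ₀⟩ := count_eq_zero_of_lt hiE hiEr hjE hjEr hp (h.1 _)
  rw [Matrix.det_eq_sign_smul_prod_of_forall_ne _ (finRotate (q + 1)) fun σ hσ => ?_]
  · simp only [Matrix.submatrix_apply]
    rw [D.prod_LW_row_col_finRotate (interlaced_of_interleaved hiE hiEr hjE hjEr h)
      (sub_one_notMem hiEr hjEr h.1 D.J_subset) (one_notMem hiEr hjEr h.1 D.I_subset) hm,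
      sign_finRotate_smul_neg_one_pow_mul]
  · by_contra! hall
    have hσ' := D.supported_of_forall_ne_zero hall
    obtain ⟨hW₁, hW₂, -⟩ := D.wrap_and_alternating hσ' ((hiEr _).1 ⟨_, rfl⟩) hI₀ hJ₀
    exact hσ (D.eq_finRotate_of_supported hσ' hW₁ hW₂)

theorem det_eq_zero_of_not_interleaved (hij : iE ⟨0, hp⟩ < jE ⟨0, hp⟩)
    (h : ¬ Interleaved iE jE) : ((LW n).submatrix D.row D.col).det = 0 := by
  obtain ⟨hI₀, hJ₀⟩ := count_eq_zero_of_lt hiE hiEr hjE hjEr hp hij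
  refine Matrix.det_eq_zero_of_forall_exists _ fun σ => ?_
  by_contra! hall
  exact h (interleaved_of_alternating hiE hiEr hjE hjEr D.disjoint
    (D.wrap_and_alternating (D.supported_of_forall_ne_zero hall) ((hiEr _).1 ⟨_, rfl⟩) hI₀ hJ₀).2.2)

end Determinant

end PairDeletion

theorem stmt_13_general (n p : ℕ) (hn : 3 ≤ n) (hp : 1 ≤ p)
    (I J : Finset ℕ)
    (hIsub : I ⊆ Finset.Icc 1 (n - 1)) (hJsub : J ⊆ Finset.Icc 1 (n - 1))
    (hIJ : Disjoint I J)
    (hIcard : I.card = p) (hJcard : J.card = p)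
    (hIcons : ∀ x ∈ I, x + 1 ∉ I) (hJcons : ∀ y ∈ J, y + 1 ∉ J)
    (iE jE : Fin p → ℕ)
    (hiE : StrictMono iE) (hiEr : ∀ x, x ∈ Set.range iE ↔ x ∈ I)
    (hjE : StrictMono jE) (hjEr : ∀ x, x ∈ Set.range jE ↔ x ∈ J)
    (hij : iE ⟨0, hp⟩ < jE ⟨0, hp⟩)
    (Rk Ck : Fin (n - 2 * p) → Fin n)
    (hRk : StrictMono Rk)
    (hRkr : ∀ r : Fin n, r ∈ Set.range Rk ↔ ((r : ℕ) + 1 ∉ I ∧ (r : ℕ) ∉ I))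
    (hCk : StrictMono Ck)
    (hCkr : ∀ r : Fin n, r ∈ Set.range Ck ↔ ((r : ℕ) + 1 ∉ J ∧ (r : ℕ) ∉ J)) :
    (((∀ a : Fin p, iE a < jE a) ∧ (∀ a b : Fin p, (a : ℕ) + 1 = (b : ℕ) → jE a < iE b)) →
        ((LW n).submatrix Rk Ck).det
          = -∏ r ∈ (Finset.Icc 1 n) \ (I ∪ J), xv n (n + r - 1))
    ∧ (¬ ((∀ a : Fin p, iE a < jE a) ∧ (∀ a b : Fin p, (a : ℕ) + 1 = (b : ℕ) → jE a < iE b)) →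
        ((LW n).submatrix Rk Ck).det = 0) := by
  let D : PairDeletion n (n - 2 * p) :=
    ⟨I, J, Rk, Ck, hn, hIsub, hJsub, hIJ, hIcons, hJcons, hRk, hRkr, hCk, hCkr⟩
  have hm : n - 2 * p = #(Icc 1 n \ (I ∪ J)) := by
    rw [card_sdiff_of_subset (union_subset (hIsub.trans (Icc_subset_Icc_right (by omega)))
      (hJsub.trans (Icc_subset_Icc_right (by omega)))), card_union_of_disjoint hIJ, hIcard, hJcard,
      Nat.card_Icc]
    omega
  exact ⟨D.det_eq_neg_prod_of_interleaved hiE hiEr hjE hjEr hp hm,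
    D.det_eq_zero_of_not_interleaved hiE hiEr hjE hjEr hp hij⟩

/-- Let `I = {i₁ < ⋯ < i_p}`, `J = {j₁ < ⋯ < j_p}` be disjoint non-empty
subsets of `{1,…,n-1}` (1-based), with `i₁ < j₁` and no two consecutive integers within `I`
nor within `J`.  Let `Λ'` be the submatrix of `Λ_{W_n}` obtained by deleting the rows with
(1-based) indices in `{i, i+1 : i ∈ I}` and the columns with indices in `{j, j+1 : j ∈ J}`,
the kept rows and columns being given by the strictly monotone enumerations `Rk`, `Ck`.
If `i₁ < j₁ < i₂ < j₂ < ⋯ < i_p < j_p` then `det Λ' = -∏_{r ∈ {1,…,n}∖(I∪J)} x_{n+r}`;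
otherwise `det Λ' = 0`. -/
theorem stmt_13 (n p : ℕ) (hn : 3 ≤ n) (hp : 1 ≤ p)
    (I J : Finset ℕ)
    (hIsub : I ⊆ Finset.Icc 1 (n - 1)) (hJsub : J ⊆ Finset.Icc 1 (n - 1))
    (hIJ : Disjoint I J) (hIne : I.Nonempty) (hJne : J.Nonempty)
    (hIcard : I.card = p) (hJcard : J.card = p)
    (hIcons : ∀ x ∈ I, x + 1 ∉ I) (hJcons : ∀ y ∈ J, y + 1 ∉ J)
    (iE jE : Fin p → ℕ)
    (hiE : StrictMono iE) (hiEr : ∀ x, x ∈ Set.range iE ↔ x ∈ I)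
    (hjE : StrictMono jE) (hjEr : ∀ x, x ∈ Set.range jE ↔ x ∈ J)
    (hij : iE ⟨0, hp⟩ < jE ⟨0, hp⟩)
    (Rk Ck : Fin (n - 2 * p) → Fin n)
    (hRk : StrictMono Rk)
    (hRkr : ∀ r : Fin n, r ∈ Set.range Rk ↔ ((r : ℕ) + 1 ∉ I ∧ (r : ℕ) ∉ I))
    (hCk : StrictMono Ck)
    (hCkr : ∀ r : Fin n, r ∈ Set.range Ck ↔ ((r : ℕ) + 1 ∉ J ∧ (r : ℕ) ∉ J)) :
    (((∀ a : Fin p, iE a < jE a) ∧ (∀ a b : Fin p, (a : ℕ) + 1 = (b : ℕ) → jE a < iE b)) →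
        ((LW n).submatrix Rk Ck).det
          = -∏ r ∈ (Finset.Icc 1 n) \ (I ∪ J), xv n (n + r - 1))
    ∧ (¬ ((∀ a : Fin p, iE a < jE a) ∧ (∀ a b : Fin p, (a : ℕ) + 1 = (b : ℕ) → jE a < iE b)) →
        ((LW n).submatrix Rk Ck).det = 0) :=
  stmt_13_general n p hn hp I J hIsub hJsub hIJ hIcard hJcard hIcons hJcons iE jE hiE hiEr hjE hjEr
    hij Rk Ck hRk hRkr hCk hCkr
end
end

section
/- For every even integer m ≥ 2 and every integer k ≥ 1: 2^{k−1}·c_{m,k} = Σ_{r=1}^{k} (−1)^{k−r}·binom(2k, k−r)·r^m. -/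
open scoped Classical

noncomputable section

/-- `c_{m,k} = Σ m!/((2p₁)!⋯(2p_k)!)` over all ordered `k`-tuples of positive integers with
`2(p₁+⋯+p_k) = m`. -/
def cmk (m k : ℕ) : ℕ :=
  ∑ p ∈ (Finset.univ : Finset (Fin k → Fin (m + 1))).filter
      (fun p => (∀ i, 1 ≤ (p i : ℕ)) ∧ 2 * (∑ i, (p i : ℕ)) = m),
    m.factorial / ∏ i, (2 * (p i : ℕ)).factorial

open Finset


lemma diffstep (n : ℕ) (x : ℕ → ℤ) :
    ∑ j ∈ range (n+2), (-1:ℤ)^j * ((n+1).choose j) * x j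
      = ∑ j ∈ range (n+1), (-1:ℤ)^j * (n.choose j) * (x j - x (j+1)) := by
  rw [Finset.sum_range_succ' (fun j => (-1:ℤ)^j * ((n+1).choose j) * x j) (n+1)]
  have key : ∀ i, (-1:ℤ)^(i+1) * ((n+1).choose (i+1)) * x (i+1)
      = -((-1:ℤ)^i * (n.choose i) * x (i+1)) + (-1:ℤ)^(i+1) * (n.choose (i+1)) * x (i+1) := by
    intro i
    have : ((n+1).choose (i+1) : ℤ) = n.choose i + n.choose (i+1) := by
      rw [Nat.choose_succ_succ]; push_cast; ring
    rw [this]; ring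
  simp only [key]
  rw [Finset.sum_add_distrib]
  have h2 : ∑ i ∈ range (n+1), (-1:ℤ)^(i+1) * (n.choose (i+1)) * x (i+1)
      = (∑ j ∈ range (n+2), (-1:ℤ)^j * (n.choose j) * x j)
        - (-1:ℤ)^0 * (n.choose 0) * x 0 := by
    rw [Finset.sum_range_succ' (fun j => (-1:ℤ)^j * (n.choose j) * x j) (n+1)]
    ring
  rw [h2]
  rw [Finset.sum_range_succ (fun j => (-1:ℤ)^j * (n.choose j) * x j) (n+1)]
  rw [Nat.choose_succ_self]
  simp only [mul_sub, Finset.sum_sub_distrib, Finset.sum_neg_distrib]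
  push_cast
  simp [Nat.choose_zero_right]
  ring

lemma even_extract (n : ℕ) (g : ℕ → ℤ) (h : ∀ j, Odd j → g j = 0) :
    ∑ j ∈ range (2*n+1), g j = ∑ q ∈ range (n+1), g (2*q) := by
  induction n with
  | zero => simp
  | succ n ih =>
    rw [show 2*(n+1)+1 = (2*n+1)+1+1 from by ring,
      Finset.sum_range_succ g ((2*n+1)+1), Finset.sum_range_succ g (2*n+1), ih,
      Finset.sum_range_succ (fun q => g (2*q)) (n+1),
      h (2*n+1) ⟨n, by ring⟩, show 2*n+1+1 = 2*(n+1) from by ring]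
    ring

lemma binom_even (m : ℕ) (hme : Even m) (hm : 2 ≤ m) (y : ℤ) :
    (y+1)^m + (y-1)^m - 2*y^m
      = 2 * ∑ q ∈ range (m/2), ((m.choose (2*(q+1))) : ℤ) * y^(m-2*(q+1)) := by
  obtain ⟨n, hn⟩ := hme
  have hm2 : m = 2*n := by omega
  subst hm2
  have hn1 : 1 ≤ n := by omega
  have hp1 : (y+1)^(2*n) = ∑ j ∈ range (2*n+1), y^j * 1^(2*n-j) * ((2*n).choose j) :=
    add_pow y 1 (2*n)
  have hp2 : (y-1)^(2*n) = ∑ j ∈ range (2*n+1), y^j * (-1)^(2*n-j) * ((2*n).choose j) := by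
    have h := add_pow y (-1) (2*n)
    rw [show y - 1 = y + (-1) from by ring, h]
  have key : (y+1)^(2*n) + (y-1)^(2*n)
      = ∑ j ∈ range (2*n+1), (1 + (-1:ℤ)^j) * ((2*n).choose j) * y^j := by
    rw [hp1, hp2, ← Finset.sum_add_distrib]
    refine Finset.sum_congr rfl fun j hj => ?_
    have hjm : j ≤ 2*n := by simp at hj; omega
    have hpar : ((-1:ℤ))^(2*n-j) = (-1)^j :=
      calc ((-1:ℤ))^(2*n-j) = (-1)^(2*n-j) * (((-1:ℤ))^2)^j := by norm_num
        _ = (-1)^(2*n-j+2*j) := by simp [pow_add, pow_mul]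
        _ = (-1)^(2*n+j) := by congr 1; omega
        _ = (((-1:ℤ))^2)^n * (-1)^j := by simp [pow_add, pow_mul]
        _ = (-1)^j := by norm_num
    rw [hpar, one_pow]; ring
  have ext : ∑ j ∈ range (2*n+1), (1 + (-1:ℤ)^j) * ((2*n).choose j) * y^j
      = ∑ q ∈ range (n+1), 2 * ((2*n).choose (2*q) : ℤ) * y^(2*q) := by
    rw [even_extract n _ (fun j hj => by rw [hj.neg_one_pow]; ring)]
    refine Finset.sum_congr rfl fun q _ => ?_
    rw [(even_two_mul q).neg_one_pow]; norm_num
  have hrefl : ∑ q ∈ range (n+1), 2 * ((2*n).choose (2*q) : ℤ) * y^(2*q)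
      = ∑ q ∈ range (n+1), 2 * ((2*n).choose (2*q) : ℤ) * y^(2*n-2*q) := by
    rw [← Finset.sum_range_reflect (fun q => 2 * ((2*n).choose (2*q) : ℤ) * y^(2*q)) (n+1)]
    refine Finset.sum_congr rfl fun q hq => ?_
    have hq' : q ≤ n := by simp at hq; omega
    have e1 : n + 1 - 1 - q = n - q := by omega
    have e2 : 2*(n-q) = 2*n - 2*q := by omega
    rw [e1, e2, Nat.choose_symm (by omega)]
  have peel : ∑ q ∈ range (n+1), 2 * ((2*n).choose (2*q) : ℤ) * y^(2*n-2*q)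
      = (∑ q ∈ range n, 2 * ((2*n).choose (2*(q+1)) : ℤ) * y^(2*n-2*(q+1))) + 2*y^(2*n) := by
    rw [Finset.sum_range_succ' (fun q => 2 * ((2*n).choose (2*q) : ℤ) * y^(2*n-2*q)) n]
    norm_num
  have hdiv : 2*n/2 = n := by omega
  rw [hdiv, key, ext, hrefl, peel, Finset.mul_sum]
  have he : ∀ q, 2 * (((2*n).choose (2*(q+1)):ℤ) * y^(2*n-2*(q+1)))
      = 2 * ((2*n).choose (2*(q+1)) : ℤ) * y^(2*n-2*(q+1)) := fun q => by ring
  simp only [he]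
  ring

noncomputable def Fa (m k : ℕ) : ℤ :=
  ∑ j ∈ range (2*k+1), (-1:ℤ)^j * ((2*k).choose j) * ((k:ℤ) - (j:ℤ))^m

lemma Fa_zero (k : ℕ) (hk : 1 ≤ k) : Fa 0 k = 0 := by
  have h := Int.alternating_sum_range_choose_of_ne (n := 2*k) (by omega)
  rw [Fa]
  simpa using h

lemma Fa_base (m : ℕ) (hme : Even m) (hm : 1 ≤ m) : Fa m 1 = 2 := by
  rw [Fa]
  rw [show 2*1+1 = 3 from rfl]
  rw [Finset.sum_range_succ, Finset.sum_range_succ, Finset.sum_range_succ, Finset.sum_range_zero]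
  norm_num
  rw [zero_pow (by omega), hme.neg_one_pow]
  ring

lemma Fa_rec (m k : ℕ) (hme : Even m) (hm : 2 ≤ m) :
    Fa m (k+1) = 2 * ∑ q ∈ range (m/2), ((m.choose (2*(q+1))) : ℤ) * Fa (m-2*(q+1)) k := by
  set x : ℕ → ℤ := fun j => ((k:ℤ) + 1 - (j:ℤ))^m with hx
  have step0 : Fa m (k+1) = ∑ j ∈ range ((2*k+1)+2), (-1:ℤ)^j * (((2*k+1)+1).choose j) * x j := by
    rw [Fa]
    refine Finset.sum_congr (by rw [show 2*(k+1)+1 = (2*k+1)+2 from by ring]) fun j _ => ?_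
    rw [show (2*(k+1)) = (2*k+1)+1 from by ring, hx]
    push_cast
    ring
  rw [step0, diffstep (2*k+1) x, diffstep (2*k) (fun j => x j - x (j+1))]
  have hpt : ∀ j : ℕ, (x j - x (j+1)) - (x (j+1) - x (j+2))
      = 2 * ∑ q ∈ range (m/2), ((m.choose (2*(q+1))) : ℤ) * ((k:ℤ)-(j:ℤ))^(m-2*(q+1)) := by
    intro j
    have hb := binom_even m hme hm ((k:ℤ) - (j:ℤ))
    have e1 : x j = (((k:ℤ)-(j:ℤ)) + 1)^m := by rw [hx]; congr 1; ring
    have e2 : x (j+1) = ((k:ℤ)-(j:ℤ))^m := by rw [hx]; congr 1; push_cast; ring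
    have e3 : x (j+2) = (((k:ℤ)-(j:ℤ)) - 1)^m := by rw [hx]; congr 1; push_cast; ring
    rw [e1, e2, e3, ← hb]; ring
  calc ∑ j ∈ range (2*k+1), (-1:ℤ)^j * ((2*k).choose j) * ((x j - x (j+1)) - (x (j+1) - x (j+2)))
      = ∑ j ∈ range (2*k+1), ∑ q ∈ range (m/2),
          2 * ((m.choose (2*(q+1))) : ℤ) * ((-1:ℤ)^j * ((2*k).choose j) * ((k:ℤ)-(j:ℤ))^(m-2*(q+1))) := by
        refine Finset.sum_congr rfl fun j _ => ?_
        rw [hpt j]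
        simp only [Finset.mul_sum]
        exact Finset.sum_congr rfl fun q _ => by ring
    _ = ∑ q ∈ range (m/2), ∑ j ∈ range (2*k+1),
          2 * ((m.choose (2*(q+1))) : ℤ) * ((-1:ℤ)^j * ((2*k).choose j) * ((k:ℤ)-(j:ℤ))^(m-2*(q+1))) :=
        Finset.sum_comm
    _ = 2 * ∑ q ∈ range (m/2), ((m.choose (2*(q+1))) : ℤ) * Fa (m-2*(q+1)) k := by
        simp only [Fa, Finset.mul_sum]
        exact Finset.sum_congr rfl fun q _ => Finset.sum_congr rfl fun j _ => by ring

lemma cmk_zero (k : ℕ) (hk : 1 ≤ k) : cmk 0 k = 0 := by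
  rw [cmk]
  have he : (Finset.univ : Finset (Fin k → Fin (0 + 1))).filter
      (fun p => (∀ i, 1 ≤ (p i : ℕ)) ∧ 2 * (∑ i, (p i : ℕ)) = 0) = ∅ := by
    rw [Finset.filter_eq_empty_iff]
    rintro p - ⟨h1, h2⟩
    have h3 := h1 ⟨0, hk⟩
    have h4 : (p ⟨0, hk⟩ : ℕ) ≤ ∑ i, (p i : ℕ) :=
      Finset.single_le_sum (f := fun i => (p i : ℕ)) (fun i _ => Nat.zero_le _)
        (Finset.mem_univ _)
    omega
  rw [he, Finset.sum_empty]

lemma cmk_one (m : ℕ) (hme : Even m) (hm : 2 ≤ m) : cmk m 1 = 1 := by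
  obtain ⟨n, hn⟩ := hme
  have hm2 : m = 2 * n := by omega
  subst hm2
  have hn1 : 1 ≤ n := by omega
  set p0 : Fin 1 → Fin (2*n + 1) := fun _ => ⟨n, by omega⟩ with hp0
  have hf : (Finset.univ : Finset (Fin 1 → Fin (2*n + 1))).filter
      (fun p => (∀ i, 1 ≤ (p i : ℕ)) ∧ 2 * (∑ i, (p i : ℕ)) = 2*n) = {p0} := by
    ext p
    simp only [Finset.mem_filter, Finset.mem_univ, true_and, Finset.mem_singleton]
    constructor
    · rintro ⟨h1, h2⟩
      rw [Fin.sum_univ_one] at h2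
      funext i
      have hi : i = 0 := Subsingleton.elim _ _
      subst hi
      refine Fin.ext ?_
      show (p 0 : ℕ) = n
      omega
    · rintro rfl
      refine ⟨fun i => ?_, ?_⟩
      · show 1 ≤ n; omega
      · rw [Fin.sum_univ_one]
  rw [cmk, hf, Finset.sum_singleton, Fin.prod_univ_one]
  simp only [hp0]
  rw [Nat.div_self (Nat.factorial_pos _)]

lemma cmk_ambient (M M' k : ℕ) (h : M' ≤ M) :
    ∑ t : Fin k → Fin (M+1),
      (if (∀ i, 1 ≤ (t i : ℕ)) ∧ 2 * (∑ i, (t i : ℕ)) = M'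
        then M'.factorial / ∏ i, (2 * (t i : ℕ)).factorial else 0)
      = cmk M' k := by
  rw [cmk, ← Finset.sum_filter]
  refine Finset.sum_bij' (i := fun t ht i => (⟨(t i : ℕ), by
      simp only [Finset.mem_filter, Finset.mem_univ, true_and] at ht
      have h1 : (t i : ℕ) ≤ ∑ j, (t j : ℕ) :=
        Finset.single_le_sum (f := fun j => (t j : ℕ)) (fun j _ => Nat.zero_le _)
          (Finset.mem_univ _)
      omega⟩ : Fin (M'+1)))
    (j := fun t ht i => (⟨(t i : ℕ), by have := (t i).isLt; omega⟩ : Fin (M+1)))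
    ?_ ?_ ?_ ?_ ?_
  · intro t ht
    simp only [Finset.mem_filter, Finset.mem_univ, true_and] at ht ⊢
    exact ht
  · intro t ht
    simp only [Finset.mem_filter, Finset.mem_univ, true_and] at ht ⊢
    exact ht
  · intro t ht
    funext i
    exact Fin.ext rfl
  · intro t ht
    funext i
    exact Fin.ext rfl
  · intro t ht
    rfl

lemma inner_zero (m k q : ℕ) (hq : ¬(1 ≤ q ∧ 2*q ≤ m)) :
    ∑ t : Fin k → Fin (m+1),
      (if (1 ≤ q ∧ ∀ i, 1 ≤ (t i : ℕ)) ∧ 2 * (q + ∑ i, (t i : ℕ)) = m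
        then m.factorial / ((2*q).factorial * ∏ i, (2 * (t i : ℕ)).factorial) else 0)
      = 0 := by
  refine Finset.sum_eq_zero fun t _ => ?_
  rw [if_neg]
  rintro ⟨⟨hq1, -⟩, h2⟩
  exact hq ⟨hq1, by omega⟩

lemma inner_eq (m k q : ℕ) (hq1 : 1 ≤ q) (hq2 : 2*q ≤ m) :
    ∑ t : Fin k → Fin (m+1),
      (if (1 ≤ q ∧ ∀ i, 1 ≤ (t i : ℕ)) ∧ 2 * (q + ∑ i, (t i : ℕ)) = m
        then m.factorial / ((2*q).factorial * ∏ i, (2 * (t i : ℕ)).factorial) else 0)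
      = m.choose (2*q) * cmk (m - 2*q) k := by
  have step1 : ∀ t : Fin k → Fin (m+1),
      (if (1 ≤ q ∧ ∀ i, 1 ≤ (t i : ℕ)) ∧ 2 * (q + ∑ i, (t i : ℕ)) = m
        then m.factorial / ((2*q).factorial * ∏ i, (2 * (t i : ℕ)).factorial) else 0)
      = m.choose (2*q) * (if (∀ i, 1 ≤ (t i : ℕ)) ∧ 2 * (∑ i, (t i : ℕ)) = m - 2*q
        then (m - 2*q).factorial / ∏ i, (2 * (t i : ℕ)).factorial else 0) := by
    intro t
    have hiff : ((1 ≤ q ∧ ∀ i, 1 ≤ (t i : ℕ)) ∧ 2 * (q + ∑ i, (t i : ℕ)) = m)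
        ↔ ((∀ i, 1 ≤ (t i : ℕ)) ∧ 2 * (∑ i, (t i : ℕ)) = m - 2*q) := by
      constructor
      · rintro ⟨⟨-, h1⟩, h2⟩; exact ⟨h1, by omega⟩
      · rintro ⟨h1, h2⟩; exact ⟨⟨hq1, h1⟩, by omega⟩
    rw [if_congr hiff rfl rfl]
    split_ifs with hc
    · have hsum2 : ∑ i, 2 * (t i : ℕ) = m - 2*q := by
        rw [← Finset.mul_sum]; exact hc.2
      have hdvd : (∏ i, (2 * (t i : ℕ)).factorial) ∣ (m - 2*q).factorial := by
        rw [← hsum2]; exact Nat.prod_factorial_dvd_factorial_sum _ _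
      have hfac : m.factorial = m.choose (2*q) * ((2*q).factorial * (m - 2*q).factorial) := by
        rw [← mul_assoc]; exact (Nat.choose_mul_factorial_mul_factorial hq2).symm
      rw [hfac, Nat.mul_div_assoc _ (mul_dvd_mul_left _ hdvd),
        Nat.mul_div_mul_left _ _ (Nat.factorial_pos _)]
    · rw [mul_zero]
  calc ∑ t : Fin k → Fin (m+1),
      (if (1 ≤ q ∧ ∀ i, 1 ≤ (t i : ℕ)) ∧ 2 * (q + ∑ i, (t i : ℕ)) = m
        then m.factorial / ((2*q).factorial * ∏ i, (2 * (t i : ℕ)).factorial) else 0)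
      = ∑ t : Fin k → Fin (m+1), m.choose (2*q) *
          (if (∀ i, 1 ≤ (t i : ℕ)) ∧ 2 * (∑ i, (t i : ℕ)) = m - 2*q
            then (m - 2*q).factorial / ∏ i, (2 * (t i : ℕ)).factorial else 0) :=
        Finset.sum_congr rfl fun t _ => step1 t
    _ = m.choose (2*q) * cmk (m - 2*q) k := by
        rw [← Finset.mul_sum, cmk_ambient m (m - 2*q) k (by omega)]

lemma cmk_rec (m k : ℕ) (hme : Even m) (hm : 2 ≤ m) :
    cmk m (k+1) = ∑ q ∈ range (m/2), m.choose (2*(q+1)) * cmk (m - 2*(q+1)) k := by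
  set g : ℕ → ℕ := fun a => ∑ t : Fin k → Fin (m+1),
      (if (1 ≤ a ∧ ∀ i, 1 ≤ (t i : ℕ)) ∧ 2 * (a + ∑ i, (t i : ℕ)) = m
        then m.factorial / ((2*a).factorial * ∏ i, (2 * (t i : ℕ)).factorial) else 0) with hg
  have stepA : cmk m (k+1) = ∑ a : Fin (m+1), g (a : ℕ) := by
    rw [cmk, Finset.sum_filter,
      ← Equiv.sum_comp (Fin.consEquiv (fun _ : Fin (k+1) => Fin (m+1)))
        (fun p : Fin (k+1) → Fin (m+1) =>
          if (∀ i, 1 ≤ (p i : ℕ)) ∧ 2 * (∑ i, (p i : ℕ)) = m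
            then m.factorial / ∏ i, (2 * (p i : ℕ)).factorial else 0),
      Fintype.sum_prod_type]
    refine Finset.sum_congr rfl fun a _ => Finset.sum_congr rfl fun t _ => ?_
    simp only [Fin.consEquiv_apply]
    have hcond : ((∀ i : Fin (k+1), 1 ≤ ((Fin.cons a t : Fin (k+1) → Fin (m+1)) i : ℕ)) ∧
          2 * (∑ i : Fin (k+1), ((Fin.cons a t : Fin (k+1) → Fin (m+1)) i : ℕ)) = m)
        ↔ ((1 ≤ (a:ℕ) ∧ ∀ i, 1 ≤ (t i : ℕ)) ∧ 2 * ((a:ℕ) + ∑ i, (t i : ℕ)) = m) := by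
      rw [Fin.forall_fin_succ, Fin.sum_univ_succ]
      simp only [Fin.cons_zero, Fin.cons_succ]

    rw [if_congr hcond rfl rfl]
    have hprod : (∏ i : Fin (k+1), (2 * ((Fin.cons a t : Fin (k+1) → Fin (m+1)) i : ℕ)).factorial)
        = (2*(a:ℕ)).factorial * ∏ i, (2 * (t i : ℕ)).factorial := by
      rw [Fin.prod_univ_succ]
      simp only [Fin.cons_zero, Fin.cons_succ]
    rw [hprod]
  rw [stepA, Fin.sum_univ_eq_sum_range g (m+1)]
  have step2 : ∑ a ∈ range (m+1), g a = ∑ a ∈ (range (m/2)).image Nat.succ, g a := by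
    refine (Finset.sum_subset ?_ ?_).symm
    · intro a ha
      simp only [Finset.mem_image, Finset.mem_range] at ha
      obtain ⟨q, hq, rfl⟩ := ha
      simp only [Finset.mem_range]
      omega
    · intro a _ ha
      simp only [Finset.mem_image, Finset.mem_range] at ha
      refine inner_zero m k a ?_
      rintro ⟨h1, h2⟩
      exact ha ⟨a - 1, by omega, by omega⟩
  rw [step2, Finset.sum_image (fun x _ y _ h => Nat.succ_injective h)]
  refine Finset.sum_congr rfl fun q hq => ?_
  simp only [Finset.mem_range] at hq
  have : Nat.succ q = q + 1 := rfl
  rw [this]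
  exact inner_eq m k (q+1) (by omega) (by omega)

lemma neg_one_pow_sub (a b : ℕ) (h : b ≤ a) : ((-1:ℤ))^(a-b) = (-1)^a * (-1)^b :=
  calc ((-1:ℤ))^(a-b) = (-1)^(a-b) * (((-1:ℤ))^2)^b := by norm_num
    _ = (-1)^(a-b+2*b) := by simp [pow_add, pow_mul]
    _ = (-1)^(a+b) := by congr 1; omega
    _ = (-1)^a * (-1)^b := by rw [pow_add]

lemma Fa_eq_T (m k : ℕ) (hme : Even m) (hm : 1 ≤ m) (hk : 1 ≤ k) :
    Fa m k = 2 * ∑ r ∈ Finset.Icc 1 k,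
      (-1:ℤ)^(k-r) * ((2*k).choose (k-r)) * (r:ℤ)^m := by
  set G : ℕ → ℤ := fun j => (-1:ℤ)^j * ((2*k).choose j) * ((k:ℤ) - (j:ℤ))^m with hG
  have split1 : Fa m k = (∑ j ∈ range (k+1), G j) + ∑ j ∈ Ico (k+1) (2*k+1), G j := by
    rw [Fa, Finset.range_eq_Ico, ← Finset.sum_Ico_consecutive G (by omega : 0 ≤ k+1)
      (by omega : k+1 ≤ 2*k+1), ← Finset.range_eq_Ico]
  have hGk : G k = 0 := by
    rw [hG]
    simp only []
    rw [sub_self, zero_pow (by omega), mul_zero]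
  have split2 : ∑ j ∈ range (k+1), G j = ∑ j ∈ range k, G j := by
    rw [Finset.sum_range_succ, hGk, add_zero]
  have split3 : ∑ j ∈ Ico (k+1) (2*k+1), G j = ∑ j ∈ range k, G j := by
    refine Finset.sum_nbij' (i := fun j => 2*k - j) (j := fun i => 2*k - i) ?_ ?_ ?_ ?_ ?_
    · intro a ha; simp only [Finset.mem_Ico] at ha; simp only [Finset.mem_range]; omega
    · intro a ha; simp only [Finset.mem_range] at ha; simp only [Finset.mem_Ico]; omega
    · intro a ha; simp only [Finset.mem_Ico] at ha; show 2*k - (2*k - a) = a; omega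
    · intro a ha; simp only [Finset.mem_range] at ha; show 2*k - (2*k - a) = a; omega
    · intro a ha
      simp only [Finset.mem_Ico] at ha
      rw [hG]
      simp only []
      have e1 : ((-1:ℤ))^(2*k-a) = (-1)^a := by
        rw [neg_one_pow_sub (2*k) a (by omega)]
        have : ((-1:ℤ))^(2*k) = 1 := by rw [pow_mul]; norm_num
        rw [this, one_mul]
      have e2' : (2*k).choose (2*k-a) = (2*k).choose a := Nat.choose_symm (by omega)
      have e3 : ((k:ℤ) - ((2*k - a : ℕ):ℤ))^m = ((k:ℤ) - (a:ℤ))^m := by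
        have : ((2*k - a : ℕ):ℤ) = 2*(k:ℤ) - (a:ℤ) := by
          push_cast [Nat.cast_sub (by omega : a ≤ 2*k)]; ring
        rw [this, show (k:ℤ) - (2*(k:ℤ) - (a:ℤ)) = -((k:ℤ) - (a:ℤ)) from by ring,
          hme.neg_pow]
      rw [e1, e2', e3]
  have split4 : ∑ r ∈ Finset.Icc 1 k, (-1:ℤ)^(k-r) * ((2*k).choose (k-r)) * (r:ℤ)^m
      = ∑ j ∈ range k, G j := by
    refine Finset.sum_nbij' (i := fun r => k - r) (j := fun i => k - i) ?_ ?_ ?_ ?_ ?_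
    · intro a ha; simp only [Finset.mem_Icc] at ha; simp only [Finset.mem_range]; omega
    · intro a ha; simp only [Finset.mem_range] at ha; simp only [Finset.mem_Icc]; omega
    · intro a ha; simp only [Finset.mem_Icc] at ha; show k - (k - a) = a; omega
    · intro a ha; simp only [Finset.mem_range] at ha; show k - (k - a) = a; omega
    · intro r hr
      simp only [Finset.mem_Icc] at hr
      rw [hG]
      simp only []
      have e3 : ((k:ℤ) - ((k - r : ℕ):ℤ)) = (r:ℤ) := by
        push_cast [Nat.cast_sub (by omega : r ≤ k)]; ring
      rw [e3]
  rw [split1, split2, split3, ← split4]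
  ring

lemma main_ind : ∀ k, 1 ≤ k → ∀ m, Even m → 2 ≤ m → (2:ℤ)^k * (cmk m k : ℤ) = Fa m k := by
  intro k hk
  induction k, hk using Nat.le_induction with
  | base =>
    intro m hme hm
    rw [cmk_one m hme hm, Fa_base m hme (by omega)]
    norm_num
  | succ k hk ih =>
    intro m hme hm
    rw [cmk_rec m k hme hm, Fa_rec m k hme hm]
    push_cast
    rw [Finset.mul_sum, Finset.mul_sum]
    refine Finset.sum_congr rfl fun q hq => ?_
    simp only [Finset.mem_range] at hq
    have hle : 2*(q+1) ≤ m := by omega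
    have hme' : Even (m - 2*(q+1)) := by
      obtain ⟨n, hn⟩ := hme; exact ⟨n - (q+1), by omega⟩
    by_cases h0 : m - 2*(q+1) = 0
    · rw [h0, cmk_zero k hk, Fa_zero k hk]
      push_cast
      ring
    · have h2 : 2 ≤ m - 2*(q+1) := by obtain ⟨n, hn⟩ := hme'; omega
      rw [← ih (m - 2*(q+1)) hme' h2]
      ring

/-- `2^{k-1}·c_{m,k} = Σ_{r=1}^k (-1)^{k-r}·binom(2k, k-r)·r^m`. -/
theorem stmt_15 (m k : ℕ) (hm : 2 ≤ m) (hme : Even m) (hk : 1 ≤ k) :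
    ((2 ^ (k - 1) * cmk m k : ℕ) : ℤ)
      = ∑ r ∈ Finset.Icc 1 k, (-1 : ℤ) ^ (k - r) * ((2 * k).choose (k - r) : ℤ) * (r : ℤ) ^ m := by
  have h1 := main_ind k hk m hme hm
  have h2 := Fa_eq_T m k hme (by omega) hk
  refine mul_left_cancel₀ (two_ne_zero) ?_
  rw [← h2, ← h1]
  have hk1 : k - 1 + 1 = k := by omega
  have hp : (2:ℤ)^k = 2^(k-1) * 2 := by rw [← pow_succ, hk1]
  push_cast
  rw [hp]
  ring
end
end

section
/- For every even integer m ≥ 2, the identity Σ_{k=1}^{m/2} (2^k/(2k)!)·c_{m,k}·∏_{ℓ=1}^{k−1}(x² − ℓ²) = x^{m−2} holds in the polynomial ring ℚ[x], where the product over ℓ is the empty product 1 when k = 1. -/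
open scoped Classical

noncomputable section

/-!
For fixed `k`, `c_{m,k} / m!` is the coefficient of `x^m` in `(cosh x - 1)^k`. Since
`(cosh - 1)' = sinh` and `sinh² = (cosh - 1)² + 2 (cosh - 1)`, differentiating twice gives
`((cosh - 1)^k)'' = k² (cosh - 1)^k + k (2k - 1) (cosh - 1)^(k-1)`, that is
`c_{m+2,k} = k² c_{m,k} + k (2k - 1) c_{m,k-1}`. After normalising by `2^k / (2k)!` this is exactly
the recurrence produced by multiplying the expansion of `x^(m-2)` by `x² = (x² - k²) + k²`,
so the identity follows by induction on `m`.
-/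

namespace PowerSeries

open Finset

theorem coeff_pow_eq_sum_fin_tuples {R : Type*} [CommRing R] (f : R⟦X⟧) {m N : ℕ}
    (hm : m ≤ N) (k : ℕ) :
    coeff m (f ^ k) =
      ∑ p : Fin k → Fin (N + 1) with ∑ i, (p i : ℕ) = m, ∏ i, coeff (p i) f := by
  set P : R⟦X⟧ := ∑ n : Fin (N + 1), monomial n (coeff n f)
  have hP : X ^ (N + 1) ∣ f - P := by
    refine X_pow_dvd_iff.2 fun j hj => ?_
    rw [map_sub, map_sum, Fintype.sum_eq_single ⟨j, hj⟩ fun n hn => ?_, coeff_monomial_same,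
      sub_self]
    rw [coeff_monomial, if_neg (by simpa [Fin.ext_iff, eq_comm] using hn)]
  have hPk : coeff m (f ^ k) = coeff m (P ^ k) := by
    have h := X_pow_dvd_iff.1 (hP.trans (sub_dvd_pow_sub_pow f P k)) m (by omega)
    rwa [map_sub, sub_eq_zero] at h
  rw [hPk, ← Fin.prod_const, Fintype.prod_sum, map_sum, sum_filter]
  refine sum_congr rfl fun p _ => ?_
  simp only [prod_monomial, coeff_monomial, eq_comm]

end PowerSeries

namespace CentralFactorial

open Finset Nat

theorem cmk_eq_sum_multinomial (m k : ℕ) :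
    cmk m k =
      ∑ p : Fin k → Fin (m + 1) with (∀ i, 1 ≤ (p i : ℕ)) ∧ 2 * ∑ i, (p i : ℕ) = m,
        multinomial univ fun i => 2 * (p i : ℕ) := by
  refine sum_congr rfl fun p hp => ?_
  rw [multinomial, ← mul_sum, (mem_filter.1 hp).2.2]

theorem cmk_zero_right {m : ℕ} (hm : m ≠ 0) : cmk m 0 = 0 := by
  simp [cmk, hm.symm]

theorem cmk_eq_zero_of_lt {m k : ℕ} (h : m < 2 * k) : cmk m k = 0 := by
  refine sum_eq_zero fun p hp => ?_
  obtain ⟨hpos, hsum⟩ := (mem_filter.1 hp).2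
  have hk : k ≤ ∑ i, (p i : ℕ) := by
    simpa using card_nsmul_le_sum univ (fun i => (p i : ℕ)) 1 fun i _ => hpos i
  omega

section

open PowerSeries

def coshSqrt : ℚ⟦X⟧ := mk fun n => ((2 * n)! : ℚ)⁻¹

-- Writing `cosh X` as a series in `X²` indexes its coefficients by half block sizes, like the
-- `pᵢ` in `cmk`.
def cosh : ℚ⟦X⟧ := expand 2 two_ne_zero coshSqrt

def sinh : ℚ⟦X⟧ := d⁄dX ℚ cosh

theorem coeff_cosh_two_mul (n : ℕ) : coeff (2 * n) cosh = ((2 * n)! : ℚ)⁻¹ := by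
  rw [cosh, coeff_expand_mul, coshSqrt, coeff_mk]

theorem coeff_cosh_two_mul_add_one (n : ℕ) : coeff (2 * n + 1) cosh = 0 :=
  coeff_expand_of_not_dvd _ _ _ (by omega)

theorem derivative_sinh : d⁄dX ℚ sinh = cosh := by
  ext n
  rw [sinh, coeff_derivative, coeff_derivative]
  rcases n.even_or_odd' with ⟨j, rfl | rfl⟩
  · rw [show 2 * j + 1 + 1 = 2 * (j + 1) by ring, coeff_cosh_two_mul, coeff_cosh_two_mul,
      show 2 * (j + 1) = 2 * j + 1 + 1 by ring, factorial_succ, factorial_succ]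
    push_cast
    field_simp
  · rw [show 2 * j + 1 + 1 + 1 = 2 * (j + 1) + 1 by ring, coeff_cosh_two_mul_add_one,
      coeff_cosh_two_mul_add_one, zero_mul, zero_mul]

theorem cosh_sq_sub_sinh_sq : cosh ^ 2 - sinh ^ 2 = 1 := by
  refine derivative.ext ?_ ?_
  · rw [map_sub, derivative_pow, derivative_pow, derivative_sinh, ← sinh, derivative_one]
    ring
  · have hcosh : constantCoeff cosh = 1 := by simpa using coeff_cosh_two_mul 0
    have hsinh : constantCoeff sinh = 0 := by
      rw [sinh, ← coeff_zero_eq_constantCoeff_apply, coeff_derivative]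
      simpa using coeff_cosh_two_mul_add_one 0
    simp [hcosh, hsinh]

theorem cosh_sub_one_eq_expand : cosh - 1 = expand 2 two_ne_zero (coshSqrt - 1) := by
  rw [map_sub, map_one, cosh]

theorem coeff_coshSqrt_sub_one (n : ℕ) :
    coeff n (coshSqrt - 1) = if 1 ≤ n then ((2 * n)! : ℚ)⁻¹ else 0 := by
  rw [map_sub, coshSqrt, coeff_mk, coeff_one]
  split_ifs <;> first | omega | simp_all

theorem coeff_cosh_sub_one_pow (s k : ℕ) :
    coeff (2 * s) ((cosh - 1) ^ k) = (cmk (2 * s) k : ℚ) / (2 * s)! := by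
  rw [cosh_sub_one_eq_expand, ← map_pow, coeff_expand_mul,
    coeff_pow_eq_sum_fin_tuples _ (N := 2 * s) (by omega)]
  simp_rw [coeff_coshSqrt_sub_one, Fintype.prod_ite_zero]
  rw [cmk_eq_sum_multinomial, Nat.cast_sum, sum_div, sum_filter, sum_filter]
  refine sum_congr rfl fun p _ => ?_
  by_cases hp : (∀ i, 1 ≤ (p i : ℕ)) ∧ ∑ i, (p i : ℕ) = s
  · rw [if_pos hp.2, if_pos hp.1, if_pos ⟨hp.1, by omega⟩]
    have h := multinomial_spec univ fun i => 2 * (p i : ℕ)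
    rw [← mul_sum, hp.2] at h
    rw [eq_div_iff (by positivity), ← h, prod_inv_distrib]
    push_cast
    field_simp
  · split_ifs <;> simp_all

theorem derivative_cosh_sub_one : d⁄dX ℚ (cosh - 1) = sinh := by
  rw [map_sub, derivative_one, sub_zero, sinh]

theorem derivative_derivative_cosh_sub_one_pow (k : ℕ) :
    d⁄dX ℚ (d⁄dX ℚ ((cosh - 1) ^ (k + 1))) =
      C (((k : ℚ) + 1) ^ 2) * (cosh - 1) ^ (k + 1) +
        C (((k : ℚ) + 1) * (2 * k + 1)) * (cosh - 1) ^ k := by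
  have hsinh : sinh ^ 2 = (cosh - 1) ^ 2 + 2 * (cosh - 1) := by
    linear_combination -cosh_sq_sub_sinh_sq
  rw [derivative_pow, derivative_cosh_sub_one, add_tsub_cancel_right, Derivation.leibniz,
    Derivation.leibniz, derivative_pow, derivative_cosh_sub_one, derivative_sinh,
    Derivation.map_natCast]
  simp only [smul_eq_mul, map_add, map_mul, map_pow, map_natCast, map_one, map_ofNat]
  cases k with
  | zero => push_cast; ring
  | succ k =>
    rw [add_tsub_cancel_right]
    push_cast
    linear_combination ((k : ℚ⟦X⟧) + 2) * (k + 1) * (cosh - 1) ^ k * hsinh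

theorem cmk_two_mul_succ_succ (s k : ℕ) :
    cmk (2 * (s + 1)) (k + 1) =
      (k + 1) * (2 * k + 1) * cmk (2 * s) k + (k + 1) ^ 2 * cmk (2 * s) (k + 1) := by
  have h := congrArg (coeff (2 * s)) (derivative_derivative_cosh_sub_one_pow k)
  rw [coeff_derivative, coeff_derivative, map_add, coeff_C_mul, coeff_C_mul,
    show 2 * s + 1 + 1 = 2 * (s + 1) by ring,
    coeff_cosh_sub_one_pow, coeff_cosh_sub_one_pow, coeff_cosh_sub_one_pow,
    show 2 * (s + 1) = 2 * s + 1 + 1 by ring, factorial_succ, factorial_succ] at h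
  push_cast at h
  field_simp at h
  rw [show 2 * (s + 1) = 2 * s + 1 + 1 by ring]
  qify
  linear_combination h

theorem cmk_two_one : cmk 2 1 = 1 := by
  have h := coeff_cosh_sub_one_pow 1 1
  rw [pow_one, map_sub, coeff_cosh_two_mul, coeff_one, if_neg (by norm_num)] at h
  norm_num at h
  exact_mod_cast h

end

-- The central factorial number `T(m, 2k)`; the identity expands `x^(m-2)` in the basis
-- `x^[2k] / x² = ∏_{0<l<k} (x² - l²)` of central factorials.
def centralFactorialNumber (m k : ℕ) : ℚ := 2 ^ k / (2 * k)! * cmk m k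

theorem centralFactorialNumber_succ_succ (s k : ℕ) :
    centralFactorialNumber (2 * (s + 1)) (k + 1) =
      centralFactorialNumber (2 * s) k + (k + 1) ^ 2 * centralFactorialNumber (2 * s) (k + 1) := by
  simp only [centralFactorialNumber, cmk_two_mul_succ_succ]
  rw [show 2 * (k + 1) = 2 * k + 1 + 1 by ring, factorial_succ, factorial_succ]
  push_cast
  field_simp
  ring

theorem centralFactorialNumber_zero_right {m : ℕ} (hm : m ≠ 0) :
    centralFactorialNumber m 0 = 0 := by
  simp [centralFactorialNumber, cmk_zero_right hm]

theorem centralFactorialNumber_of_lt {s k : ℕ} (h : s < k) :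
    centralFactorialNumber (2 * s) k = 0 := by
  simp [centralFactorialNumber, cmk_eq_zero_of_lt (by omega : 2 * s < 2 * k)]

theorem centralFactorialNumber_two_one : centralFactorialNumber 2 1 = 1 := by
  simp [centralFactorialNumber, cmk_two_one]

section

open Polynomial

theorem X_sq_mul_prod_Icc (j : ℕ) :
    X ^ 2 * ∏ l ∈ Icc 1 j, (X ^ 2 - C ((l : ℚ) ^ 2)) =
      ∏ l ∈ Icc 1 (j + 1), (X ^ 2 - C ((l : ℚ) ^ 2)) +
        C (((j : ℚ) + 1) ^ 2) * ∏ l ∈ Icc 1 j, (X ^ 2 - C ((l : ℚ) ^ 2)) := by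
  rw [prod_Icc_succ_top (by omega)]
  push_cast
  ring

theorem sum_centralFactorialNumber_mul_prod (s : ℕ) :
    ∑ j ∈ range (s + 1), C (centralFactorialNumber (2 * (s + 1)) (j + 1)) *
        ∏ l ∈ Icc 1 j, (X ^ 2 - C ((l : ℚ) ^ 2)) = X ^ (2 * s) := by
  induction s with
  | zero => simp [centralFactorialNumber_two_one]
  | succ s ih =>
    set P : ℕ → ℚ[X] := fun j => ∏ l ∈ Icc 1 j, (X ^ 2 - C ((l : ℚ) ^ 2))
    set T := centralFactorialNumber (2 * (s + 1))
    calc ∑ j ∈ range (s + 2), C (centralFactorialNumber (2 * (s + 2)) (j + 1)) * P j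
        = ∑ j ∈ range (s + 2), C (T j) * P j +
            ∑ j ∈ range (s + 2), C ((j + 1) ^ 2 * T (j + 1)) * P j := by
          rw [← sum_add_distrib]
          refine sum_congr rfl fun j _ => ?_
          rw [centralFactorialNumber_succ_succ, map_add, add_mul]
      _ = ∑ j ∈ range (s + 1), C (T (j + 1)) * (P (j + 1) + C (((j : ℚ) + 1) ^ 2) * P j) := by
          have hT₀ : T 0 = 0 := centralFactorialNumber_zero_right (by omega)
          have hT_top : T (s + 2) = 0 := centralFactorialNumber_of_lt (by omega)
          rw [sum_range_succ', sum_range_succ _ (s + 1), hT₀, hT_top]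
          simp only [map_zero, zero_mul, mul_zero, add_zero, mul_add, sum_add_distrib]
          refine congrArg _ (sum_congr rfl fun j _ => ?_)
          rw [map_mul]
          ring
      _ = X ^ 2 * X ^ (2 * s) := by
          rw [← ih, mul_sum]
          refine sum_congr rfl fun j _ => ?_
          rw [mul_left_comm, X_sq_mul_prod_Icc]
      _ = X ^ (2 * (s + 1)) := by ring

end

end CentralFactorial

/-- In `ℚ[x]`:
`Σ_{k=1}^{m/2} (2^k/(2k)!)·c_{m,k}·∏_{ℓ=1}^{k-1}(x² - ℓ²) = x^{m-2}`. -/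
theorem stmt_16 (m : ℕ) (hm : 2 ≤ m) (hme : Even m) :
    ∑ k ∈ Finset.Icc 1 (m / 2),
        Polynomial.C ((2 : ℚ) ^ k / ((2 * k).factorial : ℚ) * (cmk m k : ℚ)) *
          ∏ l ∈ Finset.Icc 1 (k - 1),
            ((Polynomial.X : Polynomial ℚ) ^ 2 - Polynomial.C ((l : ℚ) ^ 2))
      = (Polynomial.X : Polynomial ℚ) ^ (m - 2) := by
  obtain ⟨s, rfl⟩ : ∃ s, m = 2 * (s + 1) := by
    obtain ⟨t, rfl⟩ := hme
    exact ⟨t - 1, by omega⟩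
  rw [show 2 * (s + 1) / 2 = s + 1 by omega, show 2 * (s + 1) - 2 = 2 * s by omega,
    ← CentralFactorial.sum_centralFactorialNumber_mul_prod, ← Finset.Ico_add_one_right_eq_Icc,
    Finset.sum_Ico_eq_sum_range, add_tsub_cancel_right]
  refine Finset.sum_congr rfl fun j _ => ?_
  rw [add_comm 1 j, add_tsub_cancel_right]
  rfl
end
end

section
/- Let n ≥ 3 be an odd integer and set m = n−1. Then for each k ∈ {1,…,m/2} the series Σ_{r=1}^{∞} (∏_{ℓ=1}^{k−1}(r²−ℓ²))/r^{2n−3} of real numbers converges (the product over ℓ being the empty product 1 when k = 1), and (2n−1)·binom(2n−2, n−1)·Σ_{k=1}^{m/2} (2^k·c_{m,k}/((2k−1)!·k))·Σ_{r=1}^{∞} (∏_{ℓ=1}^{k−1}(r²−ℓ²))/r^{2n−3} = n·binom(2n, n)·Σ_{r=1}^{∞} 1/rⁿ. -/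
open scoped Classical

noncomputable section

/-!
The number `c_{m,k} / m!` is the coefficient of `t^m` in `(cosh t - 1)^k`. Since
`(d/dt)² (cosh t - 1)^(k+1) = (k+1)² (cosh t - 1)^(k+1) + (k+1)(2k+1) (cosh t - 1)^k`, these
numbers satisfy `c_{m+2,k+1} = (k+1)(2k+1) c_{m,k} + (k+1)² c_{m,k+1}`, which is the recurrence of
the central factorial numbers `T(m, 2k) = 2^k c_{m,k} / (2k)!`. Hence
`x^(2M) = ∑_k T(2M, 2k) x²(x² - 1²)⋯(x² - (k-1)²)` for every `x`. With `n = 2M + 1`, this turns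
the `k`-sum of the statement, before summing over `r`, into `2 / rⁿ`; what is left is
`2 (2n-1) binom(2n-2, n-1) = n binom(2n, n)`.
-/

open Finset Nat

section PowerSeries

open PowerSeries

theorem PowerSeries.coeff_prod_eq_sum_piAntidiag {R ι : Type*} [CommSemiring R] [DecidableEq ι]
    (f : ι → R⟦X⟧) (d : ℕ) (s : Finset ι) :
    coeff d (∏ j ∈ s, f j) = ∑ l ∈ piAntidiag s d, ∏ i ∈ s, coeff (l i) (f i) := by
  rw [coeff_prod, finsuppAntidiag, sum_map]
  exact sum_attach (piAntidiag s d) fun l => ∏ i ∈ s, coeff (l i) (f i)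

theorem PowerSeries.coeff_pow_eq_sum_piAntidiag {R : Type*} [CommSemiring R]
    (f : R⟦X⟧) (k d : ℕ) :
    coeff d (f ^ k) = ∑ l ∈ piAntidiag (univ : Finset (Fin k)) d, ∏ i, coeff (l i) f := by
  rw [← coeff_prod_eq_sum_piAntidiag, prod_const, Finset.card_univ, Fintype.card_fin]

def coshSeries : ℚ⟦X⟧ := mk fun n => if Even n then (n ! : ℚ)⁻¹ else 0

def sinhSeries : ℚ⟦X⟧ := mk fun n => if Even n then 0 else (n ! : ℚ)⁻¹

theorem inv_factorial_succ_mul (n : ℕ) : ((n + 1)! : ℚ)⁻¹ * (n + 1) = (n ! : ℚ)⁻¹ := by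
  rw [factorial_succ]
  push_cast
  field_simp

theorem derivative_coshSeries : d⁄dX ℚ coshSeries = sinhSeries := by
  ext n
  simp only [coeff_derivative, coshSeries, sinhSeries, coeff_mk, Nat.even_add_one]
  split_ifs <;> simp [inv_factorial_succ_mul]

theorem derivative_sinhSeries : d⁄dX ℚ sinhSeries = coshSeries := by
  ext n
  simp only [coeff_derivative, coshSeries, sinhSeries, coeff_mk, Nat.even_add_one]
  split_ifs <;> simp [inv_factorial_succ_mul]

theorem coshSeries_sq_sub_sinhSeries_sq : coshSeries ^ 2 - sinhSeries ^ 2 = 1 := by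
  refine derivative.ext ?_ ?_
  · simp only [derivative_pow, derivative_coshSeries, derivative_sinhSeries, map_sub,
      derivative_one]
    ring
  · rw [← coeff_zero_eq_constantCoeff_apply, ← coeff_zero_eq_constantCoeff_apply]
    simp [coshSeries, sinhSeries, sq]

theorem derivative_pow_succ_coshSeries_sub_one (k : ℕ) :
    d⁄dX ℚ ((coshSeries - 1) ^ (k + 1)) = (k + 1) • ((coshSeries - 1) ^ k * sinhSeries) := by
  rw [derivative_pow, map_sub, derivative_one, sub_zero, derivative_coshSeries, nsmul_eq_mul,
    Nat.add_sub_cancel, mul_assoc]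

theorem derivative_derivative_pow_succ_coshSeries_sub_one (k : ℕ) :
    d⁄dX ℚ (d⁄dX ℚ ((coshSeries - 1) ^ (k + 1))) =
      (k + 1) ^ 2 • (coshSeries - 1) ^ (k + 1) +
        ((k + 1) * (2 * k + 1)) • (coshSeries - 1) ^ k := by
  have hsinh_sq : sinhSeries ^ 2 = (coshSeries - 1) ^ 2 + 2 * (coshSeries - 1) := by
    linear_combination -coshSeries_sq_sub_sinhSeries_sq
  rw [derivative_pow_succ_coshSeries_sub_one, map_nsmul, Derivation.leibniz,
    derivative_sinhSeries, smul_eq_mul, smul_eq_mul]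
  cases k with
  | zero => simp
  | succ j =>
    rw [derivative_pow_succ_coshSeries_sub_one]
    simp only [nsmul_eq_mul]
    push_cast
    linear_combination ((j : ℚ⟦X⟧) + 2) * (j + 1) * (coshSeries - 1) ^ j * hsinh_sq

theorem coeff_coshSeries_sub_one (n : ℕ) :
    coeff n (coshSeries - 1) = if Even n ∧ n ≠ 0 then (n ! : ℚ)⁻¹ else 0 := by
  rcases eq_or_ne n 0 with rfl | hn
  · simp [coshSeries]
  · simp [coshSeries, coeff_one, hn]

theorem coeff_pow_coshSeries_sub_one (m k : ℕ) :
    coeff m ((coshSeries - 1) ^ k) =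
      ∑ l ∈ (piAntidiag (univ : Finset (Fin k)) m).filter (fun l => ∀ i, Even (l i) ∧ l i ≠ 0),
        ∏ i, ((l i)! : ℚ)⁻¹ := by
  simp only [coeff_pow_eq_sum_piAntidiag, coeff_coshSeries_sub_one, Fintype.prod_ite_zero,
    sum_filter]
  congr! 2

theorem cast_cmk_eq_factorial_mul_sum (m k : ℕ) :
    (cmk m k : ℚ) = m ! * ∑ p ∈ univ.filter (fun p : Fin k → Fin (m + 1) =>
      (∀ i, 1 ≤ (p i : ℕ)) ∧ 2 * (∑ i, (p i : ℕ)) = m), ∏ i, ((2 * (p i : ℕ))! : ℚ)⁻¹ := by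
  rw [cmk, Nat.cast_sum, mul_sum]
  refine sum_congr rfl fun p hp => ?_
  have hdvd : ∏ i, (2 * (p i : ℕ))! ∣ m ! := by
    simpa [← mul_sum, (mem_filter.mp hp).2.2] using
      prod_factorial_dvd_factorial_sum univ fun i => 2 * (p i : ℕ)
  rw [Nat.cast_div hdvd (by positivity), Nat.cast_prod, div_eq_mul_inv, prod_inv_distrib]

theorem cast_cmk_eq_factorial_mul_coeff (m k : ℕ) :
    (cmk m k : ℚ) = m ! * coeff m ((coshSeries - 1) ^ k) := by
  rw [cast_cmk_eq_factorial_mul_sum, coeff_pow_coshSeries_sub_one]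
  congr 1
  refine sum_nbij (fun p i => 2 * (p i : ℕ)) ?_ ?_ ?_ fun p _ => rfl
  · intro p hp
    simp only [mem_filter, mem_univ, true_and, mem_piAntidiag] at hp ⊢
    exact ⟨⟨by rw [← mul_sum, hp.2], by simp⟩,
      fun i => ⟨even_two_mul _, by have := hp.1 i; omega⟩⟩
  · intro p _ q _ hpq
    funext i
    exact Fin.ext (by simpa using congrFun hpq i)
  · intro l hl
    simp only [coe_filter, mem_piAntidiag, mem_univ, implies_true, and_true,
      Set.mem_ofPred_eq] at hl
    obtain ⟨hsum, heven⟩ := hl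
    have hle : ∀ i, l i ≤ m := fun i => hsum ▸ single_le_sum (by simp) (mem_univ i)
    have hhalf : ∀ i, 2 * (l i / 2) = l i := fun i => two_mul_div_two_of_even (heven i).1
    refine ⟨fun i => ⟨l i / 2, by have := hle i; omega⟩, ?_, funext hhalf⟩
    simp only [coe_filter, mem_univ, true_and, Set.mem_ofPred_eq, mul_sum, hhalf, hsum, and_true]
    exact fun i => by have := hhalf i; have := (heven i).2; omega

theorem cmk_add_two_succ (m k : ℕ) :
    cmk (m + 2) (k + 1) = (k + 1) * (2 * k + 1) * cmk m k + (k + 1) ^ 2 * cmk m (k + 1) := by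
  have hode := congrArg (coeff m) (derivative_derivative_pow_succ_coshSeries_sub_one k)
  rw [coeff_derivative, coeff_derivative, map_add, map_nsmul, map_nsmul] at hode
  suffices (cmk (m + 2) (k + 1) : ℚ) =
      (k + 1) * (2 * k + 1) * cmk m k + (k + 1) ^ 2 * cmk m (k + 1) by exact_mod_cast this
  simp only [cast_cmk_eq_factorial_mul_coeff, factorial_succ]
  push_cast at hode ⊢
  linear_combination (m ! : ℚ) * hode

end PowerSeries

theorem cmk_zero_zero : cmk 0 0 = 1 := by decide

theorem cmk_zero_right {m : ℕ} (hm : m ≠ 0) : cmk m 0 = 0 := by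
  simp [cmk, hm.symm]

theorem cmk_eq_zero_of_lt {m k : ℕ} (h : m < 2 * k) : cmk m k = 0 := by
  refine sum_eq_zero fun p hp => absurd (mem_filter.mp hp).2 fun ⟨hpos, hsum⟩ => ?_
  have : k ≤ ∑ i, (p i : ℕ) := by simpa using sum_le_sum fun i (_ : i ∈ univ) => hpos i
  omega

/-- The central factorial power `x^[2k] = x² (x² - 1²) ⋯ (x² - (k-1)²)`. -/
def centralFactorialPow (k : ℕ) (x : ℝ) : ℝ := ∏ l ∈ range k, (x ^ 2 - (l : ℝ) ^ 2)

/-- The central factorial number `T(m, 2k)`, as `centralFactorialNumber_add_two_succ` shows. -/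
def centralFactorialNumber (m k : ℕ) : ℝ := 2 ^ k * cmk m k / (2 * k)!

theorem centralFactorialPow_add_one (k : ℕ) (x : ℝ) :
    centralFactorialPow (k + 1) x = (x ^ 2 - (k : ℝ) ^ 2) * centralFactorialPow k x := by
  rw [centralFactorialPow, prod_range_succ, mul_comm]
  rfl

theorem centralFactorialPow_add_one_eq_sq_mul_prod (k : ℕ) (x : ℝ) :
    centralFactorialPow (k + 1) x = x ^ 2 * ∏ l ∈ Icc 1 k, (x ^ 2 - (l : ℝ) ^ 2) := by
  rw [centralFactorialPow, prod_range_succ', ← Ico_add_one_right_eq_Icc, prod_Ico_eq_prod_range,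
    add_tsub_cancel_right]
  simp [add_comm, mul_comm]

theorem centralFactorialNumber_add_two_succ (m k : ℕ) :
    centralFactorialNumber (m + 2) (k + 1) =
      centralFactorialNumber m k + (k + 1) ^ 2 * centralFactorialNumber m (k + 1) := by
  have hfac : ((2 * (k + 1))! : ℝ) = (2 * k + 2) * (2 * k + 1) * (2 * k)! := by
    rw [show 2 * (k + 1) = 2 * k + 1 + 1 by ring, factorial_succ, factorial_succ]
    push_cast
    ring
  simp only [centralFactorialNumber, cmk_add_two_succ, hfac]
  push_cast
  field_simp
  ring

theorem sum_centralFactorialNumber_mul_centralFactorialPow (M : ℕ) (x : ℝ) :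
    ∑ k ∈ range (M + 1), centralFactorialNumber (2 * M) k * centralFactorialPow k x =
      x ^ (2 * M) := by
  induction M with
  | zero => simp [centralFactorialNumber, centralFactorialPow, cmk_zero_zero]
  | succ M ih =>
    have hzero : centralFactorialNumber (2 * M + 2) 0 = 0 := by
      simp [centralFactorialNumber, cmk_zero_right]
    have htop : centralFactorialNumber (2 * M) (M + 1) = 0 := by
      simp [centralFactorialNumber, cmk_eq_zero_of_lt]
    have hshift : ∑ j ∈ range (M + 1), ((j : ℝ) + 1) ^ 2 * centralFactorialNumber (2 * M) (j + 1) *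
        centralFactorialPow (j + 1) x = ∑ j ∈ range (M + 1), (j : ℝ) ^ 2 *
          centralFactorialNumber (2 * M) j * centralFactorialPow j x := by
      have h := sum_range_succ' (fun j => (j : ℝ) ^ 2 * centralFactorialNumber (2 * M) j *
        centralFactorialPow j x) (M + 1)
      rw [sum_range_succ, htop] at h
      simpa using h.symm
    calc ∑ k ∈ range (M + 1 + 1), centralFactorialNumber (2 * (M + 1)) k * centralFactorialPow k x
        = ∑ j ∈ range (M + 1), (centralFactorialNumber (2 * M) j * centralFactorialPow (j + 1) x +
            ((j : ℝ) + 1) ^ 2 * centralFactorialNumber (2 * M) (j + 1) *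
              centralFactorialPow (j + 1) x) := by
          rw [sum_range_succ', mul_add, hzero, zero_mul, add_zero]
          refine sum_congr rfl fun j _ => ?_
          rw [centralFactorialNumber_add_two_succ]
          ring
      _ = ∑ j ∈ range (M + 1),
            centralFactorialNumber (2 * M) j * (x ^ 2 * centralFactorialPow j x) := by
          rw [sum_add_distrib, hshift, ← sum_add_distrib]
          refine sum_congr rfl fun j _ => ?_
          rw [centralFactorialPow_add_one]
          ring
      _ = x ^ (2 * (M + 1)) := by
          simp_rw [mul_left_comm _ (x ^ 2), ← mul_sum, ih]
          ring

theorem sq_mul_two_pow_mul_cmk_div_mul_prod {k : ℕ} (hk : k ≠ 0) (m : ℕ) (x : ℝ) :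
    x ^ 2 * (2 ^ k * cmk m k / ((2 * k - 1)! * k) * ∏ l ∈ Icc 1 (k - 1), (x ^ 2 - (l : ℝ) ^ 2)) =
      2 * (centralFactorialNumber m k * centralFactorialPow k x) := by
  obtain ⟨j, rfl⟩ := exists_eq_add_one_of_ne_zero hk
  rw [centralFactorialNumber, centralFactorialPow_add_one_eq_sq_mul_prod, add_tsub_cancel_right,
    show 2 * (j + 1) = 2 * j + 1 + 1 by ring, factorial_succ (2 * j + 1), add_tsub_cancel_right]
  push_cast
  field_simp
  ring

theorem sum_two_pow_mul_cmk_div_mul_prod {M : ℕ} (hM : M ≠ 0) {x : ℝ} (hx : x ≠ 0) :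
    ∑ k ∈ Icc 1 M, 2 ^ k * cmk (2 * M) k / ((2 * k - 1)! * k) *
      ∏ l ∈ Icc 1 (k - 1), (x ^ 2 - (l : ℝ) ^ 2) = 2 * x ^ (2 * M - 2) := by
  refine mul_left_cancel₀ (pow_ne_zero 2 hx) ?_
  have hsubset : Icc 1 M ⊆ range (M + 1) := fun k hk => by simp at hk ⊢; omega
  have hzero : ∀ k ∈ range (M + 1), k ∉ Icc 1 M →
      centralFactorialNumber (2 * M) k * centralFactorialPow k x = 0 := by
    intro k hk hk'
    obtain rfl : k = 0 := by simp at hk hk'; omega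
    simp [centralFactorialNumber, cmk_zero_right (mul_ne_zero two_ne_zero hM)]
  rw [mul_sum, sum_congr rfl fun k hk =>
      sq_mul_two_pow_mul_cmk_div_mul_prod (by simp at hk; omega) _ _,
    ← mul_sum, sum_subset hsubset hzero, sum_centralFactorialNumber_mul_centralFactorialPow,
    mul_left_comm, ← pow_add, show 2 + (2 * M - 2) = 2 * M by omega]

theorem abs_prod_sq_sub_sq_le {x : ℝ} (hx : 1 ≤ x) (j : ℕ) :
    |∏ l ∈ Icc 1 j, (x ^ 2 - (l : ℝ) ^ 2)| ≤ (∏ l ∈ Icc 1 j, (l : ℝ) ^ 2) * x ^ (2 * j) := by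
  have hfactor : ∀ l ∈ Icc 1 j, |x ^ 2 - (l : ℝ) ^ 2| ≤ (l : ℝ) ^ 2 * x ^ 2 := by
    intro l hl
    have hl : (1 : ℝ) ≤ l := by exact_mod_cast (mem_Icc.mp hl).1
    have hx2 : 1 ≤ x ^ 2 := one_le_pow₀ hx
    have hl2 : (1 : ℝ) ≤ (l : ℝ) ^ 2 := one_le_pow₀ hl
    rw [abs_sub_le_iff]
    constructor <;> nlinarith
  calc |∏ l ∈ Icc 1 j, (x ^ 2 - (l : ℝ) ^ 2)|
      = ∏ l ∈ Icc 1 j, |x ^ 2 - (l : ℝ) ^ 2| := abs_prod _ _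
    _ ≤ ∏ l ∈ Icc 1 j, ((l : ℝ) ^ 2 * x ^ 2) := prod_le_prod (fun _ _ => abs_nonneg _) hfactor
    _ = (∏ l ∈ Icc 1 j, (l : ℝ) ^ 2) * x ^ (2 * j) := by
      rw [prod_mul_distrib, prod_const, card_Icc, add_tsub_cancel_right, pow_mul]

theorem summable_prod_sq_sub_sq_div_pow {j e : ℕ} (he : 2 * j + 2 ≤ e) :
    Summable fun r : ℕ =>
      (∏ l ∈ Icc 1 j, (((r : ℝ) + 1) ^ 2 - (l : ℝ) ^ 2)) / ((r : ℝ) + 1) ^ e := by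
  set C := ∏ l ∈ Icc 1 j, (l : ℝ) ^ 2
  have hbase : Summable fun r : ℕ => 1 / ((r : ℝ) + 1) ^ 2 := by
    simpa using (summable_nat_add_iff 1).mpr (Real.summable_one_div_nat_pow.mpr one_lt_two)
  refine (hbase.mul_left C).of_norm_bounded fun r => ?_
  have hx : (1 : ℝ) ≤ r + 1 := by simp
  rw [Real.norm_eq_abs, abs_div, abs_of_pos (a := ((r : ℝ) + 1) ^ e) (by positivity),
    div_le_iff₀ (by positivity)]
  calc |∏ l ∈ Icc 1 j, (((r : ℝ) + 1) ^ 2 - (l : ℝ) ^ 2)|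
      ≤ C * ((r : ℝ) + 1) ^ (2 * j) := abs_prod_sq_sub_sq_le hx j
    _ = C * (1 / ((r : ℝ) + 1) ^ 2) * ((r : ℝ) + 1) ^ (2 * j + 2) := by
      field_simp
      ring
    _ ≤ C * (1 / ((r : ℝ) + 1) ^ 2) * ((r : ℝ) + 1) ^ e := by
      gcongr

theorem sum_two_pow_mul_cmk_div_mul_tsum {M : ℕ} (hM : M ≠ 0) :
    ∑ k ∈ Icc 1 M, 2 ^ k * cmk (2 * M) k / ((2 * k - 1)! * k) *
      ∑' r : ℕ,
        (∏ l ∈ Icc 1 (k - 1), (((r : ℝ) + 1) ^ 2 - (l : ℝ) ^ 2)) / ((r : ℝ) + 1) ^ (4 * M - 1)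
      = 2 * ∑' r : ℕ, 1 / ((r : ℝ) + 1) ^ (2 * M + 1) := by
  have hterm (r : ℕ) : ∑ k ∈ Icc 1 M, 2 ^ k * cmk (2 * M) k / ((2 * k - 1)! * k) *
      ((∏ l ∈ Icc 1 (k - 1), (((r : ℝ) + 1) ^ 2 - (l : ℝ) ^ 2)) / ((r : ℝ) + 1) ^ (4 * M - 1))
      = 2 * (1 / ((r : ℝ) + 1) ^ (2 * M + 1)) := by
    have hx : (r : ℝ) + 1 ≠ 0 := by positivity
    simp_rw [← mul_div_assoc, ← sum_div, sum_two_pow_mul_cmk_div_mul_prod hM hx]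
    field_simp
    rw [← pow_add, show 2 * M - 2 + (2 * M + 1) = 4 * M - 1 by omega]
  simp_rw [← tsum_mul_left]
  rw [← Summable.tsum_finsetSum fun k hk =>
      (summable_prod_sq_sub_sq_div_pow (by simp at hk; omega)).mul_left _, tsum_congr hterm]

/-- For odd `n ≥ 3` and `m = n-1`: each series
`Σ_{r≥1} (∏_{ℓ=1}^{k-1}(r²-ℓ²))/r^{2n-3}` converges, and
`(2n-1)·binom(2n-2,n-1)·Σ_{k=1}^{m/2} (2^k c_{m,k}/((2k-1)!·k))·Σ_{r≥1}(∏(r²-ℓ²))/r^{2n-3}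
 = n·binom(2n,n)·Σ_{r≥1} 1/rⁿ`. -/
theorem stmt_18 (n : ℕ) (hn : 3 ≤ n) (hodd : Odd n) :
    (∀ k ∈ Finset.Icc 1 ((n - 1) / 2),
      Summable fun r : ℕ =>
        (∏ l ∈ Finset.Icc 1 (k - 1), (((r : ℝ) + 1) ^ 2 - (l : ℝ) ^ 2)) /
          ((r : ℝ) + 1) ^ (2 * n - 3))
    ∧ ((2 * n - 1 : ℝ) * ((2 * n - 2).choose (n - 1) : ℝ) *
        ∑ k ∈ Finset.Icc 1 ((n - 1) / 2),
          ((2 : ℝ) ^ k * (cmk (n - 1) k : ℝ) / (((2 * k - 1).factorial : ℝ) * (k : ℝ))) *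
            ∑' r : ℕ,
              (∏ l ∈ Finset.Icc 1 (k - 1), (((r : ℝ) + 1) ^ 2 - (l : ℝ) ^ 2)) /
                ((r : ℝ) + 1) ^ (2 * n - 3)
      = (n : ℝ) * ((2 * n).choose n : ℝ) * ∑' r : ℕ, 1 / ((r : ℝ) + 1) ^ n) := by
  obtain ⟨M, rfl⟩ := hodd
  have hM : M ≠ 0 := by omega
  simp only [add_tsub_cancel_right, mul_div_cancel_left₀ M two_ne_zero,
    show 2 * (2 * M + 1) - 3 = 4 * M - 1 by omega]
  refine ⟨fun k hk => summable_prod_sq_sub_sq_div_pow (by simp at hk; omega), ?_⟩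
  have hbinom := congrArg (Nat.cast (R := ℝ)) (succ_mul_centralBinom_succ (2 * M))
  rw [centralBinom_eq_two_mul_choose, centralBinom_eq_two_mul_choose] at hbinom
  push_cast at hbinom ⊢
  rw [sum_two_pow_mul_cmk_div_mul_tsum hM, show 2 * (2 * M + 1) - 2 = 2 * (2 * M) by omega]
  linear_combination (-∑' r : ℕ, 1 / ((r : ℝ) + 1) ^ (2 * M + 1)) * hbinom
end
end
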